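/- arXiv:math/0006033 — 11 statements merged into one kernel-verified Lean document; each statement's English description precedes it below -/
import Mathlib

section
/- Let N ≥ 2 and let a₁,…,a_N be positive integers. Define φ : ℤ^N → ℤ^N as multiplication by the N×N integer matrix C with C[i][i] = a_i, C[i][i+1] = -a_{i+1} for i = 1,…,N-1, C[N][1] = -a₁, C[N][N] = a_N, and all other entries zero. For k = 1,…,N-1 set r_k = gcd(lcm(a₁,…,a_k), a_{k+1}). Then the cokernel ℤ^N / im(φ) is isomorphic as an abelian group to ℤ ⊕ ℤ/r₁ ⊕ ℤ/r₂ ⊕ ⋯ ⊕ ℤ/r_{N-1}. -/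
/-!
Column `j` of `C` is `a_j (e_j - e_{j-1})`, indices taken mod `N`. Passing to partial sums (the total
sum, and the sums `∑_{i ≤ k} v_i` for `k < N - 1`) is a change of basis of `ℤ^N` that turns these
relations into `a_{k+1} e_k` and `a_0 (1, …, 1)` and leaves the total sum free, so the cokernel is
`ℤ × (∏_k ℤ/a_{k+1}) / ⟨a_0 (1, …, 1)⟩`. The quotient of `ℤ/A × G` by `(B, B h)` is
`ℤ/gcd(A, B) × G/⟨lcm(A, B) h⟩`, through the shear `(x, g) ↦ (x, g - x c h)` with
`c ≡ 0 mod B / gcd(A, B)` and `c ≡ 1 mod A / gcd(A, B)`. Splitting off one factor at a time thus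
replaces the constant `a_0` by `lcm(a_0, a_1)`, then by `lcm(a_0, a_1, a_2)`, and so on, and produces
the factors `ℤ/r_k`.
-/

open AddSubgroup QuotientAddGroup

section

variable {G : Type*} [AddCommGroup G]

lemma ZMod.exists_addMonoidHom_intCast {n : ℕ} (x : G) (hx : n • x = 0) :
    ∃ f : ZMod n →+ G, ∀ k : ℤ, f k = k • x :=
  ⟨ZMod.lift n ⟨zmultiplesHom G x, by simpa using hx⟩, fun k => by simp⟩

lemma zsmul_mem_zmultiples_nsmul_of_dvd {m : ℕ} {n : ℤ} (hmn : (m : ℤ) ∣ n) (x : G) :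
    n • x ∈ zmultiples (m • x) := by
  obtain ⟨q, rfl⟩ := hmn
  exact ⟨q, by rw [← natCast_zsmul, mul_zsmul']⟩

lemma Fin.sum_castSucc_sub_succ {n : ℕ} (f : Fin (n + 1) → G) :
    ∑ k : Fin n, (f k.castSucc - f k.succ) = f 0 - f (Fin.last n) := by
  induction n with
  | zero => simp
  | succ n ih =>
    have := ih (f ∘ Fin.castSucc)
    simp only [Function.comp_apply, ← Fin.succ_castSucc] at this
    rw [Fin.sum_univ_castSucc, this]
    simp

lemma Fin.sum_ite_le_castSucc_sub_succ {n : ℕ} (f : Fin (n + 1) → G) (i : Fin (n + 1)) :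
    ∑ k : Fin n, (if i ≤ k.castSucc then f k.castSucc - f k.succ else 0) =
      f i - f (Fin.last n) := by
  convert Fin.sum_castSucc_sub_succ (fun j => f (max i j)) using 2 with k
  · split_ifs with h
    · rw [max_eq_right h, max_eq_right (h.trans (Fin.castSucc_le_succ k))]
    · rw [not_le, Fin.castSucc_lt_iff_succ_le] at h
      rw [max_eq_left (Fin.castSucc_le_succ k |>.trans h), max_eq_left h, sub_self]
  · simp
  · simp [Fin.le_last]

end

lemma Nat.exists_crt_idempotent (A B : ℕ) :
    ∃ c t : ℤ, (A.lcm B : ℤ) ∣ A * c ∧ (A.lcm B : ℤ) ∣ B * (1 - c) ∧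
      (A : ℤ) ∣ A.gcd B - t * B ∧ A.gcd B * c = t * B := by
  have hd : (A.gcd B : ℤ) = A * Nat.gcdA A B + B * Nat.gcdB A B := Nat.gcd_eq_gcd_ab A B
  have hB : ((B / A.gcd B : ℕ) : ℤ) * A.gcd B = B := by
    exact_mod_cast Nat.div_mul_cancel (Nat.gcd_dvd_right A B)
  have hL : (A.lcm B : ℤ) = A * (B / A.gcd B : ℕ) := by
    rw [Nat.lcm_eq_mul_div, Nat.mul_div_assoc _ (Nat.gcd_dvd_right A B), Nat.cast_mul]
  refine ⟨Nat.gcdB A B * (B / A.gcd B : ℕ), Nat.gcdB A B, ⟨Nat.gcdB A B, by rw [hL]; ring⟩,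
    ⟨Nat.gcdA A B, by rw [hL]; linear_combination (B / A.gcd B : ℕ) * hd - hB⟩,
    ⟨Nat.gcdA A B, by linear_combination hd⟩, by linear_combination Nat.gcdB A B * hB⟩

section Shear

variable {G : Type*} [AddCommGroup G] (A B : ℕ) (h : G)

lemma exists_shear_hom (c : ℤ) (hA : (A.lcm B : ℤ) ∣ A * c)
    (hB : (A.lcm B : ℤ) ∣ B * (1 - c)) :
    ∃ φ : (ZMod A × G) ⧸ zmultiples ((B : ZMod A), B • h) →+
        ZMod (A.gcd B) × G ⧸ zmultiples (A.lcm B • h),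
      ∀ (k : ℤ) (g : G), φ ((k : ZMod A), g) = ((k : ZMod (A.gcd B)), mk (g - (k * c) • h)) := by
  obtain ⟨shift, shift_apply⟩ := ZMod.exists_addMonoidHom_intCast (n := A)
      ((c • h : G) : G ⧸ zmultiples (A.lcm B • h)) (by
    rw [← mk_nsmul, eq_zero_iff, ← natCast_zsmul (c • h) A, smul_smul]
    exact zsmul_mem_zmultiples_nsmul_of_dvd hA h)
  let φ₀ : ZMod A × G →+ ZMod (A.gcd B) × G ⧸ zmultiples (A.lcm B • h) :=
    ((ZMod.castHom (Nat.gcd_dvd_left A B) _).toAddMonoidHom.comp (AddMonoidHom.fst _ _)).prod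
      ((mk' _).comp (AddMonoidHom.snd _ _) - shift.comp (AddMonoidHom.fst _ _))
  have φ₀_apply (k : ℤ) (g : G) :
      φ₀ ((k : ZMod A), g) = ((k : ZMod (A.gcd B)), mk (g - (k * c) • h)) := by
    simp [φ₀, shift_apply, mul_zsmul', smul_comm k c]
  refine ⟨lift _ φ₀ (zmultiples_le.2 ?_), fun k g => φ₀_apply k g⟩
  have := φ₀_apply B (B • h)
  push_cast at this
  rw [AddMonoidHom.mem_ker, this, Prod.mk_eq_zero, ZMod.natCast_eq_zero_iff, eq_zero_iff,
    ← natCast_zsmul h B, ← sub_smul, ← mul_one_sub]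
  exact ⟨Nat.gcd_dvd_right A B, zsmul_mem_zmultiples_nsmul_of_dvd hB h⟩

lemma exists_unshear_hom (c t : ℤ) (ht : (A : ℤ) ∣ A.gcd B - t * B)
    (hc : A.gcd B * c = t * B) :
    ∃ ψ : ZMod (A.gcd B) × G ⧸ zmultiples (A.lcm B • h) →+
        (ZMod A × G) ⧸ zmultiples ((B : ZMod A), B • h),
      ∀ (k : ℤ) (g : G), ψ ((k : ZMod (A.gcd B)), mk g) = mk ((k : ZMod A), g + (k * c) • h) := by
  obtain ⟨ψ₁, ψ₁_apply⟩ := ZMod.exists_addMonoidHom_intCast (n := A.gcd B)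
      (mk ((1 : ZMod A), c • h) : (ZMod A × G) ⧸ zmultiples ((B : ZMod A), B • h)) (by
    rw [← mk_nsmul, eq_zero_iff]
    convert zsmul_mem (mem_zmultiples ((B : ZMod A), B • h)) t using 1
    refine Prod.ext ?_ ?_
    · simpa [sub_eq_zero] using (ZMod.intCast_zmod_eq_zero_iff_dvd _ A).2 ht
    · simp only [Prod.smul_snd, ← natCast_zsmul, smul_smul, hc])
  obtain ⟨s, hs⟩ := Nat.dvd_lcm_right A B
  let ψ₂ : G ⧸ zmultiples (A.lcm B • h) →+ (ZMod A × G) ⧸ zmultiples ((B : ZMod A), B • h) :=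
    lift _ ((mk' _).comp (AddMonoidHom.inr _ _)) (by
      rw [zmultiples_le, AddMonoidHom.mem_ker, AddMonoidHom.comp_apply, mk'_apply, eq_zero_iff]
      convert nsmul_mem (mem_zmultiples ((B : ZMod A), B • h)) s using 1
      refine Prod.ext ?_ ?_
      · simp [mul_comm, ← Nat.cast_mul, ← hs, eq_comm (a := (0 : ZMod A)),
          ZMod.natCast_eq_zero_iff, Nat.dvd_lcm_left]
      · simp [smul_smul, hs, mul_comm])
  refine ⟨ψ₁.coprod ψ₂, fun k g => ?_⟩
  simp only [AddMonoidHom.coprod_apply, ψ₁_apply, ψ₂, lift_mk, AddMonoidHom.comp_apply, mk'_apply,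
    AddMonoidHom.inr_apply, ← mk_zsmul, ← mk_add]
  congr 1
  ext <;> simp [mul_zsmul, add_comm]

theorem nonempty_zmod_prod_quotient_equiv :
    Nonempty ((ZMod A × G) ⧸ zmultiples ((B : ZMod A), B • h) ≃+
      ZMod (A.gcd B) × G ⧸ zmultiples (A.lcm B • h)) := by
  obtain ⟨c, t, hA, hB, ht, hc⟩ := Nat.exists_crt_idempotent A B
  obtain ⟨φ, φ_apply⟩ := exists_shear_hom A B h c hA hB
  obtain ⟨ψ, ψ_apply⟩ := exists_unshear_hom A B h c t ht hc
  refine ⟨φ.toAddEquiv ψ ?_ ?_⟩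
  · ext ⟨z, g⟩
    obtain ⟨k, rfl⟩ := ZMod.intCast_surjective z
    simp only [AddMonoidHom.coe_comp, Function.comp_apply, mk'_apply, AddMonoidHom.id_apply]
    rw [φ_apply, ψ_apply, sub_add_cancel]
  · refine AddMonoidHom.ext fun ⟨y, q⟩ => ?_
    obtain ⟨k, rfl⟩ := ZMod.intCast_surjective y
    induction q using QuotientAddGroup.induction_on with | H g => ?_
    rw [AddMonoidHom.comp_apply, ψ_apply, φ_apply, add_sub_cancel_right, AddMonoidHom.id_apply]

end Shear

lemma Finset.lcm_range_succ' (a : ℕ → ℕ) (k : ℕ) :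
    (Finset.range (k + 1)).lcm a = (a 0).lcm ((Finset.range k).lcm fun i => a (i + 1)) := by
  rw [Finset.range_add_one', Finset.lcm_insert, Finset.map_eq_image, Finset.lcm_image]
  rfl

theorem nonempty_pi_zmod_quotient_equiv (m b : ℕ) (a : ℕ → ℕ) :
    Nonempty ((∀ i : Fin m, ZMod (a i)) ⧸ zmultiples (b : ∀ i : Fin m, ZMod (a i)) ≃+
      ∀ k : Fin m, ZMod ((b.lcm ((Finset.range k).lcm a)).gcd (a k))) := by
  induction m generalizing b a with
  | zero =>
    exact ⟨(quotientAddEquivOfEq (zmultiples_eq_bot.2 (Subsingleton.elim _ _))).trans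
      (quotientBot.trans (AddEquiv.piCongrRight fun k => k.elim0))⟩
  | succ m ih =>
    obtain ⟨e⟩ := ih (b.lcm (a 0)) (fun i => a (i + 1))
    obtain ⟨f⟩ := nonempty_zmod_prod_quotient_equiv (a 0) b (1 : ∀ i : Fin m, ZMod (a (i + 1)))
    let split := (Fin.consLinearEquiv ℤ fun i : Fin (m + 1) => ZMod (a i)).toAddEquiv
    have hsplit : map split.symm.toAddMonoidHom (zmultiples (b : ∀ i : Fin (m + 1), ZMod (a i))) =
        zmultiples (((b : ZMod (a 0)), b • (1 : ∀ i : Fin m, ZMod (a (i + 1)))) :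
          ZMod (a 0) × ∀ i : Fin m, ZMod (a (i + 1))) := by
      rw [AddMonoidHom.map_zmultiples]
      congr 1
      ext i
      · rfl
      · simp [split]
        rfl
    refine ⟨(QuotientAddGroup.congr (zmultiples _) (zmultiples _) split.symm hsplit).trans
      (f.trans ?_)⟩
    refine (AddEquiv.prodCongr (ZMod.ringEquivCongr ?_).toAddEquiv
      ((quotientAddEquivOfEq ?_).trans (e.trans (AddEquiv.piCongrRight
        fun k => (ZMod.ringEquivCongr ?_).toAddEquiv)))).trans
      (Fin.consLinearEquiv ℤ _).toAddEquiv
    · simp [Nat.gcd_comm]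
    · rw [nsmul_one, Nat.lcm_comm]
    · rw [Fin.val_succ, Finset.lcm_range_succ', Nat.lcm_assoc]

lemma Fin.succ_sub_one {n : ℕ} (t : Fin (n + 1)) : t.succ - 1 = t.castSucc := by
  rw [sub_eq_iff_eq_add, Fin.coeSucc_eq_succ]

lemma Fin.zero_sub_one {n : ℕ} : (0 : Fin (n + 1)) - 1 = Fin.last n := by
  rw [sub_eq_iff_eq_add, Fin.last_add_one]

section Cokernel

variable {n : ℕ} (a : ℕ → ℕ)

def cyclicRelation (j : Fin (n + 2)) : Fin (n + 2) → ℤ :=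
  (a j : ℤ) • (Pi.single j 1 - Pi.single (j - 1) 1)

/-- The partial sums `∑_{j ≤ k} (e_i)_j`, `k < n + 1`, of the basis vector `e_i`. -/
def geIndicator (i : Fin (n + 2)) (k : Fin (n + 1)) : ℤ :=
  if i ≤ k.castSucc then 1 else 0

lemma geIndicator_zero : geIndicator (n := n) 0 = 1 := by
  funext k; simp [geIndicator]

lemma geIndicator_last : geIndicator (Fin.last (n + 1)) = 0 := by
  funext k; simp [geIndicator, Fin.last_le_iff, (Fin.castSucc_lt_last k).ne]

lemma geIndicator_castSucc_sub_succ (t : Fin (n + 1)) :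
    geIndicator t.castSucc - geIndicator t.succ = Pi.single t 1 := by
  funext k
  rcases lt_trichotomy k t with h | rfl | h
  · simp [geIndicator, h.ne, h.not_ge, h.le]
  · simp [geIndicator]
  · simp [geIndicator, h.ne', h.le,
      Fin.castSucc_lt_iff_succ_le.1 (Fin.castSucc_lt_castSucc_iff.2 h)]

lemma exists_partialSums_hom :
    ∃ φ : (Fin (n + 2) → ℤ) ⧸ AddSubgroup.closure (Set.range (cyclicRelation a)) →+
        ℤ × (∀ k : Fin (n + 1), ZMod (a (k + 1))) ⧸
          zmultiples ((a 0 : ℕ) : ∀ k : Fin (n + 1), ZMod (a (k + 1))),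
      ∀ i, φ (Pi.single i 1 : Fin (n + 2) → ℤ) =
        (1, mk fun k : Fin (n + 1) => (geIndicator i k : ZMod (a (k + 1)))) := by
  let π : (Fin (n + 1) → ℤ) →+ (∀ k : Fin (n + 1), ZMod (a (k + 1))) ⧸
      zmultiples ((a 0 : ℕ) : ∀ k : Fin (n + 1), ZMod (a (k + 1))) :=
    (mk' _).comp (AddMonoidHom.pi fun k =>
      (Int.castAddHom (ZMod (a (k + 1)))).comp (Pi.evalAddMonoidHom (fun _ => ℤ) k))
  let φ₀ := (Fintype.linearCombination ℤ fun i => ((1 : ℤ), π (geIndicator i))).toAddMonoidHom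
  have φ₀_single (i) : φ₀ (Pi.single i 1) = (1, π (geIndicator i)) := by simp [φ₀]
  suffices hrel : ∀ j, φ₀ (cyclicRelation a j) = 0 from
    ⟨lift _ φ₀ ((closure_le _).2 (Set.range_subset_iff.2 hrel)), φ₀_single⟩
  intro j
  cases j using Fin.cases with
  | zero =>
    simp only [cyclicRelation, map_zsmul, map_sub, φ₀_single, Fin.zero_sub_one, geIndicator_zero,
      geIndicator_last]
    rw [Prod.mk_sub_mk, sub_self, map_zero, sub_zero, Prod.smul_mk, smul_zero, ← map_zsmul,
      Prod.mk_eq_zero]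
    refine ⟨rfl, (eq_zero_iff _).2 ?_⟩
    convert mem_zmultiples ((a 0 : ℕ) : ∀ k : Fin (n + 1), ZMod (a (k + 1))) using 1
    funext k
    simp
  | succ t =>
    simp only [cyclicRelation, map_zsmul, map_sub, φ₀_single, Fin.succ_sub_one]
    rw [Prod.mk_sub_mk, sub_self, Prod.smul_mk, smul_zero, ← map_sub, ← neg_sub,
      geIndicator_castSucc_sub_succ, ← map_zsmul, Prod.mk_eq_zero]
    refine ⟨rfl, (eq_zero_iff _).2 ?_⟩
    convert (zmultiples ((a 0 : ℕ) : ∀ k : Fin (n + 1), ZMod (a (k + 1)))).zero_mem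
    funext k
    rcases eq_or_ne k t with rfl | hk
    · simp
    · simp [hk]

lemma exists_differences_hom :
    ∃ ψ : ℤ × (∀ k : Fin (n + 1), ZMod (a (k + 1))) ⧸
          zmultiples ((a 0 : ℕ) : ∀ k : Fin (n + 1), ZMod (a (k + 1))) →+
        (Fin (n + 2) → ℤ) ⧸ AddSubgroup.closure (Set.range (cyclicRelation a)),
      ∀ (t : ℤ) (m : Fin (n + 1) → ℤ), ψ (t, mk fun k : Fin (n + 1) => (m k : ZMod (a (k + 1)))) =
        mk (t • Pi.single (Fin.last _) 1 +
          ∑ k, m k • (Pi.single k.castSucc 1 - Pi.single k.succ 1) : Fin (n + 2) → ℤ) := by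
  set S := AddSubgroup.closure (Set.range (cyclicRelation a))
  have step (k : Fin (n + 1)) : ∃ f : ZMod (a (k + 1)) →+ (Fin (n + 2) → ℤ) ⧸ S,
      ∀ m : ℤ, f m = m • (Pi.single k.castSucc 1 - Pi.single k.succ 1 : Fin (n + 2) → ℤ) :=
    ZMod.exists_addMonoidHom_intCast _ (by
      rw [← mk_nsmul, eq_zero_iff]
      convert neg_mem (subset_closure ⟨k.succ, rfl⟩ : cyclicRelation a k.succ ∈ S) using 1
      simp [cyclicRelation, Fin.succ_sub_one, smul_sub])
  choose step step_apply using step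
  let ψ₂ : (∀ k : Fin (n + 1), ZMod (a (k + 1))) →+ (Fin (n + 2) → ℤ) ⧸ S :=
    ∑ k, (step k).comp (Pi.evalAddMonoidHom _ k)
  have ψ₂_apply (m : Fin (n + 1) → ℤ) : ψ₂ (fun k => (m k : ZMod (a (k + 1)))) =
      ((∑ k, m k • (Pi.single k.castSucc 1 - Pi.single k.succ 1) : Fin (n + 2) → ℤ) : _ ⧸ S) := by
    simp [ψ₂, step_apply, mk_sum]
  have ψ₂_const : ψ₂ ((a 0 : ℕ) : ∀ k : Fin (n + 1), ZMod (a (k + 1))) = 0 := by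
    have := ψ₂_apply fun _ => (a 0 : ℤ)
    rw [Finset.sum_zsmul, Fin.sum_castSucc_sub_succ (fun i => (Pi.single i 1 : Fin (n + 2) → ℤ)),
      ← Fin.zero_sub_one] at this
    simp only [Int.cast_natCast] at this
    rw [← Pi.natCast_def] at this
    rw [this, eq_zero_iff]
    exact subset_closure ⟨0, rfl⟩
  refine ⟨(zmultiplesHom _ ((Pi.single (Fin.last _) 1 : Fin (n + 2) → ℤ) : _ ⧸ S)).coprod
    (lift _ ψ₂ (zmultiples_le.2 ψ₂_const)), fun t m => ?_⟩
  simp [ψ₂_apply]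

theorem nonempty_quotient_cyclicRelation_equiv :
    Nonempty ((Fin (n + 2) → ℤ) ⧸ AddSubgroup.closure (Set.range (cyclicRelation a)) ≃+
      ℤ × (∀ k : Fin (n + 1), ZMod (a (k + 1))) ⧸
        zmultiples ((a 0 : ℕ) : ∀ k : Fin (n + 1), ZMod (a (k + 1)))) := by
  obtain ⟨φ, φ_single⟩ := exists_partialSums_hom a
  obtain ⟨ψ, ψ_apply⟩ := exists_differences_hom a
  refine ⟨φ.toAddEquiv ψ ?_ ?_⟩
  · refine addMonoidHom_ext _ (AddMonoidHom.functions_ext' _ _ _ fun i => AddMonoidHom.ext_int ?_)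
    simp only [AddMonoidHom.comp_apply, AddMonoidHom.single_apply, mk'_apply,
      AddMonoidHom.id_apply]
    rw [φ_single, ψ_apply]
    simp only [geIndicator, ite_smul, one_smul, zero_smul]
    rw [Fin.sum_ite_le_castSucc_sub_succ (fun j => (Pi.single j 1 : Fin (n + 2) → ℤ)),
      add_sub_cancel]
  · refine AddMonoidHom.ext fun ⟨t, q⟩ => ?_
    induction q using QuotientAddGroup.induction_on with | H y => ?_
    obtain ⟨m, rfl⟩ :
        ∃ m : Fin (n + 1) → ℤ, (fun k : Fin (n + 1) => (m k : ZMod (a (k + 1)))) = y :=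
      ⟨fun k => (y k).cast, funext fun k => ZMod.intCast_zmod_cast _⟩
    rw [AddMonoidHom.comp_apply, ψ_apply]
    simp only [mk_add, mk_zsmul, mk_sum, mk_sub, map_add, map_zsmul, map_sum, map_sub, φ_single,
      geIndicator_last]
    refine Prod.ext (by simp [Prod.fst_sum]) ?_
    simp only [Prod.snd_add, Prod.snd_sum, Prod.smul_snd, Prod.snd_sub, ← mk_sub, ← mk_zsmul,
      ← mk_sum, ← mk_add]
    congr 1
    funext l
    have h (k : Fin (n + 1)) :
        geIndicator k.castSucc l - geIndicator k.succ l = (Pi.single k 1 : Fin (n + 1) → ℤ) l := by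
      rw [← Pi.sub_apply, geIndicator_castSucc_sub_succ]
    simp [← Int.cast_sub, h, Pi.single_apply]

lemma range_cyclicMatrix {n : ℕ} (a : ℕ → ℕ) :
    (LinearMap.range (Matrix.mulVecLin (Matrix.of fun i j : Fin (n + 2) =>
      if j = i then (a i : ℤ) else if j = i + ⟨1, by omega⟩ then -(a j : ℤ) else 0))
      ).toAddSubgroup = AddSubgroup.closure (Set.range (cyclicRelation a)) := by
  rw [Matrix.range_mulVecLin, Submodule.span_int_eq_addSubgroupClosure]
  congr 2
  funext j i
  have hone : (⟨1, by omega⟩ : Fin (n + 2)) = 1 := Fin.ext (Fin.val_one n).symm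
  simp only [Matrix.col_apply, Matrix.of_apply, hone, cyclicRelation]
  rcases eq_or_ne i j with rfl | hij
  · simp
  · have : i = j - 1 ↔ j = i + 1 := by rw [eq_sub_iff_add_eq, eq_comm]
    rw [if_neg hij.symm]
    simp only [Pi.smul_apply, Pi.sub_apply, Pi.single_apply, this, if_neg hij]
    split_ifs <;> simp

end Cokernel

/-- cokernel of the circulant-type integer matrix
`C i i = a i`, `C i (i+1) = -a (i+1)` (cyclically), is
`ℤ ⊕ ℤ/r₁ ⊕ ⋯ ⊕ ℤ/r_{N-1}` with `r_k = gcd(lcm(a₁,…,a_k), a_{k+1})`. -/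
theorem stmt_0 (N : ℕ) (hN : 2 ≤ N) (a : ℕ → ℕ) :
    Nonempty
      (((Fin N → ℤ) ⧸ LinearMap.range (Matrix.mulVecLin
          (Matrix.of fun i j : Fin N =>
            if j = i then (a i : ℤ) else if j = i + ⟨1, by omega⟩ then -(a j : ℤ) else 0))) ≃+
        (ℤ × ∀ k : Fin (N - 1),
          ZMod (Nat.gcd ((Finset.range ((k : ℕ) + 1)).lcm a) (a ((k : ℕ) + 1))))) := by
  obtain ⟨n, rfl⟩ : ∃ n, N = n + 2 := ⟨N - 2, by omega⟩
  obtain ⟨e₁⟩ := nonempty_quotient_cyclicRelation_equiv (n := n) a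
  obtain ⟨e₂⟩ := nonempty_pi_zmod_quotient_equiv (n + 1) (a 0) (fun i => a (i + 1))
  refine ⟨((quotientAddEquivOfEq (range_cyclicMatrix a)).trans e₁).trans
    (AddEquiv.prodCongr (AddEquiv.refl ℤ) (e₂.trans (AddEquiv.piCongrRight fun k =>
      (ZMod.ringEquivCongr ?_).toAddEquiv)))⟩
  rw [Finset.lcm_range_succ']
end

section
/- Let a₁,…,a_L be points on the unit circle 𝕋 ⊆ ℂ and let k be an integer. Then there exist real numbers θ₁ ≤ θ₂ ≤ ⋯ ≤ θ_L ≤ θ₁ + 1 such that the sum θ₁ + ⋯ + θ_L lies in the half-open interval [k, k+1), and such that the unordered L-tuple (a₁,…,a_L) equals the unordered L-tuple (e^{2πiθ₁},…,e^{2πiθ_L}). -/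
/-!
Lift each `a j` to `φ j ∈ (-1/2, 1/2]` and sort the lifts into a monotone `g` whose values lie
within `1` of each other. Extending `g` to `ℤ` by `G (m + L) = G m + 1` gives a monotone function,
and the window `θ j = G (j + n)` is again such a lift of the same multiset, with sum
`∑ g + n`; take `n = k - ⌊∑ g⌋`.
-/

open Complex Finset

open scoped Fin.CommRing

section PeriodicExtension

variable {L : ℕ} [NeZero L]

-- `(m : Fin L)` is `m mod L`, via the scoped ring structure on `Fin L`.
def periodicExtension (g : Fin L → ℝ) (m : ℤ) : ℝ := g m + (m / L : ℤ)

variable (g : Fin L → ℝ)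

theorem periodicExtension_natCast (j : Fin L) : periodicExtension g (j : ℕ) = g j := by
  have hj : ((j : ℕ) : ℤ) / L = 0 :=
    Int.ediv_eq_zero_of_lt (by positivity) (by exact_mod_cast j.isLt)
  simp [periodicExtension, hj]

theorem periodicExtension_add_card (m : ℤ) :
    periodicExtension g (m + L) = periodicExtension g m + 1 := by
  have hL : (L : ℤ) ≠ 0 := by exact_mod_cast NeZero.ne L
  simp only [periodicExtension, Int.cast_add, Int.cast_natCast, Fin.natCast_self, add_zero,
    Int.add_ediv_of_dvd_right (dvd_refl _), Int.ediv_self hL]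
  push_cast
  ring

theorem monotone_periodicExtension (hg : Monotone g) (hspread : ∀ i j, g i ≤ g j + 1) :
    Monotone (periodicExtension g) := by
  intro m m' hmm'
  have hL : (0 : ℤ) < L := by exact_mod_cast Nat.pos_of_neZero L
  have hq : m / L ≤ m' / L := Int.ediv_le_ediv hL hmm'
  rcases hq.eq_or_lt with hq | hq
  · have hr : m % L ≤ m' % L := by
      have := Int.emod_add_mul_ediv m L
      have := Int.emod_add_mul_ediv m' L
      rw [hq] at *
      linarith
    have : g m ≤ g m' := hg (by rw [Fin.le_def, Fin.val_intCast, Fin.val_intCast]; omega)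
    simp only [periodicExtension, hq]
    linarith
  · have : ((m / L : ℤ) : ℝ) + 1 ≤ ((m' / L : ℤ) : ℝ) := by exact_mod_cast hq
    have := hspread m m'
    simp only [periodicExtension]
    linarith

theorem sum_range_periodicExtension_add_one (n : ℤ) :
    ∑ i ∈ range L, periodicExtension g (i + (n + 1)) =
      ∑ i ∈ range L, periodicExtension g (i + n) + 1 := by
  have h := (sum_range_succ' (fun i : ℕ => periodicExtension g (i + n)) L).symm.trans
    (sum_range_succ _ L)
  rw [add_comm (L : ℤ), periodicExtension_add_card] at h
  push_cast at h
  simp only [zero_add, add_assoc, add_comm (1 : ℤ)] at h ⊢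
  linarith

theorem sum_periodicExtension_add (n : ℤ) :
    ∑ j : Fin L, periodicExtension g ((j : ℕ) + n) = ∑ j, g j + n := by
  rw [Fin.sum_univ_eq_sum_range (fun i => periodicExtension g (i + n))]
  induction n using Int.induction_on with
  | zero =>
    rw [← Fin.sum_univ_eq_sum_range (fun i => periodicExtension g (i + 0))]
    simp [periodicExtension_natCast]
  | succ i ih =>
    rw [sum_range_periodicExtension_add_one, ih]
    push_cast
    ring
  | pred i ih =>
    have h := sum_range_periodicExtension_add_one g (-i - 1)
    rw [sub_add_cancel, ih] at h
    push_cast at h ⊢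
    linarith

end PeriodicExtension

theorem exp_two_pi_I_mul_add_intCast (t : ℝ) (m : ℤ) :
    exp (2 * Real.pi * I * ((t + m : ℝ) : ℂ)) = exp (2 * Real.pi * I * t) := by
  rw [ofReal_add, mul_add, exp_add, ofReal_intCast, mul_comm _ (m : ℂ),
    exp_int_mul_two_pi_mul_I, mul_one]

theorem exists_mem_Ioc_eq_exp_two_pi_I_mul {z : ℂ} (hz : ‖z‖ = 1) :
    ∃ t ∈ Set.Ioc (-(1 / 2) : ℝ) (1 / 2), z = exp (2 * Real.pi * I * t) := by
  have hπ : 0 < 2 * Real.pi := by positivity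
  refine ⟨z.arg / (2 * Real.pi), ⟨?_, ?_⟩, ?_⟩
  · rw [lt_div_iff₀ hπ]; linarith [neg_pi_lt_arg z]
  · rw [div_le_iff₀ hπ]; linarith [arg_le_pi z]
  · conv_lhs => rw [← norm_mul_exp_arg_mul_I z, hz]
    push_cast
    field_simp

/-- any tuple of points on the unit circle admits an ordered
lift `θ₁ ≤ ⋯ ≤ θ_L ≤ θ₁ + 1` with `∑ θ_j ∈ [k, k+1)`. -/
theorem stmt_1 (L : ℕ) (hL : 0 < L) (a : Fin L → ℂ)
    (ha : ∀ j, ‖a j‖ = 1) (k : ℤ) :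
    ∃ θ : Fin L → ℝ, Monotone θ ∧ (∀ j, θ j ≤ θ ⟨0, hL⟩ + 1) ∧
      (∑ j, θ j) ∈ Set.Ico (k : ℝ) ((k : ℝ) + 1) ∧
      ∃ σ : Equiv.Perm (Fin L), ∀ j,
        a j = Complex.exp (2 * Real.pi * Complex.I * (θ (σ j) : ℂ)) := by
  have : NeZero L := ⟨hL.ne'⟩
  choose φ hφ_mem hφ using fun j => exists_mem_Ioc_eq_exp_two_pi_I_mul (ha j)
  set s := Tuple.sort φ
  set g := φ ∘ s
  have hspread : ∀ i j, g i ≤ g j + 1 := fun i j =>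
    show φ (s i) ≤ φ (s j) + 1 by linarith [(hφ_mem (s i)).2, (hφ_mem (s j)).1]
  have hG := monotone_periodicExtension g (Tuple.monotone_sort φ) hspread
  set n := k - ⌊∑ j, g j⌋
  refine ⟨fun j => periodicExtension g ((j : ℕ) + n), fun i j hij => hG (by simpa using hij),
    fun j => ?_, ?_, s.symm.trans (Equiv.subRight (n : Fin L)), fun j => ?_⟩
  · calc periodicExtension g ((j : ℕ) + n) ≤ periodicExtension g (n + L) :=
          hG (by linarith [(by exact_mod_cast j.isLt : ((j : ℕ) : ℤ) < L)])
      _ = _ := by simp [periodicExtension_add_card]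
  · rw [sum_periodicExtension_add]
    constructor <;> push_cast [n] <;>
      linarith [Int.floor_le (∑ j, g j), Int.lt_floor_add_one (∑ j, g j)]
  · simp only [periodicExtension, exp_two_pi_I_mul_add_intCast]
    simp [g, hφ]
end

section
/- Let λ₁,…,λ_L : [0,1] → 𝕋 be continuous functions into the unit circle and let k be an integer. Then there exist continuous functions F₁,…,F_L : [0,1] → ℝ such that F₁(0)+⋯+F_L(0) ∈ [k, k+1), such that for every t ∈ [0,1] one has F₁(t) ≤ F₂(t) ≤ ⋯ ≤ F_L(t) ≤ F₁(t) + 1, and such that for every t ∈ [0,1] the unordered L-tuple (λ₁(t),…,λ_L(t)) equals the unordered L-tuple (e^{2πiF₁(t)},…,e^{2πiF_L(t)}). -/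
/-!
Lift each `λⱼ` to a continuous real function `fⱼ`. At a fixed time the points `fⱼ + n`
(`n ∈ ℤ`) form an `L`-fold periodic multiset of reals; enumerate it increasingly as
`(p m)_{m ∈ ℤ}`, so that `p (m + L) = p m + 1`. The point `p m` is the least `x` at which
the counting function `∑ⱼ ⌊x - fⱼ⌋` reaches `m`, which makes it `1`-Lipschitz in `(fⱼ)` for
the sup norm and hence continuous in time. Any `L` consecutive points `p m, …, p (m + L - 1)`
meet every class `fⱼ + ℤ` exactly once, so `Fⱼ = p (m₀ + j)` works, and since the sum of
`L` consecutive points grows by `1` when the window moves up by one, a suitable `m₀`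
normalises `∑ⱼ Fⱼ(0)`.
-/

open Finset Filter Topology Real

theorem Monotone.le_iff_lt_card_filter_le {n : ℕ} {α : Type*} [LinearOrder α]
    {h : Fin n → α} (hh : Monotone h) (i : Fin n) (x : α) :
    h i ≤ x ↔ (i : ℕ) < #(univ.filter fun k => h k ≤ x) := by
  constructor
  · intro hix
    have hsub : Iic i ⊆ univ.filter fun k => h k ≤ x := fun k hk =>
      mem_filter.2 ⟨mem_univ k, (hh (mem_Iic.1 hk)).trans hix⟩
    have := card_le_card hsub
    rw [Fin.card_Iic] at this
    omega
  · intro hi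
    by_contra! hxi
    have hsub : (univ.filter fun k => h k ≤ x) ⊆ Iio i := fun k hk =>
      mem_Iio.2 (hh.reflect_lt ((mem_filter.1 hk).2.trans_lt hxi))
    have := card_le_card hsub
    rw [Fin.card_Iio] at this
    omega

theorem exists_perm_fin_add_eq_add_mul {L : ℕ} (hL : 0 < L) (d : ℤ) :
    ∃ ρ : Equiv.Perm (Fin L), ∀ i : Fin L, ∃ q : ℤ, (i : ℤ) + d = ρ i + L * q := by
  have hL' : (0 : ℤ) < L := by exact_mod_cast hL
  let r : Fin L → Fin L := fun i => ⟨((i + d) % L).toNat, by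
    have := Int.emod_lt_of_pos (i + d) hL'
    have := Int.emod_nonneg (i + d) hL'.ne'
    omega⟩
  have hr : ∀ i, ((r i : ℕ) : ℤ) = (i + d) % L := fun i =>
    Int.toNat_of_nonneg (Int.emod_nonneg _ hL'.ne')
  have hr_inj : Function.Injective r := fun i i' hii' => by
    have hmod : (i : ℤ) + d ≡ i' + d [ZMOD L] := by
      rw [Int.ModEq, ← hr, ← hr, hii']
    have := Int.ModEq.add_right_cancel' d hmod
    rw [Int.ModEq, Int.emod_eq_of_lt (by omega) (by omega),
      Int.emod_eq_of_lt (by omega) (by omega)] at this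
    exact Fin.ext (by exact_mod_cast this)
  refine ⟨Equiv.ofBijective r (Finite.injective_iff_bijective.1 hr_inj), fun i =>
    ⟨(i + d) / L, ?_⟩⟩
  rw [Equiv.ofBijective_apply, hr, Int.emod_add_mul_ediv]

theorem sum_range_add_eq_of_map_add_eq {M : Type*} [AddCommGroup M] {L : ℕ} {h : ℤ → M}
    {a : M} (hh : ∀ m, h (m + L) = h m + a) (m : ℤ) :
    ∑ i ∈ range L, h (m + i) = ∑ i ∈ range L, h i + m • a := by
  have hstep (m : ℤ) : ∑ i ∈ range L, h (m + 1 + i) = ∑ i ∈ range L, h (m + i) + a := by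
    have h₁ := sum_range_succ (fun i : ℕ => h (m + i)) L
    rw [sum_range_succ', hh] at h₁
    simp only [Nat.cast_add, Nat.cast_one, Nat.cast_zero, add_zero, ← add_assoc] at h₁
    rw [add_right_comm _ (h m), add_left_inj] at h₁
    simpa only [add_right_comm m] using h₁
  induction m using Int.induction_on with
  | zero => simp
  | succ i ih => rw [hstep, ih, add_smul, one_smul, add_assoc]
  | pred i ih =>
    have h₁ := hstep (-i - 1)
    rw [sub_add_cancel, ih] at h₁
    rw [sub_smul, one_smul, ← add_sub_assoc, h₁, add_sub_cancel_right]

theorem exists_continuous_lift_of_norm_eq_one (γ : unitInterval → ℂ) (hγ : Continuous γ)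
    (hγ₁ : ∀ t, ‖γ t‖ = 1) :
    ∃ f : unitInterval → ℝ, Continuous f ∧
      ∀ t, γ t = Complex.exp (2 * π * Complex.I * f t) := by
  let γ' : C(unitInterval, Circle) :=
    ⟨fun t => ⟨γ t, by simp [Submonoid.unitSphere, hγ₁]⟩, by fun_prop⟩
  obtain ⟨e, he⟩ := Circle.exp_surjective (γ' 0)
  obtain ⟨Γ, hΓ, -⟩ := Circle.isCoveringMap_exp.exists_path_lifts γ' e he.symm
  refine ⟨fun t => Γ t / (2 * π), by fun_prop, fun t => ?_⟩
  have hγt : γ t = Complex.exp (Γ t * Complex.I) := (congrArg Subtype.val (congrFun hΓ t)).symm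
  rw [hγt]
  congr 1
  push_cast
  field_simp

section PeriodicQuantile

variable {L : ℕ}

/- Up to an additive normalisation, `periodicCount f x` is the number of points `f j + n`
(`n ∈ ℤ`) that are `≤ x`, and `periodicQuantile f m` is the `m`-th of these points in increasing
order. -/
noncomputable def periodicCount (f : Fin L → ℝ) (x : ℝ) : ℤ := ∑ j, ⌊x - f j⌋

noncomputable def periodicQuantile (f : Fin L → ℝ) (m : ℤ) : ℝ :=
  sInf {x | m ≤ periodicCount f x}

variable (f : Fin L → ℝ)

theorem periodicCount_mono : Monotone (periodicCount f) := fun _ _ hxy =>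
  sum_le_sum fun _ _ => Int.floor_le_floor (sub_le_sub_right hxy _)

theorem periodicCount_add_intCast (x : ℝ) (d : ℤ) :
    periodicCount f (x + d) = periodicCount f x + L * d := by
  simp only [periodicCount, add_sub_right_comm x, Int.floor_add_intCast, sum_add_distrib,
    sum_const, card_univ, Fintype.card_fin, nsmul_eq_mul]

theorem periodicCount_add_intCast_right (n : Fin L → ℤ) (x : ℝ) :
    periodicCount (fun j => f j + n j) x = periodicCount f x - ∑ j, n j := by
  simp only [periodicCount, ← sub_sub, Int.floor_sub_intCast, sum_sub_distrib]

theorem eventually_periodicCount_eq (a : ℝ) :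
    ∀ᶠ x in 𝓝[≥] a, periodicCount f x = periodicCount f a := by
  have h : ∀ j, ∀ᶠ x in 𝓝[≥] a, ⌊x - f j⌋ = ⌊a - f j⌋ := fun j => by
    have hlt : a < a + (⌊a - f j⌋ + 1 - (a - f j)) := by
      linarith [Int.lt_floor_add_one (a - f j)]
    filter_upwards [Ico_mem_nhdsGE hlt] with x hx
    rw [Int.floor_eq_iff]
    constructor <;> linarith [hx.1, hx.2, Int.floor_le (a - f j)]
  filter_upwards [eventually_all.2 h] with x hx
  exact sum_congr rfl fun j _ => hx j

variable (hL : 0 < L)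
include hL

theorem nonempty_setOf_le_periodicCount (m : ℤ) : {x | m ≤ periodicCount f x}.Nonempty := by
  set B : ℤ := |m| + |periodicCount f 0|
  have hB : B ≤ L * B := le_mul_of_one_le_left (by positivity) (by exact_mod_cast hL)
  refine ⟨B, ?_⟩
  change m ≤ periodicCount f B
  rw [← zero_add (B : ℝ), periodicCount_add_intCast]
  linarith [le_abs_self m, neg_abs_le (periodicCount f 0)]

theorem bddBelow_setOf_le_periodicCount (m : ℤ) : BddBelow {x | m ≤ periodicCount f x} := by
  set B : ℤ := -(|m| + |periodicCount f 0|)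
  have hB : L * B ≤ B :=
    mul_le_of_one_le_left (by simp only [B, neg_nonpos]; positivity) (by exact_mod_cast hL)
  refine ⟨B - 1, fun x hx => le_of_not_gt fun hxB => ?_⟩
  have hle : periodicCount f x ≤ periodicCount f (0 + (B - 1 : ℤ)) := by
    push_cast
    exact periodicCount_mono f (by linarith)
  rw [periodicCount_add_intCast] at hle
  linarith [hx.out, neg_abs_le m, le_abs_self (periodicCount f 0)]

theorem le_periodicCount_periodicQuantile (m : ℤ) :
    m ≤ periodicCount f (periodicQuantile f m) := by
  have hne := nonempty_setOf_le_periodicCount f hL m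
  have hglb := isGLB_csInf hne (bddBelow_setOf_le_periodicCount f hL m)
  obtain ⟨x, hx, hx_eq⟩ :=
    ((hglb.frequently_mem hne).and_eventually (eventually_periodicCount_eq f _)).exists
  exact hx_eq ▸ hx

theorem periodicQuantile_le_iff (m : ℤ) (x : ℝ) :
    periodicQuantile f m ≤ x ↔ m ≤ periodicCount f x :=
  ⟨fun h => (le_periodicCount_periodicQuantile f hL m).trans (periodicCount_mono f h),
    fun h => csInf_le (bddBelow_setOf_le_periodicCount f hL m) h⟩

theorem periodicQuantile_eq_of_forall_le_iff {m : ℤ} {y : ℝ}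
    (h : ∀ x, y ≤ x ↔ m ≤ periodicCount f x) : periodicQuantile f m = y :=
  eq_of_forall_ge_iff fun x => (periodicQuantile_le_iff f hL m x).trans (h x).symm

theorem periodicQuantile_mono : Monotone (periodicQuantile f) := fun m m' hmm' =>
  (periodicQuantile_le_iff f hL m _).2 (hmm'.trans (le_periodicCount_periodicQuantile f hL m'))

theorem periodicQuantile_add_mul (m d : ℤ) :
    periodicQuantile f (m + L * d) = periodicQuantile f m + d :=
  periodicQuantile_eq_of_forall_le_iff f hL fun x => by
    rw [← sub_add_cancel x d, add_le_add_iff_right, periodicCount_add_intCast,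
      add_le_add_iff_right, periodicQuantile_le_iff f hL]

theorem periodicQuantile_add_intCast (n : Fin L → ℤ) (m : ℤ) :
    periodicQuantile (fun j => f j + n j) m = periodicQuantile f (m + ∑ j, n j) :=
  eq_of_forall_ge_iff fun x => by
    rw [periodicQuantile_le_iff _ hL, periodicQuantile_le_iff f hL,
      periodicCount_add_intCast_right, le_sub_iff_add_le]

omit f in
theorem lipschitzWith_periodicQuantile (m : ℤ) :
    LipschitzWith 1 (fun f : Fin L → ℝ => periodicQuantile f m) :=
  LipschitzWith.of_le_add fun f g => by
    rw [periodicQuantile_le_iff f hL]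
    refine (le_periodicCount_periodicQuantile g hL m).trans
      (sum_le_sum fun j _ => Int.floor_le_floor ?_)
    have := abs_le.1 ((Real.dist_eq _ _).symm.trans_le (dist_le_pi_dist f g j))
    linarith [this.1]

omit f hL in
theorem periodicCount_eq_card_filter_le_sub {g : Fin L → ℝ} (hg : ∀ j, g j ∈ Set.Ico 0 1)
    {x : ℝ} (hx : x ∈ Set.Ico 0 1) :
    periodicCount g x = #(univ.filter fun j => g j ≤ x) - L := by
  have hterm : ∀ j, ⌊x - g j⌋ = (if g j ≤ x then 1 else 0) - 1 := fun j => by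
    obtain ⟨hg0, hg1⟩ := hg j
    split_ifs with hgx <;> rw [Int.floor_eq_iff] <;> push_cast <;> constructor <;>
      linarith [hx.1, hx.2]
  simp only [periodicCount, hterm, sum_sub_distrib, sum_boole, sum_const, card_univ,
    Fintype.card_fin, nsmul_eq_mul, mul_one]

omit f in
theorem periodicQuantile_eq_sort {g : Fin L → ℝ} (hg : ∀ j, g j ∈ Set.Ico 0 1) (i : Fin L) :
    periodicQuantile g (i + 1 - L) = g (Tuple.sort g i) := by
  refine periodicQuantile_eq_of_forall_le_iff g hL fun x => ?_
  rcases lt_or_ge x 0 with hx0 | hx0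
  · have hcount : periodicCount g x ≤ -L := by
      have : ∀ j, ⌊x - g j⌋ ≤ -1 := fun j => by
        rw [Int.floor_le_neg_one_iff]; linarith [(hg j).1]
      simpa [periodicCount] using sum_le_sum fun j (_ : j ∈ univ) => this j
    constructor
    · intro h; linarith [(hg (Tuple.sort g i)).1]
    · intro h; omega
  rcases lt_or_ge x 1 with hx1 | hx1
  · have hcard : #(univ.filter fun j => g j ≤ x) =
        #(univ.filter fun k => g (Tuple.sort g k) ≤ x) := by
      simp only [card_filter]
      exact (Equiv.sum_comp (Tuple.sort g) _).symm
    rw [periodicCount_eq_card_filter_le_sub hg ⟨hx0, hx1⟩, sub_le_sub_iff_right, hcard,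
      ← Function.comp_apply (f := g), (Tuple.monotone_sort g).le_iff_lt_card_filter_le i x]
    simp only [Function.comp_apply]
    omega
  · have hcount : 0 ≤ periodicCount g x :=
      sum_nonneg fun j _ => Int.floor_nonneg.2 (by linarith [(hg j).2])
    constructor
    · intro; omega
    · intro; linarith [(hg (Tuple.sort g i)).2]

theorem exists_perm_periodicQuantile_add_eq (m : ℤ) :
    ∃ σ : Equiv.Perm (Fin L), ∀ j, ∃ n : ℤ, periodicQuantile f (m + σ j) = f j + n := by
  set τ := Tuple.sort fun j => Int.fract (f j)
  set b : ℤ := 1 - L - ∑ j, ⌊f j⌋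
  have hwindow (i : Fin L) : periodicQuantile f (b + i) = Int.fract (f (τ i)) := by
    have h := periodicQuantile_add_intCast (Int.fract ∘ f) hL (fun j => ⌊f j⌋) (b + i)
    simp only [Function.comp_apply, Int.fract_add_floor] at h
    rw [h, ← periodicQuantile_eq_sort hL (fun j => ⟨Int.fract_nonneg _, Int.fract_lt_one _⟩)]
    congr 1
    ring
  -- The window of `L` indices starting at `m` is that starting at `b`, cyclically shifted by `ρ`
  -- and translated by multiples of `L`.
  obtain ⟨ρ, hρ⟩ := exists_perm_fin_add_eq_add_mul hL (m - b)
  refine ⟨(ρ.trans τ).symm, fun j => ?_⟩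
  set i := (ρ.trans τ).symm j
  have hj : τ (ρ i) = j := (ρ.trans τ).apply_symm_apply j
  obtain ⟨q, hq⟩ := hρ i
  have hi : m + i = b + ρ i + L * q := by linarith
  refine ⟨q - ⌊f j⌋, ?_⟩
  rw [hi, periodicQuantile_add_mul f hL, hwindow, hj, Int.fract]
  push_cast
  ring

end PeriodicQuantile

/-- simultaneous continuous ordered real lifts of finitely many
continuous circle-valued functions on `[0,1]`, normalized so that the sum of
the values at `0` lies in `[k, k+1)`. -/
theorem stmt_3 (L : ℕ) (hL : 0 < L) (k : ℤ)
    (lam : Fin L → (Set.Icc (0:ℝ) 1) → ℂ)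
    (hcont : ∀ j, Continuous (lam j))
    (hunit : ∀ j t, ‖lam j t‖ = 1) :
    ∃ F : Fin L → (Set.Icc (0:ℝ) 1) → ℝ,
      (∀ j, Continuous (F j)) ∧
      (∑ j, F j ⟨0, Set.mem_Icc.mpr ⟨le_refl 0, zero_le_one⟩⟩) ∈
        Set.Ico (k : ℝ) ((k : ℝ) + 1) ∧
      (∀ t, ∀ j j' : Fin L, j ≤ j' → F j t ≤ F j' t) ∧
      (∀ t j, F j t ≤ F ⟨0, hL⟩ t + 1) ∧
      (∀ t, ∃ σ : Equiv.Perm (Fin L), ∀ j,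
        lam j t = Complex.exp (2 * Real.pi * Complex.I * (F (σ j) t : ℂ))) := by
  choose f hf_cont hf_lift using fun j =>
    exists_continuous_lift_of_norm_eq_one (lam j) (hcont j) (hunit j)
  let Q : ℤ → Set.Icc (0:ℝ) 1 → ℝ := fun m t => periodicQuantile (fun j => f j t) m
  have hQ_period : ∀ t m, Q (m + L) t = Q m t + 1 := fun t m => by
    simpa using periodicQuantile_add_mul (fun j => f j t) hL m 1
  set S₀ := ∑ i ∈ range L, Q i ⟨0, Set.mem_Icc.mpr ⟨le_refl 0, zero_le_one⟩⟩
  set m₀ : ℤ := k - ⌊S₀⌋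
  refine ⟨fun j t => Q (m₀ + j) t, fun j => ?_, ?_, fun t j j' hjj' => ?_, fun t j => ?_,
    fun t => ?_⟩
  · exact (lipschitzWith_periodicQuantile hL _).continuous.comp (continuous_pi hf_cont)
  · rw [Fin.sum_univ_eq_sum_range (fun i => Q (m₀ + i) _), sum_range_add_eq_of_map_add_eq
      (hQ_period _), zsmul_one]
    constructor <;> push_cast [m₀] <;> linarith [Int.floor_le S₀, Int.lt_floor_add_one S₀]
  · exact periodicQuantile_mono _ hL (by simpa using hjj')
  · calc Q (m₀ + j) t ≤ Q (m₀ + L) t := periodicQuantile_mono _ hL (by simp [j.2.le])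
      _ = Q (m₀ + 0) t + 1 := by rw [hQ_period, add_zero]
  · obtain ⟨σ, hσ⟩ := exists_perm_periodicQuantile_add_eq (fun j => f j t) hL m₀
    refine ⟨σ, fun j => ?_⟩
    obtain ⟨n, hn⟩ := hσ j
    simp only [Q, hn, hf_lift j t]
    push_cast
    rw [mul_add, Complex.exp_add, mul_comm _ (n : ℂ), Complex.exp_int_mul_two_pi_mul_I, mul_one]
end

section
/- Equip the unit circle 𝕋 with the metric ρ(e^{2πis}, e^{2πit}) = min_{k∈ℤ} |s − t + k|. Let a₁,…,a_L, b₁,…,b_L ∈ 𝕋 and ε > 0, and suppose there is a positive integer k such that for every k-arc I one has #{r : a_r ∈ I} ≤ #{r : b_r ∈ I ± ε}. Then there exists a permutation σ of {1,…,L} such that ρ(a_j, b_{σ(j)}) ≤ ε + 1/k for all j = 1,…,L. -/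
/-!
By Hall's marriage theorem it suffices that every set `A` of indices has at least `#A` indices
`i` with `b i` within `ε + 1/k` of some `a j`, `j ∈ A`. Put each `a j` in a `k`-cell
`[e/k, (e+1)/k]`: every `b` within `ε` of that cell is close to `a j`. If the `ε`-neighbourhoods
of the cells of `A` leave no gap, they cover the whole circle. Otherwise cut the circle at a gap:
on the line, the cells fall into clusters separated by gaps, each cluster spans a `k`-arc `I`
whose `I ± ε` is covered by the cluster's neighbourhoods, and these thickened arcs are disjoint
on the circle, so the hypothesis applied to each cluster adds up to the bound.
-/

/-- `e^{2πit}`. -/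
noncomputable def expc (t : ℝ) : ℂ := Complex.exp (2 * Real.pi * Complex.I * (t : ℂ))

open Set

theorem expc_add_int (x : ℝ) (n : ℤ) : expc (x + n) = expc x := by
  have h : 2 * (Real.pi : ℂ) * Complex.I * ((x + n : ℝ) : ℂ) =
      2 * Real.pi * Complex.I * x + n * (2 * Real.pi * Complex.I) := by
    push_cast; ring
  rw [expc, h, Complex.exp_add, Complex.exp_int_mul_two_pi_mul_I, mul_one, expc]

theorem expc_eq_expc_iff {x y : ℝ} : expc x = expc y ↔ ∃ n : ℤ, x = y + n := by
  refine ⟨fun h => ?_, fun ⟨n, hn⟩ => hn ▸ expc_add_int y n⟩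
  obtain ⟨n, hn⟩ := Complex.exp_eq_exp_iff_exists_int.mp h
  refine ⟨n, ?_⟩
  have h2pi : 2 * (Real.pi : ℂ) * Complex.I ≠ 0 := by simp [Real.pi_ne_zero]
  have : (2 * Real.pi * Complex.I) * (x : ℂ) = (2 * Real.pi * Complex.I) * (y + n) := by
    rw [hn]; ring
  exact_mod_cast mul_left_cancel₀ h2pi this

theorem disjoint_image_expc {S T : Set ℝ} (h : ∀ x ∈ S, ∀ y ∈ T, x < y ∧ y < x + 1) :
    Disjoint (expc '' S) (expc '' T) := by
  rw [Set.disjoint_left]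
  rintro _ ⟨x, hx, rfl⟩ ⟨y, hy, hxy⟩
  obtain ⟨n, rfl⟩ := expc_eq_expc_iff.mp hxy
  obtain ⟨h₁, h₂⟩ := h x hx _ hy
  have h₁ : (0 : ℤ) < n := by exact_mod_cast (by linarith : (0 : ℝ) < n)
  have h₂ : n < (1 : ℤ) := by exact_mod_cast (by linarith : (n : ℝ) < 1)
  omega

theorem expc_mem_image_Icc (t lo : ℝ) {hi : ℝ} (h : lo + 1 ≤ hi) : expc t ∈ expc '' Icc lo hi := by
  refine ⟨t - ⌊t - lo⌋, ⟨?_, ?_⟩, by simpa using (expc_add_int (t - ⌊t - lo⌋) ⌊t - lo⌋).symm⟩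
  · linarith [Int.floor_le (t - lo)]
  · linarith [Int.lt_floor_add_one (t - lo)]

noncomputable def cell (k : ℕ) (e : ℤ) : Set ℝ := Icc ((e : ℝ) / k) ((e + 1) / k)

noncomputable def cellNhd (k : ℕ) (ε : ℝ) (e : ℤ) : Set ℝ := Icc ((e : ℝ) / k - ε) ((e + 1) / k + ε)

def IsGapAfter (k : ℕ) (ε : ℝ) (E : Finset ℤ) (d : ℤ) : Prop :=
  ∀ e ∈ E, d < e → ((d : ℝ) + 1) / k + ε < e / k - ε

theorem Icc_subset_biUnion_cellNhd {k : ℕ} {ε : ℝ} {E : Finset ℤ} {p q : ℤ} (hp : p ∈ E)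
    (hq : q ∈ E) (hpq : p ≤ q) (hnogap : ∀ e ∈ E, e < q → ¬ IsGapAfter k ε E e) :
    Icc ((p : ℝ) / k - ε) ((q + 1) / k + ε) ⊆ ⋃ e ∈ E.filter (· ≤ q), cellNhd k ε e := by
  rintro x ⟨hpx, hxq⟩
  set T := E.filter fun e => e ≤ q ∧ (e : ℝ) / k - ε ≤ x
  have hT : T.Nonempty := ⟨p, Finset.mem_filter.mpr ⟨hp, hpq, hpx⟩⟩
  set c := T.max' hT
  obtain ⟨hcE, hcq, hcx⟩ := Finset.mem_filter.mp (T.max'_mem hT)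
  simp only [mem_iUnion, Finset.mem_filter, cellNhd, mem_Icc]
  refine ⟨c, ⟨hcE, hcq⟩, hcx, ?_⟩
  by_contra! hxc
  have hcq' : c < q := lt_of_le_of_ne hcq (fun h => by rw [h] at hxc; linarith)
  obtain ⟨d, hdE, hcd, hdc⟩ : ∃ d ∈ E, c < d ∧ (d : ℝ) / k - ε ≤ ((c : ℝ) + 1) / k + ε := by
    simpa [IsGapAfter] using hnogap c hcE hcq'
  -- `min d q` would be a later cell of `T` than its maximum
  have hmin : min d q ∈ T := by
    refine Finset.mem_filter.mpr ⟨?_, min_le_right d q, ?_⟩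
    · rcases min_choice d q with h | h <;> rw [h] <;> assumption
    · have : ((min d q : ℤ) : ℝ) / k ≤ d / k :=
        div_le_div_of_nonneg_right (by exact_mod_cast min_le_left d q) k.cast_nonneg
      linarith
  exact absurd (T.le_max' _ hmin) (not_le.mpr (lt_min hcd hcq'))

section Counting

variable {ι : Type*}

noncomputable def countOn (z : ι → ℂ) (S : Set ℝ) : ℕ := (z ⁻¹' (expc '' S)).ncard

theorem countOn_Icc (z : ι → ℂ) (lo hi : ℝ) :
    countOn z (Icc lo hi) = Nat.card {r // ∃ t : ℝ, lo ≤ t ∧ t ≤ hi ∧ z r = expc t} :=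
  Nat.card_congr (Equiv.subtypeEquivRight fun r => by simp [eq_comm, and_assoc])

theorem countOn_mono [Finite ι] (z : ι → ℂ) {S T : Set ℝ} (h : S ⊆ T) : countOn z S ≤ countOn z T :=
  Set.ncard_le_ncard (preimage_mono (image_mono h))

theorem countOn_union_le (z : ι → ℂ) (S T : Set ℝ) :
    countOn z (S ∪ T) ≤ countOn z S + countOn z T := by
  simpa only [countOn, image_union, preimage_union] using Set.ncard_union_le _ _

theorem countOn_union [Finite ι] (z : ι → ℂ) {S T : Set ℝ} (h : Disjoint (expc '' S) (expc '' T)) :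
    countOn z (S ∪ T) = countOn z S + countOn z T := by
  simpa only [countOn, image_union, preimage_union] using Set.ncard_union_eq (h.preimage z)

def ArcDominated (k : ℕ) (ε : ℝ) (a b : ι → ℂ) : Prop :=
  ∀ m n : ℤ, m < n → countOn a (Icc ((m : ℝ) / k) (n / k)) ≤ countOn b (Icc (m / k - ε) (n / k + ε))

theorem countOn_biUnion_cell_le [Finite ι] {k : ℕ} {ε : ℝ} {a b : ι → ℂ}
    (hab : ArcDominated k ε a b) (E : Finset ℤ) (hwin : ∀ e ∈ E, ∀ e' ∈ E, ((e' : ℝ) + 1) / k + ε < e / k - ε + 1) :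
    countOn a (⋃ e ∈ E, cell k e) ≤ countOn b (⋃ e ∈ E, cellNhd k ε e) := by
  -- split off the cluster of cells up to the first gap `ν`; it spans the `k`-arc `[μ/k, (ν+1)/k]`
  classical
  induction E using Finset.strongInduction with
  | H E ih =>
  rcases E.eq_empty_or_nonempty with rfl | hE
  · simp [countOn]
  have hgaps : (E.filter (IsGapAfter k ε E)).Nonempty :=
    ⟨E.max' hE, Finset.mem_filter.mpr ⟨E.max'_mem hE, fun e he hlt =>
      absurd (E.le_max' e he) (not_le.mpr hlt)⟩⟩
  set μ := E.min' hE
  set ν := (E.filter (IsGapAfter k ε E)).min' hgaps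
  obtain ⟨hνE, hν⟩ : ν ∈ E ∧ IsGapAfter k ε E ν :=
    Finset.mem_filter.mp ((E.filter _).min'_mem hgaps)
  have hμν : μ ≤ ν := E.min'_le ν hνE
  set E₁ := E.filter (· ≤ ν)
  set E₂ := E.filter (¬ · ≤ ν)
  have hsplit (u : ℤ → Set ℝ) : ⋃ e ∈ E, u e = (⋃ e ∈ E₁, u e) ∪ ⋃ e ∈ E₂, u e := by
    rw [← Finset.set_biUnion_union, Finset.filter_union_filter_not_eq]
  have hcells : ⋃ e ∈ E₁, cell k e ⊆ Icc ((μ : ℝ) / k) (((ν + 1 : ℤ) : ℝ) / k) := by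
    simp only [iUnion_subset_iff, E₁, Finset.mem_filter, cell]
    rintro e ⟨he, heν⟩
    push_cast
    refine Icc_subset_Icc (div_le_div_of_nonneg_right ?_ k.cast_nonneg)
      (div_le_div_of_nonneg_right ?_ k.cast_nonneg)
    · exact_mod_cast E.min'_le e he
    · linarith [(Int.cast_le.mpr heν : (e : ℝ) ≤ ν)]
  have hcover : Icc ((μ : ℝ) / k - ε) (((ν + 1 : ℤ) : ℝ) / k + ε) ⊆ ⋃ e ∈ E₁, cellNhd k ε e := by
    push_cast
    exact Icc_subset_biUnion_cellNhd (E.min'_mem hE) hνE hμν fun e he hlt hgap =>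
      absurd (Finset.min'_le _ e (Finset.mem_filter.mpr ⟨he, hgap⟩)) (not_le.mpr hlt)
  have hsep : Disjoint (expc '' ⋃ e ∈ E₁, cellNhd k ε e) (expc '' ⋃ e ∈ E₂, cellNhd k ε e) := by
    refine disjoint_image_expc ?_
    simp only [mem_iUnion, E₁, E₂, Finset.mem_filter, cellNhd, mem_Icc]
    rintro x ⟨e₁, ⟨he₁, h₁⟩, hx₁, hx₂⟩ y ⟨e₂, ⟨he₂, h₂⟩, hy₁, hy₂⟩
    have hgap := hν e₂ he₂ (not_le.mp h₂)
    have hw := hwin e₁ he₁ e₂ he₂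
    have : ((e₁ : ℝ) + 1) / k ≤ ((ν : ℝ) + 1) / k :=
      div_le_div_of_nonneg_right (by linarith [(Int.cast_le.mpr h₁ : (e₁ : ℝ) ≤ ν)])
        k.cast_nonneg
    constructor <;> linarith
  have ih₂ := ih E₂ (Finset.filter_ssubset.mpr ⟨μ, E.min'_mem hE, not_not.mpr hμν⟩)
    fun e he e' he' => hwin e (Finset.filter_subset _ _ he) e' (Finset.filter_subset _ _ he')
  calc countOn a (⋃ e ∈ E, cell k e)
      ≤ countOn a (⋃ e ∈ E₁, cell k e) + countOn a (⋃ e ∈ E₂, cell k e) :=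
        hsplit (cell k) ▸ countOn_union_le _ _ _
    _ ≤ countOn b (Icc ((μ : ℝ) / k - ε) (((ν + 1 : ℤ) : ℝ) / k + ε)) +
          countOn b (⋃ e ∈ E₂, cellNhd k ε e) :=
        add_le_add ((countOn_mono a hcells).trans (hab μ (ν + 1) (by omega))) ih₂
    _ ≤ countOn b (⋃ e ∈ E₁, cellNhd k ε e) + countOn b (⋃ e ∈ E₂, cellNhd k ε e) :=
        add_le_add (countOn_mono b hcover) le_rfl
    _ = countOn b (⋃ e ∈ E, cellNhd k ε e) := by rw [hsplit, countOn_union b hsep]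

end Counting

def CloseLifts (δ : ℝ) (z w : ℂ) : Prop := ∃ s t : ℝ, z = expc s ∧ w = expc t ∧ |s - t| ≤ δ

theorem closeLifts_of_mem_cell {k : ℕ} {ε : ℝ} {e : ℤ} {z w : ℂ} (hz : z ∈ expc '' cell k e)
    (hw : w ∈ expc '' cellNhd k ε e) : CloseLifts (ε + 1 / k) z w := by
  obtain ⟨s, ⟨hs₁, hs₂⟩, rfl⟩ := hz
  obtain ⟨t, ⟨ht₁, ht₂⟩, rfl⟩ := hw
  refine ⟨s, t, rfl, rfl, abs_le.mpr ⟨?_, ?_⟩⟩ <;>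
  · have : ((e : ℝ) + 1) / k = e / k + 1 / k := add_div _ _ _
    linarith

theorem mem_image_cell_add_nat {k : ℕ} (hk : 0 < k) {e : ℤ} {z : ℂ} (hz : z ∈ expc '' cell k e) :
    z ∈ expc '' cell k (e + k) := by
  obtain ⟨s, ⟨hs₁, hs₂⟩, rfl⟩ := hz
  have hk' : (k : ℝ) ≠ 0 := by positivity
  refine ⟨s + (1 : ℤ), ⟨?_, ?_⟩, expc_add_int s 1⟩
  · rw [Int.cast_add, Int.cast_natCast, add_div, div_self hk']; push_cast; linarith
  · rw [Int.cast_add, Int.cast_natCast, add_right_comm, add_div, div_self hk']; push_cast; linarith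

theorem exists_mem_image_cell {k : ℕ} (hk : 0 < k) (t : ℝ) :
    ∃ e : ℤ, 0 ≤ e ∧ e < k ∧ expc t ∈ expc '' cell k e := by
  have hk' : (0 : ℝ) < k := by exact_mod_cast hk
  refine ⟨⌊k * Int.fract t⌋, Int.floor_nonneg.mpr (by positivity), Int.floor_lt.mpr ?_,
    Int.fract t, ⟨?_, ?_⟩, ?_⟩
  · simpa using mul_lt_of_lt_one_right hk' (Int.fract_lt_one t)
  · rw [div_le_iff₀ hk', mul_comm]; exact Int.floor_le _
  · rw [le_div_iff₀ hk', mul_comm]; exact (Int.lt_floor_add_one _).le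
  · rw [← expc_add_int (Int.fract t) ⌊t⌋, Int.fract_add_floor]

section Matching

variable {ι : Type*} {k : ℕ} {ε : ℝ} {a b : ι → ℂ}

open Classical in
noncomputable def closeIndices [Fintype ι] (δ : ℝ) (a b : ι → ℂ) (j : ι) : Finset ι :=
  {i | CloseLifts δ (a j) (b i)}

theorem mem_closeIndices [Fintype ι] {δ : ℝ} {j i : ι} :
    i ∈ closeIndices δ a b j ↔ CloseLifts δ (a j) (b i) := by
  simp [closeIndices]

theorem card_le_countOn_biUnion_cell [Finite ι] (A : Finset ι) {F : Finset ℤ}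
    (h : ∀ j ∈ A, ∃ e ∈ F, a j ∈ expc '' cell k e) : A.card ≤ countOn a (⋃ e ∈ F, cell k e) := by
  rw [← Set.ncard_coe_finset]
  refine Set.ncard_le_ncard fun j hj => ?_
  obtain ⟨e, he, hj⟩ := h j hj
  exact image_mono (subset_biUnion_of_mem (u := cell k) he) hj

theorem countOn_biUnion_cellNhd_le [Fintype ι] [DecidableEq ι] (A : Finset ι) {F : Finset ℤ}
    (h : ∀ e ∈ F, ∃ j ∈ A, a j ∈ expc '' cell k e) :
    countOn b (⋃ e ∈ F, cellNhd k ε e) ≤ (A.biUnion (closeIndices (ε + 1 / k) a b)).card := by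
  rw [← Set.ncard_coe_finset]
  refine Set.ncard_le_ncard fun i hi => ?_
  obtain ⟨t, ht, hti⟩ := hi
  obtain ⟨e, he, ht⟩ := mem_iUnion₂.mp ht
  obtain ⟨j, hj, hje⟩ := h e he
  simp only [Finset.coe_biUnion, Finset.mem_coe, mem_iUnion, mem_closeIndices]
  exact ⟨j, hj, closeLifts_of_mem_cell hje ⟨t, ht, hti⟩⟩

theorem countOn_eq_card [Fintype ι] {S : Set ℝ} (hb : ∀ i, ∃ t, b i = expc t) {lo : ℝ}
    (h : Icc lo (lo + 1) ⊆ S) : countOn b S = Fintype.card ι := by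
  rw [countOn, ← Nat.card_eq_fintype_card, ← Set.ncard_univ]
  congr
  refine eq_univ_of_forall fun i => ?_
  obtain ⟨t, ht⟩ := hb i
  rw [mem_preimage, ht]
  exact image_mono h (expc_mem_image_Icc t lo le_rfl)

def unrolledCells (k : ℕ) (c : ι → ℤ) (A : Finset ι) : Finset ℤ :=
  A.image c ∪ A.image fun j => c j + k

theorem exists_of_mem_unrolledCells (hk : 0 < k) {c : ι → ℤ}
    (hc : ∀ j, a j ∈ expc '' cell k (c j)) {A : Finset ι} {e : ℤ} (he : e ∈ unrolledCells k c A) :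
    ∃ j ∈ A, a j ∈ expc '' cell k e := by
  rcases Finset.mem_union.mp he with he | he <;> obtain ⟨j, hj, rfl⟩ := Finset.mem_image.mp he
  exacts [⟨j, hj, hc j⟩, ⟨j, hj, mem_image_cell_add_nat hk (hc j)⟩]

theorem card_le_of_isGapAfter [Fintype ι] [DecidableEq ι] (hk : 0 < k) (hab : ArcDominated k ε a b)
    {c : ι → ℤ} (hc : ∀ j, a j ∈ expc '' cell k (c j)) (hck : ∀ j, 0 ≤ c j ∧ c j < k)
    {A : Finset ι} {d : ℤ} (hd : d ∈ A.image c) (hgap : IsGapAfter k ε (unrolledCells k c A) d) :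
    A.card ≤ (A.biUnion (closeIndices (ε + 1 / k) a b)).card := by
  -- cutting the circle at the gap after `d` leaves the cells of `A` inside one turn `(d, d + k]`
  set F := (unrolledCells k c A).filter fun e => d < e ∧ e ≤ d + k
  have hd₀ : 0 ≤ d ∧ d < k := by
    obtain ⟨j, -, rfl⟩ := Finset.mem_image.mp hd
    exact hck j
  have hAF : ∀ j ∈ A, ∃ e ∈ F, a j ∈ expc '' cell k e := by
    intro j hj
    have := hck j
    by_cases hdj : d < c j
    · exact ⟨c j, Finset.mem_filter.mpr ⟨Finset.mem_union_left _ (Finset.mem_image_of_mem c hj),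
        hdj, by omega⟩, hc j⟩
    · exact ⟨c j + k, Finset.mem_filter.mpr
        ⟨Finset.mem_union_right _ (Finset.mem_image_of_mem _ hj), by omega, by omega⟩,
        mem_image_cell_add_nat hk (hc j)⟩
  have hwin : ∀ e ∈ F, ∀ e' ∈ F, ((e' : ℝ) + 1) / k + ε < e / k - ε + 1 := by
    intro e he e' he'
    obtain ⟨heU, hde, -⟩ := Finset.mem_filter.mp he
    obtain ⟨-, -, he'd⟩ := Finset.mem_filter.mp he'
    have hk' : (k : ℝ) ≠ 0 := by positivity
    have : ((e' : ℝ) + 1) / k ≤ ((d : ℝ) + 1) / k + 1 := by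
      calc ((e' : ℝ) + 1) / k ≤ ((d : ℝ) + k + 1) / k :=
            div_le_div_of_nonneg_right
              (by linarith [(by exact_mod_cast he'd : (e' : ℝ) ≤ d + k)]) k.cast_nonneg
        _ = ((d : ℝ) + 1) / k + 1 := by field_simp; ring
    linarith [hgap e heU hde]
  calc A.card ≤ countOn a (⋃ e ∈ F, cell k e) := card_le_countOn_biUnion_cell A hAF
    _ ≤ countOn b (⋃ e ∈ F, cellNhd k ε e) := countOn_biUnion_cell_le hab F hwin
    _ ≤ _ := countOn_biUnion_cellNhd_le A fun e he =>
        exists_of_mem_unrolledCells hk hc (Finset.filter_subset _ _ he)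

theorem card_le_of_forall_not_isGapAfter [Fintype ι] [DecidableEq ι] (hk : 0 < k) (hε : 0 ≤ ε)
    (hb : ∀ i, ∃ t, b i = expc t) {c : ι → ℤ} (hc : ∀ j, a j ∈ expc '' cell k (c j))
    {A : Finset ι} (hA : A.Nonempty)
    (hnogap : ∀ d ∈ A.image c, ¬ IsGapAfter k ε (unrolledCells k c A) d) :
    A.card ≤ (A.biUnion (closeIndices (ε + 1 / k) a b)).card := by
  -- without a gap, the neighbourhoods of the cells cover a whole turn
  set U := unrolledCells k c A
  set μ := (A.image c).min' (hA.image c)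
  obtain ⟨j₀, hj₀, hj₀μ⟩ : ∃ j ∈ A, c j = μ :=
    Finset.mem_image.mp ((A.image c).min'_mem (hA.image c))
  have hμU : μ ∈ U := Finset.mem_union_left _ (hj₀μ ▸ Finset.mem_image_of_mem c hj₀)
  have hμkU : μ + k ∈ U :=
    Finset.mem_union_right _ (Finset.mem_image.mpr ⟨j₀, hj₀, by rw [hj₀μ]⟩)
  have hcover := Icc_subset_biUnion_cellNhd hμU hμkU (by omega) fun e he hlt => by
      rcases Finset.mem_union.mp he with he | he
      · exact hnogap e he
      · obtain ⟨j, hj, rfl⟩ := Finset.mem_image.mp he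
        exact absurd ((A.image c).min'_le _ (Finset.mem_image_of_mem c hj)) (by omega)
  have hturn : Icc ((μ : ℝ) / k) (μ / k + 1) ⊆ ⋃ e ∈ U, cellNhd k ε e := by
    refine subset_trans ?_ (hcover.trans ?_)
    · have : (((μ + k : ℤ) : ℝ) + 1) / k = μ / k + 1 + 1 / k := by
        have hk' : (k : ℝ) ≠ 0 := by positivity
        push_cast; field_simp
      refine Icc_subset_Icc (by linarith) ?_
      rw [this]
      have : (0 : ℝ) ≤ 1 / k := by positivity
      linarith
    · exact biUnion_subset_biUnion_left (Finset.coe_subset.mpr (Finset.filter_subset _ _))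
  calc A.card ≤ Fintype.card ι := Finset.card_le_univ A
    _ = countOn b (⋃ e ∈ U, cellNhd k ε e) := (countOn_eq_card hb hturn).symm
    _ ≤ _ := countOn_biUnion_cellNhd_le A fun e he => exists_of_mem_unrolledCells hk hc he

theorem card_le_card_biUnion_closeIndices [Fintype ι] [DecidableEq ι] (hk : 0 < k) (hε : 0 ≤ ε)
    (hab : ArcDominated k ε a b) (ha : ∀ j, ∃ s, a j = expc s) (hb : ∀ i, ∃ t, b i = expc t)
    (A : Finset ι) : A.card ≤ (A.biUnion (closeIndices (ε + 1 / k) a b)).card := by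
  have hcell (j : ι) : ∃ e : ℤ, (0 ≤ e ∧ e < k) ∧ a j ∈ expc '' cell k e := by
    obtain ⟨s, hs⟩ := ha j
    obtain ⟨e, he₀, hek, he⟩ := exists_mem_image_cell hk s
    exact ⟨e, ⟨he₀, hek⟩, hs ▸ he⟩
  choose c hck hc using hcell
  rcases A.eq_empty_or_nonempty with rfl | hA
  · simp
  by_cases hgap : ∃ d ∈ A.image c, IsGapAfter k ε (unrolledCells k c A) d
  · obtain ⟨d, hd, hgap⟩ := hgap
    exact card_le_of_isGapAfter hk hab hc hck hd hgap
  · simp only [not_exists, not_and] at hgap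
    exact card_le_of_forall_not_isGapAfter hk hε hb hc hA hgap

end Matching

/-- marriage-lemma matching on the circle.  If for every `k`-arc
`I` the number of `a`'s in `I` is at most the number of `b`'s in `I ± ε`, then
the tuples can be matched within distance `ε + 1/k` (distance expressed via
the existence of real lifts `s, t` with `|s - t| ≤ ε + 1/k`). -/
theorem stmt_5 (L k : ℕ) (hk : 0 < k) (ε : ℝ) (hε : 0 < ε)
    (a b : Fin L → ℂ)
    (ha : ∀ r, ∃ s : ℝ, a r = expc s) (hb : ∀ r, ∃ s : ℝ, b r = expc s)
    (harc : ∀ m n : ℤ, m < n →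
      Nat.card {r : Fin L // ∃ t : ℝ,
          (m : ℝ) / k ≤ t ∧ t ≤ (n : ℝ) / k ∧ a r = expc t} ≤
        Nat.card {r : Fin L // ∃ t : ℝ,
          (m : ℝ) / k - ε ≤ t ∧ t ≤ (n : ℝ) / k + ε ∧ b r = expc t}) :
    ∃ σ : Equiv.Perm (Fin L), ∀ j, ∃ s t : ℝ,
      a j = expc s ∧ b (σ j) = expc t ∧ |s - t| ≤ ε + 1 / k := by
  have hab : ArcDominated k ε a b := fun m n hmn => by
    rw [countOn_Icc, countOn_Icc]
    exact harc m n hmn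
  obtain ⟨f, hf, hfa⟩ := (Finset.all_card_le_biUnion_card_iff_existsInjective' _).mp
    (card_le_card_biUnion_closeIndices hk hε.le hab ha hb)
  refine ⟨Equiv.ofBijective f (Finite.injective_iff_bijective.mp hf), fun j => ?_⟩
  exact mem_closeIndices.mp (hfa j)
end

section
/- Let θ₁ ≤ ⋯ ≤ θ_L ≤ θ₁ + 1 and ω₁ ≤ ⋯ ≤ ω_L ≤ ω₁ + 1 be real numbers. Extend both sequences to integer indices by θ_{pL+s} = θ_s + p and ω_{pL+s} = ω_s + p. Define R_L of the two unordered tuples (e^{2πiθ₁},…,e^{2πiθ_L}) and (e^{2πiω₁},…,e^{2πiω_L}) as the minimum over permutations σ of max_j ρ(e^{2πiθ_j}, e^{2πiω_{σ(j)}}), where ρ is the arc-length metric on the circle normalized so the circle has circumference 1. Then there exists an integer p such that max_{1 ≤ j ≤ L} |θ_j − ω_{j+p}| = R_L((e^{2πiθ_j})_j, (e^{2πiω_j})_j). -/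
/-- The arc-length metric on the circle (normalized to circumference 1),
expressed on real lifts: `ρ(e^{2πis}, e^{2πit}) = min_{k ∈ ℤ} |s - t + k|`. -/
noncomputable def circleDist (s t : ℝ) : ℝ := ⨅ k : ℤ, |s - t + (k : ℝ)|

lemma circleDist_le (s t : ℝ) (k : ℤ) : circleDist s t ≤ |s - t + (k : ℝ)| :=
  ciInf_le ⟨0, by rintro x ⟨k, rfl⟩; exact abs_nonneg _⟩ k

lemma circleDist_exists (s t : ℝ) : ∃ k : ℤ, circleDist s t = |s - t + (k : ℝ)| := by
  refine ⟨round (t - s), le_antisymm (circleDist_le _ _ _) (le_ciInf fun k => ?_)⟩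
  set c := round (t - s) with hc
  have h1 : |s - t + (c : ℝ)| ≤ 1 / 2 := by
    rw [show s - t + (c : ℝ) = -(t - s - c) by ring, abs_neg]
    exact abs_sub_round (t - s)
  by_cases hk : k = c
  · rw [hk]
  · have h2 : (1 : ℝ) ≤ |(k : ℝ) - (c : ℝ)| := by
      have : (1 : ℤ) ≤ |k - c| := Int.one_le_abs (sub_ne_zero.mpr hk)
      calc (1:ℝ) = ((1:ℤ):ℝ) := by norm_num
        _ ≤ ((|k - c| : ℤ) : ℝ) := by exact_mod_cast this
        _ = |(k:ℝ) - c| := by push_cast [Int.cast_abs]; ring_nf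
    have h3 : |(k:ℝ) - c| ≤ |s - t + k| + |s - t + c| := by
      have := abs_sub (s - t + (k:ℝ)) (s - t + (c:ℝ))
      calc |(k:ℝ) - c| = |(s - t + k) - (s - t + c)| := by ring_nf
        _ ≤ |s - t + k| + |s - t + c| := abs_sub _ _
    linarith

noncomputable def extSeq {L : ℕ} (hL : 0 < L) (θ : Fin L → ℝ) (m : ℤ) : ℝ :=
  θ ⟨(m % (L : ℤ)).toNat, by
    have h0 : (0 : ℤ) < (L : ℤ) := by exact_mod_cast hL
    have h1 := Int.emod_lt_of_pos m h0
    have h2 := Int.emod_nonneg m (ne_of_gt h0)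
    omega⟩ + ((m / (L : ℤ) : ℤ) : ℝ)

lemma emod_ediv_of_eq {L m q s : ℤ} (h0 : 0 < L) (h : m = s + L * q) (hs0 : 0 ≤ s)
    (hsL : s < L) : m % L = s ∧ m / L = q := by
  constructor
  · rw [h, Int.add_mul_emod_self_left, Int.emod_eq_of_lt hs0 hsL]
  · rw [h, Int.add_mul_ediv_left _ _ (ne_of_gt h0), Int.ediv_eq_zero_of_lt hs0 hsL, zero_add]

lemma extSeq_spec {L : ℕ} (hL : 0 < L) (θ : Fin L → ℝ) (m q : ℤ) (s : ℕ) (hsL : s < L)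
    (h : m = (s : ℤ) + (L : ℤ) * q) : extSeq hL θ m = θ ⟨s, hsL⟩ + q := by
  have h0 : (0 : ℤ) < (L : ℤ) := by exact_mod_cast hL
  obtain ⟨hmod, hdiv⟩ := emod_ediv_of_eq h0 h (by positivity) (by exact_mod_cast hsL)
  unfold extSeq
  simp only [hmod, hdiv, Int.toNat_natCast]

lemma extSeq_shift {L : ℕ} (hL : 0 < L) (θ : Fin L → ℝ) (m q : ℤ) :
    extSeq hL θ (m + q * (L : ℤ)) = extSeq hL θ m + q := by
  have h0 : (0 : ℤ) < (L : ℤ) := by exact_mod_cast hL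
  have h1 := Int.emod_lt_of_pos m h0
  have h2 := Int.emod_nonneg m (ne_of_gt h0)
  have h3 := Int.mul_ediv_add_emod m (L : ℤ)
  rw [extSeq_spec hL θ m (m / L) (m % (L:ℤ)).toNat (by omega) (by omega),
      extSeq_spec hL θ (m + q * L) (m / L + q) (m % (L:ℤ)).toNat (by omega)
        (by rw [Int.toNat_of_nonneg h2]; linear_combination -h3)]
  push_cast
  ring

lemma extSeq_coe {L : ℕ} (hL : 0 < L) (θ : Fin L → ℝ) (j : Fin L) :
    extSeq hL θ ((j : ℕ) : ℤ) = θ j := by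
  rw [extSeq_spec hL θ _ 0 (j : ℕ) j.isLt (by ring)]
  simp

lemma extSeq_mono {L : ℕ} (hL : 0 < L) (θ : Fin L → ℝ) (hθm : Monotone θ)
    (hθ1 : ∀ j, θ j ≤ θ ⟨0, hL⟩ + 1) : Monotone (extSeq hL θ) := by
  apply monotone_int_of_le_succ
  intro m
  have h0 : (0 : ℤ) < (L : ℤ) := by exact_mod_cast hL
  have h1 := Int.emod_lt_of_pos m h0
  have h2 := Int.emod_nonneg m (ne_of_gt h0)
  have h3 := Int.mul_ediv_add_emod m (L : ℤ)
  by_cases hcase : m % (L:ℤ) + 1 < L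
  · rw [extSeq_spec hL θ m (m / L) (m % (L:ℤ)).toNat (by omega) (by omega),
        extSeq_spec hL θ (m + 1) (m / L) ((m % (L:ℤ)).toNat + 1) (by omega)
          (by push_cast [Int.toNat_of_nonneg h2]; linear_combination -h3)]
    have := hθm (show (⟨(m % (L:ℤ)).toNat, by omega⟩ : Fin L) ≤ ⟨(m % (L:ℤ)).toNat + 1, by omega⟩
      from by simp [Fin.mk_le_mk])
    linarith
  · rw [extSeq_spec hL θ m (m / L) (m % (L:ℤ)).toNat (by omega) (by omega),
        extSeq_spec hL θ (m + 1) (m / L + 1) 0 hL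
          (by have h4 : m % (L:ℤ) = L - 1 := by omega
              push_cast
              linear_combination -h3 + h4)]
    have := hθ1 ⟨(m % (L:ℤ)).toNat, by omega⟩
    push_cast
    linarith


def finOf (L : ℕ) (hL : 0 < L) (m : ℤ) : Fin L :=
  ⟨(m % (L : ℤ)).toNat, by
    have h0 : (0 : ℤ) < (L : ℤ) := by exact_mod_cast hL
    have h1 := Int.emod_lt_of_pos m h0
    have h2 := Int.emod_nonneg m (ne_of_gt h0)
    omega⟩

lemma extSeq_finOf {L : ℕ} (hL : 0 < L) (θ : Fin L → ℝ) (m : ℤ) :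
    extSeq hL θ m = θ (finOf L hL m) + ((m / (L : ℤ) : ℤ) : ℝ) := rfl

lemma finOf_decomp (L : ℕ) (hL : 0 < L) (m : ℤ) :
    m = ((finOf L hL m : ℕ) : ℤ) + (L : ℤ) * (m / (L : ℤ)) := by
  have h0 : (0 : ℤ) < (L : ℤ) := by exact_mod_cast hL
  have h2 := Int.emod_nonneg m (ne_of_gt h0)
  have h3 := Int.mul_ediv_add_emod m (L : ℤ)
  simp only [finOf]
  rw [Int.toNat_of_nonneg h2]
  omega


lemma shift_exists (L : ℤ) (hL : 0 < L) (Θ Ω : ℤ → ℝ) (hΘm : Monotone Θ) (hΩm : Monotone Ω)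
    (hΘs : ∀ m q : ℤ, Θ (m + q * L) = Θ m + q) (hΩs : ∀ m q : ℤ, Ω (m + q * L) = Ω m + q)
    (N : ℤ → ℤ) (hNinj : Function.Injective N) (r : ℝ)
    (hNr : ∀ m, |Θ m - Ω (N m)| ≤ r) :
    ∃ p : ℤ, ∀ m, |Θ m - Ω (m + p)| ≤ r := by
  classical
  have hAex : ∀ m : ℤ, ∃ x : ℤ, (Θ m - r ≤ Ω x ∧ ∀ y, Θ m - r ≤ Ω y → x ≤ y) := by
    intro m
    apply Int.exists_least_of_bdd
    · refine ⟨-(⌈Ω 0 - (Θ m - r)⌉ + 1) * L + 1, fun z hz => ?_⟩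
      by_contra hlt
      push_neg at hlt
      have hmono : Ω z ≤ Ω (0 + (-(⌈Ω 0 - (Θ m - r)⌉ + 1)) * L) := hΩm (by omega)
      rw [hΩs 0 _] at hmono
      have hceil := Int.le_ceil (Ω 0 - (Θ m - r))
      push_cast at hmono
      linarith
    · refine ⟨⌈Θ m - r - Ω 0⌉ * L, ?_⟩
      have h := hΩs 0 ⌈Θ m - r - Ω 0⌉
      rw [zero_add] at h
      rw [h]
      have := Int.le_ceil (Θ m - r - Ω 0)
      linarith
  choose a ha₁ ha₂ using hAex
  have hBex : ∀ m : ℤ, ∃ x : ℤ, (Ω x ≤ Θ m + r ∧ ∀ y, Ω y ≤ Θ m + r → y ≤ x) := by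
    intro m
    apply Int.exists_greatest_of_bdd
    · refine ⟨(⌈Θ m + r - Ω 0⌉ + 1) * L, fun z hz => ?_⟩
      by_contra hlt
      push_neg at hlt
      have hmono : Ω (0 + (⌈Θ m + r - Ω 0⌉ + 1) * L) ≤ Ω z := hΩm (by omega)
      rw [hΩs 0 _] at hmono
      have hceil := Int.le_ceil (Θ m + r - Ω 0)
      push_cast at hmono
      linarith
    · refine ⟨-⌈Ω 0 - (Θ m + r)⌉ * L, ?_⟩
      have h := hΩs 0 (-⌈Ω 0 - (Θ m + r)⌉)
      rw [zero_add] at h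
      rw [h]
      have := Int.le_ceil (Ω 0 - (Θ m + r))
      push_cast
      linarith
  choose b hb₁ hb₂ using hBex
  have ham : Monotone a := fun m m' h => ha₂ m (a m') (by have := hΘm h; linarith [ha₁ m'])
  have hbm : Monotone b := fun m m' h => hb₂ m' (b m) (by have := hΘm h; linarith [hb₁ m])
  have haN : ∀ m, a m ≤ N m := fun m => ha₂ m (N m) (by have := abs_le.1 (hNr m); linarith [(hNr m)] )
  have hNb : ∀ m, N m ≤ b m := fun m => hb₂ m (N m) (by have := abs_le.1 (hNr m); linarith)
  have claim : ∀ i j : ℤ, i ≤ j → a i - i ≤ b j - j := by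
    intro i j hij
    have hmap : ∀ m ∈ Finset.Icc i j, N m ∈ Finset.Icc (a i) (b j) := by
      intro m hm
      rw [Finset.mem_Icc] at hm ⊢
      exact ⟨(ham hm.1).trans (haN m), (hNb m).trans (hbm hm.2)⟩
    have hcard := Finset.card_le_card_of_injOn N hmap (hNinj.injOn)
    rw [Int.card_Icc, Int.card_Icc] at hcard
    have hab : a i ≤ b j := (haN i).trans ((hNb i).trans (hbm hij))
    omega
  have has : ∀ m q : ℤ, a (m + q * L) = a m + q * L := by
    intro m q
    have h1 : a (m + q * L) ≤ a m + q * L := by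
      apply ha₂
      rw [hΩs, hΘs]
      have := ha₁ m
      linarith
    have h2 : a m ≤ a (m + q * L) - q * L := by
      apply ha₂
      have h3 := ha₁ (m + q * L)
      rw [hΘs] at h3
      have h4 : Ω (a (m + q * L) - q * L + q * L) = Ω (a (m + q * L) - q * L) + q := hΩs _ _
      rw [sub_add_cancel] at h4
      linarith
    omega
  have hbs : ∀ m q : ℤ, b (m + q * L) = b m + q * L := by
    intro m q
    have h1 : b m + q * L ≤ b (m + q * L) := by
      apply hb₂
      rw [hΩs, hΘs]
      have := hb₁ m
      linarith
    have h2 : b (m + q * L) - q * L ≤ b m := by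
      apply hb₂
      have h3 := hb₁ (m + q * L)
      rw [hΘs] at h3
      have h4 : Ω (b (m + q * L) - q * L + q * L) = Ω (b (m + q * L) - q * L) + q := hΩs _ _
      rw [sub_add_cancel] at h4
      linarith
    omega
  have hne : (Finset.Icc (0:ℤ) (L-1)).Nonempty := by rw [Finset.nonempty_Icc]; omega
  obtain ⟨s₀, hs₀mem, hs₀max⟩ := Finset.exists_max_image (Finset.Icc (0:ℤ) (L-1)) (fun s => a s - s) hne
  set p := a s₀ - s₀ with hp
  have hap : ∀ m : ℤ, a m - m ≤ p := by
    intro m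
    have h2 := Int.emod_nonneg m (ne_of_gt hL)
    have h1 := Int.emod_lt_of_pos m hL
    have h3 := Int.mul_ediv_add_emod m L
    have hm := has (m % L) (m / L)
    rw [show m % L + m / L * L = m by rw [mul_comm]; omega] at hm
    rw [mul_comm (m / L) L] at hm
    have := hs₀max (m % L) (by rw [Finset.mem_Icc]; omega)
    omega
  have hpb : ∀ m : ℤ, p ≤ b m - m := by
    intro m
    rw [Finset.mem_Icc] at hs₀mem
    set q : ℤ := -((m - s₀).natAbs : ℤ) with hq
    have hq0 : q ≤ 0 := by rw [hq]; simp [Int.natCast_nonneg]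
    have hq2 : q ≤ m - s₀ := by
      rw [hq]
      have := neg_abs_le (m - s₀)
      rwa [Int.abs_eq_natAbs] at this
    have hqle : q * L ≤ m - s₀ := by nlinarith
    have hc := claim (s₀ + q * L) m (by omega)
    rw [has] at hc
    omega
  refine ⟨p, fun m => ?_⟩
  rw [abs_le]
  constructor
  · have h1 : m + p ≤ b m := by have := hpb m; omega
    have h2 := hΩm h1
    have h3 := hb₁ m
    linarith
  · have h1 : a m ≤ m + p := by have := hap m; omega
    have h2 := hΩm h1
    have h3 := ha₁ m
    linarith

/-- the bottleneck matching distance between two unordered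
tuples on the circle is achieved by a cyclic shift of the sorted lifts. -/
theorem stmt_6 (L : ℕ) (hL : 0 < L) (θ ω : Fin L → ℝ)
    (hθm : Monotone θ) (hθ1 : ∀ j, θ j ≤ θ ⟨0, hL⟩ + 1)
    (hωm : Monotone ω) (hω1 : ∀ j, ω j ≤ ω ⟨0, hL⟩ + 1) :
    ∃ p : ℤ,
      (⨆ j : Fin L, |θ j -
        (ω ⟨((p + (j : ℕ)) % (L : ℤ)).toNat, by
              have h0 : (0 : ℤ) < (L : ℤ) := by exact_mod_cast hL
              have h1 := Int.emod_lt_of_pos (p + (j : ℕ)) h0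
              have h2 := Int.emod_nonneg (p + (j : ℕ)) (ne_of_gt h0)
              omega⟩
          + (((p + (j : ℕ)) / (L : ℤ) : ℤ) : ℝ))|) =
      ⨅ σ : Equiv.Perm (Fin L), ⨆ j : Fin L, circleDist (θ j) (ω (σ j)) := by
  classical
  haveI : Nonempty (Fin L) := ⟨⟨0, hL⟩⟩
  have h0 : (0 : ℤ) < (L : ℤ) := by exact_mod_cast hL
  obtain ⟨σ, hσmin⟩ := Finite.exists_min
    (fun σ : Equiv.Perm (Fin L) => (⨆ j : Fin L, circleDist (θ j) (ω (σ j)) : ℝ))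
  set r := ⨅ σ : Equiv.Perm (Fin L), ⨆ j : Fin L, circleDist (θ j) (ω (σ j)) with hrdef
  have hbddb : BddBelow (Set.range fun σ : Equiv.Perm (Fin L) =>
      ⨆ j : Fin L, circleDist (θ j) (ω (σ j))) := (Set.finite_range _).bddBelow
  have hr : r = ⨆ j : Fin L, circleDist (θ j) (ω (σ j)) :=
    le_antisymm (ciInf_le hbddb σ) (le_ciInf hσmin)
  have hmemr : ∀ j : Fin L, circleDist (θ j) (ω (σ j)) ≤ r := fun j => by
    rw [hr]
    exact le_ciSup (f := fun j : Fin L => circleDist (θ j) (ω (σ j)))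
      (Set.finite_range _).bddAbove j
  have hkex : ∀ j : Fin L, ∃ kk : ℤ, |θ j - ω (σ j) + (kk : ℝ)| ≤ r := fun j => by
    obtain ⟨kk, hkk⟩ := circleDist_exists (θ j) (ω (σ j))
    exact ⟨kk, hkk ▸ hmemr j⟩
  choose k hk using hkex
  have hΩn : ∀ j : Fin L, extSeq hL ω (((σ j : ℕ) : ℤ) + (L : ℤ) * (-(k j)))
      = ω (σ j) + ((-(k j) : ℤ) : ℝ) := fun j => by
    rw [extSeq_spec hL ω _ (-(k j)) (σ j : ℕ) (σ j).isLt rfl]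
  have hjn : ∀ j : Fin L, |θ j - extSeq hL ω (((σ j : ℕ) : ℤ) + (L : ℤ) * (-(k j)))| ≤ r :=
    fun j => by
    rw [hΩn j, show θ j - (ω (σ j) + ((-(k j) : ℤ) : ℝ))
        = θ j - ω (σ j) + (k j : ℝ) by push_cast; ring]
    exact hk j
  set N : ℤ → ℤ := fun m => ((σ (finOf L hL m) : ℕ) : ℤ) + (L : ℤ) * (-(k (finOf L hL m)))
      + (m / (L : ℤ)) * (L : ℤ) with hNdef
  have hNval : ∀ m : ℤ, N m = ((σ (finOf L hL m) : ℕ) : ℤ) + (L : ℤ) * (-(k (finOf L hL m)))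
      + (m / (L : ℤ)) * (L : ℤ) := fun m => by simp only [hNdef]
  have hNr : ∀ m : ℤ, |extSeq hL θ m - extSeq hL ω (N m)| ≤ r := fun m => by
    have e1 : extSeq hL θ m = θ (finOf L hL m) + ((m / (L : ℤ) : ℤ) : ℝ) := extSeq_finOf hL θ m
    have e2 : extSeq hL ω (N m)
        = extSeq hL ω (((σ (finOf L hL m) : ℕ) : ℤ) + (L : ℤ) * (-(k (finOf L hL m))))
          + ((m / (L : ℤ) : ℤ) : ℝ) := by
      rw [hNval m]
      exact extSeq_shift hL ω _ (m / (L : ℤ))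
    rw [e1, e2, show θ (finOf L hL m) + ((m / (L : ℤ) : ℤ) : ℝ)
        - (extSeq hL ω (((σ (finOf L hL m) : ℕ) : ℤ) + (L : ℤ) * (-(k (finOf L hL m))))
          + ((m / (L : ℤ) : ℤ) : ℝ))
        = θ (finOf L hL m)
          - extSeq hL ω (((σ (finOf L hL m) : ℕ) : ℤ) + (L : ℤ) * (-(k (finOf L hL m))))
        by ring]
    exact hjn (finOf L hL m)
  have hNmod : ∀ m : ℤ, N m % (L : ℤ) = ((σ (finOf L hL m) : ℕ) : ℤ)
      ∧ N m / (L : ℤ) = -(k (finOf L hL m)) + m / (L : ℤ) := fun m =>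
    emod_ediv_of_eq h0 (by rw [hNval m]; ring) (Int.natCast_nonneg _)
      (by exact_mod_cast (σ (finOf L hL m)).isLt)
  have hNinj : Function.Injective N := by
    intro m₁ m₂ hN
    have e1 := hNmod m₁
    have e2 := hNmod m₂
    have hmodeq : ((σ (finOf L hL m₁) : ℕ) : ℤ) = ((σ (finOf L hL m₂) : ℕ) : ℤ) := by
      rw [← e1.1, ← e2.1, hN]
    have hf : finOf L hL m₁ = finOf L hL m₂ := σ.injective (Fin.ext (by exact_mod_cast hmodeq))
    have hdeq : N m₁ / (L : ℤ) = N m₂ / (L : ℤ) := by rw [hN]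
    rw [e1.2, e2.2, hf] at hdeq
    have hq : m₁ / (L : ℤ) = m₂ / (L : ℤ) := by omega
    have hm1 := finOf_decomp L hL m₁
    have hm2 := finOf_decomp L hL m₂
    rw [hf, hq] at hm1
    exact hm1.trans hm2.symm
  obtain ⟨p, hkey⟩ := shift_exists (L : ℤ) h0 (extSeq hL θ) (extSeq hL ω)
    (extSeq_mono hL θ hθm hθ1) (extSeq_mono hL ω hωm hω1)
    (fun m q => extSeq_shift hL θ m q) (fun m q => extSeq_shift hL ω m q) N hNinj r hNr
  refine ⟨p, le_antisymm ?_ ?_⟩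
  · apply ciSup_le
    intro j
    show |θ j - extSeq hL ω (p + ((j : ℕ) : ℤ))| ≤ r
    rw [add_comm p ((j : ℕ) : ℤ)]
    have h := hkey ((j : ℕ) : ℤ)
    rwa [extSeq_coe hL θ j] at h
  · show r ≤ ⨆ j : Fin L, |θ j - extSeq hL ω (p + ((j : ℕ) : ℤ))|
    have hτinj : Function.Injective (fun j : Fin L => finOf L hL (p + ((j : ℕ) : ℤ))) := by
      intro i j hij
      simp only [finOf] at hij
      have h2i := Int.emod_nonneg (p + ((i : ℕ) : ℤ)) (ne_of_gt h0)
      have h2j := Int.emod_nonneg (p + ((j : ℕ) : ℤ)) (ne_of_gt h0)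
      have hvij := congrArg Fin.val hij
      simp only at hvij
      have hmodeq : (p + ((i : ℕ) : ℤ)) % (L : ℤ) = (p + ((j : ℕ) : ℤ)) % (L : ℤ) := by omega
      have e1 := Int.mul_ediv_add_emod (p + ((i : ℕ) : ℤ)) (L : ℤ)
      have e2 := Int.mul_ediv_add_emod (p + ((j : ℕ) : ℤ)) (L : ℤ)
      have hd : ((i : ℕ) : ℤ) - ((j : ℕ) : ℤ)
          = (L : ℤ) * ((p + ((i : ℕ) : ℤ)) / (L : ℤ) - (p + ((j : ℕ) : ℤ)) / (L : ℤ)) := by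
        rw [mul_sub]; omega
      have hiL : ((i : ℕ) : ℤ) < L := by exact_mod_cast i.isLt
      have hjL : ((j : ℕ) : ℤ) < L := by exact_mod_cast j.isLt
      set d := (p + ((i : ℕ) : ℤ)) / (L : ℤ) - (p + ((j : ℕ) : ℤ)) / (L : ℤ) with hdd
      have hd0 : d = 0 := by
        rcases lt_trichotomy d 0 with h | h | h
        · have hle : (L : ℤ) * d ≤ (L : ℤ) * (-1) := mul_le_mul_of_nonneg_left (by omega) h0.le
          omega
        · exact h
        · have hle : (L : ℤ) * 1 ≤ (L : ℤ) * d := mul_le_mul_of_nonneg_left (by omega) h0.le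
          omega
      rw [hd0, mul_zero] at hd
      have hvv : (i : ℕ) = (j : ℕ) := by omega
      exact Fin.ext hvv
    have hτbij := Finite.injective_iff_bijective.mp hτinj
    obtain ⟨τ, hτeq⟩ : ∃ τ : Equiv.Perm (Fin L), ∀ j, τ j = finOf L hL (p + ((j : ℕ) : ℤ)) :=
      ⟨Equiv.ofBijective _ hτbij, fun j => rfl⟩
    have step1 : r ≤ ⨆ j : Fin L, circleDist (θ j) (ω (τ j)) := by
      rw [hrdef]; exact ciInf_le hbddb τ
    apply step1.trans
    apply ciSup_le
    intro j
    have harg : extSeq hL ω (p + ((j : ℕ) : ℤ))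
        = ω (τ j) + (((p + ((j : ℕ) : ℤ)) / (L : ℤ) : ℤ) : ℝ) := by
      rw [extSeq_finOf hL ω, hτeq j]
    have hcd := circleDist_le (θ j) (ω (τ j)) (-((p + ((j : ℕ) : ℤ)) / (L : ℤ)))
    rw [show θ j - ω (τ j) + ((-((p + ((j : ℕ) : ℤ)) / (L : ℤ)) : ℤ) : ℝ)
        = θ j - (ω (τ j) + (((p + ((j : ℕ) : ℤ)) / (L : ℤ) : ℤ) : ℝ)) by push_cast; ring,
       ← harg] at hcd
    exact hcd.trans (le_ciSup (f := fun j : Fin L => |θ j - extSeq hL ω (p + ((j : ℕ) : ℤ))|)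
      (Set.finite_range _).bddAbove j)
end

section
/- Let A = {f ∈ C(𝕋, M_n(ℂ)) : f(x_i) ∈ M_{d_i}, i = 1,…,N} be a building block and set d = gcd(d₁,…,d_N). Then A contains a projection of rank r (with 0 ≤ r ≤ n) if and only if n/d divides r. In particular, A contains no projections other than 0 and 1 if and only if d = 1. -/
/-!
For an idempotent matrix the rank equals the trace, so a continuous projection-valued map on
a connected space has constant rank `r`. At `xᵢ` the projection is `diag(a, …, a)` with
`n / dᵢ` copies of a projection `a ∈ M_{dᵢ}`, hence `r = (n / dᵢ) · rank a`. Thus `n ∣ r dᵢ`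
for every `i`, i.e. `n ∣ r D` with `D = gcd dᵢ`. Conversely, the constant diagonal projection
with a `1` at the positions `j` with `j % D < s` lies in every `M_{dᵢ}` (its diagonal is
`D`-periodic) and has rank `(n / D) s`. For `D = 1` the only possible ranks are `0` and `n`;
for `D > 1` the rank `n / D` yields a projection other than `0` and `1`.
-/

/-- `M` lies in the unital copy of `M_d` inside `M_n`, embedded via
`a ↦ diag(a, a, …, a)` (`n/d` copies). -/
def IsBlockDiagRep (n d : ℕ) (M : Matrix (Fin n) (Fin n) ℂ) : Prop :=
  (∀ p q : Fin n, (p : ℕ) / d ≠ (q : ℕ) / d → M p q = 0) ∧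
  (∀ p q p' q' : Fin n, (p : ℕ) / d = (q : ℕ) / d → (p' : ℕ) / d = (q' : ℕ) / d →
    (p : ℕ) % d = (p' : ℕ) % d → (q : ℕ) % d = (q' : ℕ) % d → M p q = M p' q')

open Matrix Finset
open scoped Kronecker

namespace Matrix

variable {K m : Type*} [Field K] [Fintype m] [DecidableEq m] {M : Matrix m m K}

theorem trace_eq_rank_of_isIdempotentElem (hM : IsIdempotentElem M) : M.trace = M.rank := by
  have hM' : IsIdempotentElem (toLin' M) := hM.map (toLinAlgEquiv' (R := K))
  rw [rank, ← toLin'_apply', ← (LinearMap.IsIdempotentElem.isProj_range _ hM').trace,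
    trace_toLin'_eq]

variable [CharZero K]

theorem IsIdempotentElem.eq_zero_of_trace_eq_zero (hM : IsIdempotentElem M)
    (h : M.trace = 0) : M = 0 := by
  have hM' : IsIdempotentElem (toLin' M) := hM.map (toLinAlgEquiv' (R := K))
  apply toLin'.injective
  rw [map_zero]
  exact LinearMap.IsIdempotentElem.eq_zero_of_trace_eq_zero hM' (by rwa [trace_toLin'_eq])

theorem IsIdempotentElem.eq_zero_of_rank_eq_zero (hM : IsIdempotentElem M) (h : M.rank = 0) :
    M = 0 :=
  hM.eq_zero_of_trace_eq_zero <| by rw [trace_eq_rank_of_isIdempotentElem hM, h, Nat.cast_zero]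

theorem IsIdempotentElem.eq_one_of_rank_eq_card (hM : IsIdempotentElem M)
    (h : M.rank = Fintype.card m) : M = 1 := by
  have : 1 - M = 0 := hM.one_sub.eq_zero_of_trace_eq_zero <| by
    rw [trace_sub, trace_one, trace_eq_rank_of_isIdempotentElem hM, h, sub_self]
  exact (sub_eq_zero.mp this).symm

end Matrix

namespace ContinuousMap

variable {𝕜 X m : Type*} [RCLike 𝕜] [TopologicalSpace X] [PreconnectedSpace X]
  [Fintype m] [DecidableEq m]

theorem rank_eq_of_isIdempotentElem (p : C(X, Matrix m m 𝕜))
    (hp : ∀ z, IsIdempotentElem (p z)) (z w : X) : (p z).rank = (p w).rank := by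
  have hcont : Continuous fun z => (p z).rank := by
    rw [Nat.isClosedEmbedding_coe_real.continuous_iff]
    have : (fun z => ((p z).rank : ℝ)) = fun z => RCLike.re (p z).trace := by
      funext z
      rw [trace_eq_rank_of_isIdempotentElem (hp z), RCLike.natCast_re]
    rw [Function.comp_def, this]
    fun_prop
  exact PreconnectedSpace.constant inferInstance hcont

theorem eq_zero_or_eq_one_of_card_dvd_rank (p : C(X, Matrix m m 𝕜))
    (hp : ∀ z, IsIdempotentElem (p z)) (z₀ : X) (h : Fintype.card m ∣ (p z₀).rank) :
    p = 0 ∨ p = 1 := by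
  rcases Nat.eq_zero_or_pos (p z₀).rank with h₀ | hpos
  · exact .inl <| ext fun z =>
      (hp z).eq_zero_of_rank_eq_zero (by rw [p.rank_eq_of_isIdempotentElem hp z z₀, h₀])
  · have hfull : (p z₀).rank = Fintype.card m :=
      le_antisymm (rank_le_card_width _) (Nat.le_of_dvd hpos h)
    exact .inr <| ext fun z =>
      (hp z).eq_one_of_rank_eq_card (by rw [p.rank_eq_of_isIdempotentElem hp z z₀, hfull])

end ContinuousMap

theorem Finset.div_gcd_dvd_of_forall_div_dvd {ι : Type*} {s : Finset ι} {d : ι → ℕ}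
    {n r : ℕ} (hn : 0 < n) (hs : s.Nonempty) (hdvd : ∀ i ∈ s, d i ∣ n)
    (h : ∀ i ∈ s, n / d i ∣ r) :
    n / s.gcd d ∣ r := by
  obtain ⟨i₀, hi₀⟩ := hs
  have hD : s.gcd d ∣ n := (gcd_dvd hi₀).trans (hdvd i₀ hi₀)
  rw [Nat.div_dvd_iff_dvd_mul hD (Nat.pos_of_dvd_of_pos hD hn), ← normalize_eq r,
    ← gcd_mul_right]
  exact dvd_gcd fun i hi =>
    (Nat.div_dvd_iff_dvd_mul (hdvd i hi) (Nat.pos_of_dvd_of_pos (hdvd i hi) hn)).mp (h i hi)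

section Blocks

variable {n d : ℕ}

def blockEquiv (hd : d ∣ n) : Fin (n / d) × Fin d ≃ Fin n :=
  finProdFinEquiv.trans (finCongr (Nat.div_mul_cancel hd))

@[simp]
lemma blockEquiv_apply_val (hd : d ∣ n) (x : Fin (n / d) × Fin d) :
    (blockEquiv hd x : ℕ) = x.2 + d * x.1 := rfl

@[simp]
lemma blockEquiv_symm_apply_fst_val (hd : d ∣ n) (i : Fin n) :
    ((blockEquiv hd).symm i).1 = (i : ℕ) / d := Fin.coe_divNat _

@[simp]
lemma blockEquiv_symm_apply_snd_val (hd : d ∣ n) (i : Fin n) :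
    ((blockEquiv hd).symm i).2 = (i : ℕ) % d := Fin.coe_modNat _

theorem IsBlockDiagRep.exists_eq_reindex_kronecker (hn : 0 < n) (hd : d ∣ n)
    {M : Matrix (Fin n) (Fin n) ℂ} (hM : IsBlockDiagRep n d M) :
    ∃ a : Matrix (Fin d) (Fin d) ℂ,
      M = reindexAlgEquiv ℂ ℂ (blockEquiv hd) (1 ⊗ₖ a) := by
  have hd₀ : 0 < d := Nat.pos_of_dvd_of_pos hd hn
  let u₀ : Fin (n / d) := ⟨0, Nat.div_pos (Nat.le_of_dvd hn hd) hd₀⟩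
  refine ⟨of fun b c => M (blockEquiv hd (u₀, b)) (blockEquiv hd (u₀, c)), ?_⟩
  ext i j
  simp only [coe_reindexAlgEquiv, reindex_apply, submatrix_apply, kroneckerMap_apply, one_apply,
    of_apply]
  split_ifs with h
  · rw [one_mul]
    apply hM.2 <;>
      simp_all [Fin.ext_iff, Nat.mod_mod_of_dvd, u₀, Nat.div_eq_of_lt (Nat.mod_lt _ hd₀)]
  · rw [zero_mul]
    exact hM.1 i j (by simpa [Fin.ext_iff] using h)

theorem IsBlockDiagRep.div_dvd_rank (hn : 0 < n) (hd : d ∣ n) {M : Matrix (Fin n) (Fin n) ℂ}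
    (hM : IsBlockDiagRep n d M) (hidem : IsIdempotentElem M) : n / d ∣ M.rank := by
  obtain ⟨a, rfl⟩ := hM.exists_eq_reindex_kronecker hn hd
  let u₀ : Fin (n / d) := ⟨0, Nat.div_pos (Nat.le_of_dvd hn hd) (Nat.pos_of_dvd_of_pos hd hn)⟩
  have ha : IsIdempotentElem a := by
    have h : (1 ⊗ₖ a) * (1 ⊗ₖ a) = 1 ⊗ₖ a :=
      (reindexAlgEquiv ℂ ℂ (blockEquiv hd)).injective <| by rw [map_mul, hidem]
    rw [← mul_kronecker_mul, one_mul] at h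
    ext b c
    simpa using congr_fun₂ h (u₀, b) (u₀, c)
  refine ⟨a.rank, Nat.cast_injective (R := ℂ) ?_⟩
  rw [← trace_eq_rank_of_isIdempotentElem hidem, Nat.cast_mul,
    ← trace_eq_rank_of_isIdempotentElem ha, trace_map, trace_kronecker, trace_one,
    Fintype.card_fin]

theorem isBlockDiagRep_diagonal {f : Fin n → ℂ}
    (hf : ∀ i j : Fin n, (i : ℕ) % d = j % d → f i = f j) :
    IsBlockDiagRep n d (diagonal f) := by
  have eq_of_div_mod {i j : Fin n} (hdiv : (i : ℕ) / d = j / d) (hmod : (i : ℕ) % d = j % d) :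
      i = j := by
    rw [Fin.ext_iff, ← Nat.div_add_mod i d, ← Nat.div_add_mod j d, hdiv, hmod]
  refine ⟨fun p q h => diagonal_apply_ne _ fun hpq => h (by rw [hpq]), ?_⟩
  intro p q p' q' hpq hpq' hp hq
  by_cases h : p = q
  · subst h
    obtain rfl : p' = q' := eq_of_div_mod hpq' (hp ▸ hq)
    simp only [diagonal_apply_eq]
    exact hf p p' hp
  · have h' : p' ≠ q' := fun h' => h (eq_of_div_mod hpq (by rw [hp, hq, h']))
    rw [diagonal_apply_ne _ h, diagonal_apply_ne _ h']

theorem card_filter_mod_lt (hd : d ∣ n) {s : ℕ} (hs : s ≤ d) :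
    #{i : Fin n | (i : ℕ) % d < s} = n / d * s :=
  calc #{i : Fin n | (i : ℕ) % d < s}
      = #(univ ×ˢ ({b : Fin d | (b : ℕ) < s} : Finset (Fin d))) :=
        card_equiv (blockEquiv hd).symm (by simp)
    _ = n / d * s := by
        rw [card_product, Fin.card_filter_val_lt, card_univ, Fintype.card_fin, min_eq_right hs]

end Blocks

def modDiagProj (n D s : ℕ) : Matrix (Fin n) (Fin n) ℂ :=
  diagonal fun i => if (i : ℕ) % D < s then 1 else 0

section modDiagProj

variable {n d D s : ℕ}

lemma isIdempotentElem_modDiagProj : IsIdempotentElem (modDiagProj n D s) := by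
  simp [IsIdempotentElem, modDiagProj, diagonal_mul_diagonal]

lemma star_modDiagProj : star (modDiagProj n D s) = modDiagProj n D s := by
  simp [modDiagProj, star_eq_conjTranspose, diagonal_conjTranspose]

lemma rank_modDiagProj (hD : D ∣ n) (hs : s ≤ D) : (modDiagProj n D s).rank = n / D * s := by
  classical
  rw [modDiagProj, rank_diagonal, Fintype.card_subtype, ← card_filter_mod_lt hD hs]
  simp

lemma isBlockDiagRep_modDiagProj (hD : D ∣ d) : IsBlockDiagRep n d (modDiagProj n D s) :=
  isBlockDiagRep_diagonal fun i j h => by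
    rw [← Nat.mod_mod_of_dvd i hD, ← Nat.mod_mod_of_dvd j hD, h]

end modDiagProj

theorem ContinuousMap.div_gcd_dvd_rank {ι X : Type*} [Fintype ι] [Nonempty ι]
    [TopologicalSpace X] [PreconnectedSpace X] {n : ℕ} (hn : 0 < n) {d : ι → ℕ}
    (hdvd : ∀ i, d i ∣ n) {x : ι → X} (p : C(X, Matrix (Fin n) (Fin n) ℂ))
    (hp : ∀ i, IsBlockDiagRep n (d i) (p (x i))) (hidem : ∀ z, IsIdempotentElem (p z)) (z : X) :
    n / univ.gcd d ∣ (p z).rank :=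
  div_gcd_dvd_of_forall_div_dvd hn univ_nonempty (fun i _ => hdvd i) fun i _ =>
    p.rank_eq_of_isIdempotentElem hidem (x i) z ▸ (hp i).div_dvd_rank hn (hdvd i) (hidem _)

theorem stmt_10_general (n N : ℕ) (hn : 0 < n) (hN : 0 < N)
    (d : Fin N → ℕ) (hdvd : ∀ i, d i ∣ n)
    (x : Fin N → Circle) :
    (∀ r : ℕ, r ≤ n →
      ((∃ p : C(Circle, Matrix (Fin n) (Fin n) ℂ),
          (∀ i, IsBlockDiagRep n (d i) (p (x i))) ∧
          (∀ z, p z * p z = p z ∧ star (p z) = p z) ∧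
          (∀ z, (p z).rank = r)) ↔
        (n / Finset.univ.gcd d) ∣ r)) ∧
    ((∀ p : C(Circle, Matrix (Fin n) (Fin n) ℂ),
        (∀ i, IsBlockDiagRep n (d i) (p (x i))) →
        (∀ z, p z * p z = p z ∧ star (p z) = p z) →
        p = 0 ∨ p = 1) ↔ Finset.univ.gcd d = 1) := by
  have : Nonempty (Fin N) := ⟨⟨0, hN⟩⟩
  set D := univ.gcd d
  have hDd (i : Fin N) : D ∣ d i := gcd_dvd (mem_univ i)
  have hDn : D ∣ n := (hDd ⟨0, hN⟩).trans (hdvd _)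
  have hnD : 0 < n / D := Nat.div_pos (Nat.le_of_dvd hn hDn) (Nat.pos_of_dvd_of_pos hDn hn)
  have ranks (r : ℕ) (hr : r ≤ n) : (∃ p : C(Circle, Matrix (Fin n) (Fin n) ℂ),
      (∀ i, IsBlockDiagRep n (d i) (p (x i))) ∧
      (∀ z, p z * p z = p z ∧ star (p z) = p z) ∧ (∀ z, (p z).rank = r)) ↔ n / D ∣ r := by
    refine ⟨fun ⟨p, hp, hproj, hrank⟩ =>
      hrank 1 ▸ p.div_gcd_dvd_rank hn hdvd hp (fun z => (hproj z).1) 1, ?_⟩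
    rintro ⟨s, rfl⟩
    have hs : s ≤ D := Nat.le_of_mul_le_mul_left (by rwa [Nat.div_mul_cancel hDn]) hnD
    exact ⟨.const _ (modDiagProj n D s), fun i => isBlockDiagRep_modDiagProj (hDd i),
      fun _ => ⟨isIdempotentElem_modDiagProj, star_modDiagProj⟩,
      fun _ => rank_modDiagProj hDn hs⟩
  refine ⟨ranks, fun h => ?_, fun hD p hp hproj => ?_⟩
  · obtain ⟨p, hp, hproj, hrank⟩ := (ranks (n / D) (Nat.div_le_self n D)).2 dvd_rfl
    rcases h p hp hproj with rfl | rfl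
    · have h₀ : 0 = n / D := by simpa using hrank 1
      omega
    · have h₁ : n = n / D := by simpa using hrank 1
      exact (Nat.div_eq_self.mp h₁.symm).resolve_left hn.ne'
  · have h : n / D ∣ (p 1).rank := p.div_gcd_dvd_rank hn hdvd hp (fun z => (hproj z).1) 1
    rw [hD, Nat.div_one] at h
    exact p.eq_zero_or_eq_one_of_card_dvd_rank (fun z => (hproj z).1) 1 (by rwa [Fintype.card_fin])

/-- with `D = gcd(d₁,…,d_N)`, the building block
`A = {f ∈ C(𝕋, M_n) : f(xᵢ) ∈ M_{dᵢ}}` contains a projection of rank `r ≤ n`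
iff `n/D ∣ r`; in particular it contains no projections besides `0` and `1`
iff `D = 1`. -/
theorem stmt_10 (n N : ℕ) (hn : 0 < n) (hN : 0 < N)
    (d : Fin N → ℕ) (hd : ∀ i, 0 < d i) (hdvd : ∀ i, d i ∣ n)
    (x : Fin N → Circle) (hx : Function.Injective x) :
    (∀ r : ℕ, r ≤ n →
      ((∃ p : C(Circle, Matrix (Fin n) (Fin n) ℂ),
          (∀ i, IsBlockDiagRep n (d i) (p (x i))) ∧
          (∀ z, p z * p z = p z ∧ star (p z) = p z) ∧
          (∀ z, (p z).rank = r)) ↔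
        (n / Finset.univ.gcd d) ∣ r)) ∧
    ((∀ p : C(Circle, Matrix (Fin n) (Fin n) ℂ),
        (∀ i, IsBlockDiagRep n (d i) (p (x i))) →
        (∀ z, p z * p z = p z ∧ star (p z) = p z) →
        p = 0 ∨ p = 1) ↔ Finset.univ.gcd d = 1) :=
  stmt_10_general n N hn hN d hdvd x
end

section
/- Let K be a positive integer and H a finite abelian group. Then there exist a positive integer n and positive divisors d₁,…,d_M of n with gcd(d₁,…,d_M) = 1 and min(d₁,…,d_M) ≥ K, such that, setting s_k = lcm(n/d₁,…,n/d_k) and r_k = gcd(s_k, n/d_{k+1}) for k = 1,…,M−1, one has ℤ/r₁ ⊕ ⋯ ⊕ ℤ/r_{M−1} ≅ H. -/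
open scoped DirectSum

noncomputable def primeSeq (B : ℕ) : ℕ → ℕ
  | 0 => (Nat.exists_infinite_primes (B + 1)).choose
  | (j+1) => (Nat.exists_infinite_primes (primeSeq B j + 1)).choose

lemma primeSeq_prime (B j : ℕ) : (primeSeq B j).Prime := by
  cases j <;> exact (Nat.exists_infinite_primes _).choose_spec.2

lemma primeSeq_gt (B j : ℕ) : B < primeSeq B j := by
  induction j with
  | zero => exact (Nat.exists_infinite_primes (B + 1)).choose_spec.1
  | succ j ih =>
    exact ih.trans_le (Nat.le_of_succ_le
      (Nat.exists_infinite_primes (primeSeq B j + 1)).choose_spec.1)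

lemma primeSeq_strictMono (B : ℕ) : StrictMono (primeSeq B) := by
  apply strictMono_nat_of_lt_succ
  intro j
  exact (Nat.exists_infinite_primes (primeSeq B j + 1)).choose_spec.1

lemma stmt12_key (K : ℕ) (hK : 0 < K) (m : ℕ) (a : ℕ → ℕ) (ha : ∀ i, 0 < a i)
    (ha1 : ∀ i, m ≤ i → a i = 1) :
    ∃ (n : ℕ) (d : ℕ → ℕ), 0 < n ∧
      (∀ i < m + 2, 0 < d i ∧ d i ∣ n) ∧
      (Finset.range (m + 2)).gcd d = 1 ∧
      (∀ i < m + 2, K ≤ d i) ∧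
      (∀ k ≤ m, Nat.gcd ((Finset.range (k + 1)).lcm fun i => n / d i)
        (n / d (k + 1)) = a k) := by
  classical
  set P : ℕ := ∏ i ∈ Finset.range (m + 1), a i with hPdef
  have hP : 0 < P := Finset.prod_pos fun i _ => ha i
  set B : ℕ := max K P with hBdef
  set q : ℕ → ℕ := primeSeq B with hqdef
  have hq_pr : ∀ j, (q j).Prime := primeSeq_prime B
  have hq_pos : ∀ j, 0 < q j := fun j => (hq_pr j).pos
  have hq_gtP : ∀ j, P < q j := fun j => lt_of_le_of_lt (le_max_right K P) (primeSeq_gt B j)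
  have hq_geK : ∀ j, K ≤ q j := fun j => le_of_lt
    (lt_of_le_of_lt (le_max_left K P) (primeSeq_gt B j))
  have hq_inj : Function.Injective q := (primeSeq_strictMono B).injective
  have hq_ndvd_P : ∀ j, ¬ q j ∣ P := fun j h =>
    absurd (Nat.le_of_dvd hP h) (not_le.mpr (hq_gtP j))
  set Q : ℕ := ∏ j ∈ Finset.range (m + 2), q j with hQdef
  have hQpos : 0 < Q := Finset.prod_pos fun j _ => hq_pos j
  have hqdvdQ : ∀ j < m + 2, q j ∣ Q := fun j hj =>
    Finset.dvd_prod_of_mem q (Finset.mem_range.mpr hj)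
  have hadvdP : ∀ k, a k ∣ P := by
    intro k
    by_cases hk : k < m + 1
    · exact Finset.dvd_prod_of_mem a (Finset.mem_range.mpr hk)
    · rw [ha1 k (by omega)]; exact one_dvd P
  set n : ℕ := P * Q with hndef
  set d : ℕ → ℕ := fun i =>
    if i = 0 then ∏ j ∈ Finset.range (m + 1), q (j + 1)
    else (P / a (i - 1)) * (Q / q i) with hddef
  have hd0 : d 0 = ∏ j ∈ Finset.range (m + 1), q (j + 1) := if_pos rfl
  have hdsucc : ∀ k, d (k + 1) = (P / a k) * (Q / q (k + 1)) := fun k =>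
    if_neg (Nat.succ_ne_zero k)
  have hd0Q : d 0 * q 0 = Q := by
    rw [hd0, hQdef]; exact (Finset.prod_range_succ' q (m + 1)).symm
  have hPa_pos : ∀ k, 0 < P / a k := fun k =>
    Nat.div_pos (Nat.le_of_dvd hP (hadvdP k)) (ha k)
  have hQq_pos : ∀ j, j < m + 2 → 0 < Q / q j := fun j hj =>
    Nat.div_pos (Nat.le_of_dvd hQpos (hqdvdQ j hj)) (hq_pos j)
  have hd_pos : ∀ i < m + 2, 0 < d i := by
    intro i hi
    match i with
    | 0 => rw [hd0]; exact Finset.prod_pos fun j _ => hq_pos (j + 1)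
    | (k+1) => rw [hdsucc]; exact Nat.mul_pos (hPa_pos k) (hQq_pos (k + 1) hi)
  have hPa_dvd : ∀ k, P / a k ∣ P := fun k => Nat.div_dvd_of_dvd (hadvdP k)
  have hd_dvd : ∀ i < m + 2, d i ∣ n := by
    intro i hi
    match i with
    | 0 => exact dvd_mul_of_dvd_right ⟨q 0, hd0Q.symm⟩ P
    | (k+1) =>
      rw [hdsucc]
      exact mul_dvd_mul (hPa_dvd k) (Nat.div_dvd_of_dvd (hqdvdQ (k + 1) hi))
  have hnd0 : n / d 0 = P * q 0 := by
    have : n = (P * q 0) * d 0 := by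
      rw [hndef, ← hd0Q]; ring
    rw [this, Nat.mul_div_cancel _ (hd_pos 0 (by omega))]
  have hndsucc : ∀ k, k < m + 1 → n / d (k + 1) = a k * q (k + 1) := by
    intro k hk
    have h1 : a k * (P / a k) = P := Nat.mul_div_cancel' (hadvdP k)
    have h2 : q (k + 1) * (Q / q (k + 1)) = Q := Nat.mul_div_cancel' (hqdvdQ (k + 1) (by omega))
    have : n = (a k * q (k + 1)) * d (k + 1) := by
      rw [hdsucc k, hndef]
      conv_lhs => rw [← h1, ← h2]
      ring
    rw [this, Nat.mul_div_cancel _ (hd_pos (k + 1) (by omega))]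
  have hQ_erase : ∀ j < m + 2, Q / q j = ∏ i ∈ (Finset.range (m + 2)).erase j, q i := by
    intro j hj
    have h := Finset.prod_erase_mul (Finset.range (m + 2)) q (Finset.mem_range.mpr hj)
    rw [hQdef, ← h, Nat.mul_div_cancel _ (hq_pos j)]
  have hq_ndvd_erase : ∀ j, ¬ q j ∣ ∏ i ∈ (Finset.range (m + 2)).erase j, q i := by
    intro j hdvd
    obtain ⟨i, hi, hdvd'⟩ := ((hq_pr j).prime.dvd_finset_prod_iff q).mp hdvd
    have : j = i := hq_inj ((Nat.prime_dvd_prime_iff_eq (hq_pr j) (hq_pr i)).mp hdvd')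
    exact (Finset.ne_of_mem_erase hi) this.symm
  refine ⟨n, d, Nat.mul_pos hP hQpos, fun i hi => ⟨hd_pos i hi, hd_dvd i hi⟩, ?_, ?_, ?_⟩
  · -- gcd = 1
    rw [Nat.eq_one_iff_not_exists_prime_dvd]
    intro r hr hrg
    have hrd0 : r ∣ d 0 := dvd_trans hrg (Finset.gcd_dvd (Finset.mem_range.mpr (by omega)))
    rw [hd0] at hrd0
    obtain ⟨j, hj, hrq⟩ := (hr.prime.dvd_finset_prod_iff _).mp hrd0
    have hreq : r = q (j + 1) := (Nat.prime_dvd_prime_iff_eq hr (hq_pr (j + 1))).mp hrq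
    have hjm : j < m + 1 := Finset.mem_range.mp hj
    have hrdj : r ∣ d (j + 1) := dvd_trans hrg
      (Finset.gcd_dvd (Finset.mem_range.mpr (by omega)))
    rw [hdsucc] at hrdj
    rcases (Nat.Prime.dvd_mul hr).mp hrdj with h | h
    · exact hq_ndvd_P (j + 1) (hreq ▸ h.trans (hPa_dvd j))
    · rw [hQ_erase (j + 1) (by omega)] at h
      exact hq_ndvd_erase (j + 1) (hreq ▸ h)
  · -- K ≤ d i
    intro i hi
    match i with
    | 0 =>
      have : q 1 ∣ d 0 := by
        rw [hd0]
        exact Finset.dvd_prod_of_mem (fun j => q (j + 1)) (Finset.mem_range.mpr (by omega))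
      exact le_trans (hq_geK 1) (Nat.le_of_dvd (hd_pos 0 (by omega)) this)
    | (k+1) =>
      have hq0 : q 0 ∣ Q / q (k + 1) := by
        rw [hQ_erase (k + 1) hi]
        exact Finset.dvd_prod_of_mem q
          (Finset.mem_erase.mpr ⟨(by omega : (0:ℕ) ≠ k + 1), Finset.mem_range.mpr (by omega)⟩)
      have h1 : K ≤ Q / q (k + 1) :=
        le_trans (hq_geK 0) (Nat.le_of_dvd (hQq_pos (k + 1) hi) hq0)
      calc K ≤ Q / q (k + 1) := h1
        _ ≤ (P / a k) * (Q / q (k + 1)) := Nat.le_mul_of_pos_left _ (hPa_pos k)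
        _ = d (k + 1) := (hdsucc k).symm
  · -- gcd(s_k, n/d(k+1)) = a k
    intro k hk
    set L : ℕ := (Finset.range (k + 1)).lcm fun i => n / d i with hLdef
    have hndk : n / d (k + 1) = a k * q (k + 1) := hndsucc k (by omega)
    have haL : a k ∣ L := by
      have h0 : n / d 0 ∣ L := Finset.dvd_lcm (Finset.mem_range.mpr (by omega))
      rw [hnd0] at h0
      exact dvd_trans (dvd_mul_of_dvd_left (hadvdP k) (q 0)) h0
    have hLT : L ∣ P * ∏ j ∈ Finset.range (k + 1), q j := by
      apply Finset.lcm_dvd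
      intro i hi
      have hik : i < k + 1 := Finset.mem_range.mp hi
      match i with
      | 0 =>
        rw [hnd0]
        exact mul_dvd_mul_left P (Finset.dvd_prod_of_mem q (Finset.mem_range.mpr (by omega)))
      | (t+1) =>
        rw [hndsucc t (by omega)]
        exact mul_dvd_mul (hadvdP t) (Finset.dvd_prod_of_mem q (Finset.mem_range.mpr hik))
    have hcop : Nat.Coprime (q (k + 1)) (P * ∏ j ∈ Finset.range (k + 1), q j) := by
      rw [Nat.Prime.coprime_iff_not_dvd (hq_pr (k + 1))]
      intro hdvd
      rcases (Nat.Prime.dvd_mul (hq_pr (k + 1))).mp hdvd with h | h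
      · exact hq_ndvd_P (k + 1) h
      · obtain ⟨j, hj, hdvd'⟩ := ((hq_pr (k + 1)).prime.dvd_finset_prod_iff q).mp h
        have : k + 1 = j :=
          hq_inj ((Nat.prime_dvd_prime_iff_eq (hq_pr (k + 1)) (hq_pr j)).mp hdvd')
        have := Finset.mem_range.mp hj
        omega
    apply Nat.dvd_antisymm
    · have hgL : Nat.gcd L (n / d (k + 1)) ∣ L := Nat.gcd_dvd_left _ _
      have hgcop : Nat.Coprime (Nat.gcd L (n / d (k + 1))) (q (k + 1)) :=
        Nat.Coprime.coprime_dvd_left (hgL.trans hLT) hcop.symm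
      have hg2 : Nat.gcd L (n / d (k + 1)) ∣ a k * q (k + 1) := by
        rw [← hndk]; exact Nat.gcd_dvd_right _ _
      exact Nat.Coprime.dvd_of_dvd_mul_right hgcop hg2
    · exact Nat.dvd_gcd haL (by rw [hndk]; exact dvd_mul_right _ _)

def zmodCongr {p q : ℕ} (h : p = q) : ZMod p ≃+ ZMod q := by subst h; exact AddEquiv.refl _

def dropLast (f : ℕ → ℕ) (m : ℕ) (h1 : f m = 1) :
    (∀ k : Fin (m+1), ZMod (f k)) ≃+ (∀ k : Fin m, ZMod (f k)) where
  toFun g k := g k.castSucc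
  invFun g k := if h' : (k : ℕ) < m then g ⟨k, h'⟩ else 0
  left_inv g := by
    funext k
    dsimp only
    by_cases h' : (k : ℕ) < m
    · rw [dif_pos h']
      rfl
    · rw [dif_neg h']
      have hk : (k : ℕ) = m := le_antisymm (Nat.lt_succ_iff.mp k.isLt) (not_lt.mp h')
      have : Subsingleton (ZMod (f k)) := by rw [hk, h1]; infer_instance
      exact Subsingleton.elim _ _
  right_inv g := by
    funext k
    dsimp only
    simp only [Fin.coe_castSucc]
    rw [dif_pos k.isLt]
  map_add' g h := rfl

/-- for every `K` and every finite abelian group `H` there are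
`n` and divisors `d₁,…,d_M` of `n` with `gcd(d₁,…,d_M) = 1` and all `dᵢ ≥ K`,
such that `ℤ/r₁ ⊕ ⋯ ⊕ ℤ/r_{M-1} ≅ H`, where
`s_k = lcm(n/d₁,…,n/d_k)` and `r_k = gcd(s_k, n/d_{k+1})`.  (This is the
number-theoretic core of the existence of unital projectionless building
blocks with `K₁ ≅ ℤ ⊕ H`.) -/
theorem stmt_12 (K : ℕ) (hK : 0 < K) (H : Type*) [AddCommGroup H] [Finite H] :
    ∃ (M n : ℕ) (d : ℕ → ℕ), 2 ≤ M ∧ 0 < n ∧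
      (∀ i < M, 0 < d i ∧ d i ∣ n) ∧
      (Finset.range M).gcd d = 1 ∧
      (∀ i < M, K ≤ d i) ∧
      Nonempty ((∀ k : Fin (M - 1),
        ZMod (Nat.gcd ((Finset.range ((k : ℕ) + 1)).lcm fun i => n / d i)
          (n / d ((k : ℕ) + 1)))) ≃+ H) := by
  classical
  obtain ⟨ι, hι, b, hb1, ⟨e1⟩⟩ := AddCommGroup.equiv_directSum_zmod_of_finite' H
  haveI := hι
  set m : ℕ := Fintype.card ι with hmdef
  set σ : Fin m ≃ ι := (Fintype.equivFin ι).symm with hσdef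
  set a : ℕ → ℕ := fun i => if h : i < m then b (σ ⟨i, h⟩) else 1 with hadef
  have ha : ∀ i, 0 < a i := by
    intro i
    by_cases h : i < m
    · simp only [hadef, dif_pos h]
      exact lt_trans Nat.zero_lt_one (hb1 _)
    · simp only [hadef, dif_neg h]
      exact Nat.zero_lt_one
  have ha1 : ∀ i, m ≤ i → a i = 1 := by
    intro i hi
    simp only [hadef, dif_neg (not_lt.mpr hi)]
  obtain ⟨n, d, hn, hdiv, hgcd, hKd, hr⟩ := stmt12_key K hK m a ha ha1
  refine ⟨m + 2, n, d, by omega, hn, hdiv, hgcd, hKd, ⟨?_⟩⟩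
  have e2 : (⨁ i : ι, ZMod (b i)) ≃+ (∀ i : ι, ZMod (b i)) :=
    AddEquiv.mk DFinsupp.equivFunOnFintype (fun f g => rfl)
  have e3 : (∀ k : Fin m, ZMod (b (σ k))) ≃+ (∀ i : ι, ZMod (b i)) :=
    (RingEquiv.piCongrLeft (fun i => ZMod (b i)) σ).toAddEquiv
  have e4 : (∀ k : Fin m, ZMod (a k)) ≃+ (∀ k : Fin m, ZMod (b (σ k))) :=
    AddEquiv.piCongrRight fun k => zmodCongr (by
      simp only [hadef, dif_pos k.isLt])
  have e5 : (∀ k : Fin (m + 1), ZMod (a k)) ≃+ (∀ k : Fin m, ZMod (a k)) :=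
    dropLast a m (ha1 m le_rfl)
  have e6 : (∀ k : Fin (m + 2 - 1),
      ZMod (Nat.gcd ((Finset.range ((k : ℕ) + 1)).lcm fun i => n / d i)
        (n / d ((k : ℕ) + 1)))) ≃+ (∀ k : Fin (m + 1), ZMod (a k)) :=
    AddEquiv.piCongrRight fun k => zmodCongr (hr k (Nat.lt_succ_iff.mp k.isLt))
  exact e6.trans (e5.trans (e4.trans (e3.trans (e2.symm.trans e1.symm))))
end

section
/- Let A = {f ∈ C(𝕋, M_n(ℂ)) : f(x_i) ∈ M_{d_i}, i = 1,…,N} be a building block with exceptional points x₁,…,x_N. Let g : 𝕋 → 𝕋 be continuous and let h₁,…,h_N ∈ 𝕋 satisfy h_i^{n/d_i} = g(x_i) for each i. Then there exists a unitary u ∈ A such that det(u(z)) = g(z) for all z ∈ 𝕋 and det(Λ_i(u)) = h_i for i = 1,…,N. -/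
/-!
Take `u` diagonal, `u z = diag (λ₁ z, …, λₙ z)` with `λⱼ : 𝕋 → 𝕋` continuous. At `xᵢ` prescribe
the diagonal `(hᵢ, 1, …, 1)` repeated `n / dᵢ` times: it lies in `M_{dᵢ}`, its `Λᵢ`-determinant
is `hᵢ`, and its full determinant is `hᵢ ^ (n / dᵢ) = g xᵢ`. Circle-valued maps with prescribed
values at finitely many points exist (lift to angles and extend by Tietze). Replacing one of them
by `g` times the inverse of the product of the others makes `∏ⱼ λⱼ = g` everywhere, and by the
compatibility condition this does not change its values at the `xᵢ`.
-/

open Finset Matrix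

theorem Circle.coe_prod {ι : Type*} (s : Finset ι) (f : ι → Circle) :
    ((∏ i ∈ s, f i : Circle) : ℂ) = ∏ i ∈ s, (f i : ℂ) :=
  map_prod Circle.coeHom f s

theorem ContinuousMap.exists_apply_eq_of_injective {X ι : Type*} [TopologicalSpace X] [T1Space X]
    [NormalSpace X] [Finite ι] {x : ι → X} (hx : Function.Injective x) (a : ι → ℝ) :
    ∃ F : C(X, ℝ), ∀ i, F (x i) = a i := by
  let f : C(Set.range x, ℝ) := ⟨a ∘ (Equiv.ofInjective x hx).symm, continuous_of_discreteTopology⟩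
  obtain ⟨F, hF⟩ := ContinuousMap.exists_restrict_eq (Set.finite_range x).isClosed f
  refine ⟨F, fun i => ?_⟩
  simpa [f, Equiv.apply_ofInjective_symm] using congr($hF ⟨x i, i, rfl⟩)

theorem ContinuousMap.exists_circle_apply_eq_of_injective {X ι : Type*} [TopologicalSpace X]
    [T1Space X] [NormalSpace X] [Finite ι] {x : ι → X} (hx : Function.Injective x)
    (v : ι → Circle) : ∃ f : C(X, Circle), ∀ i, f (x i) = v i := by
  choose θ hθ using fun i => Circle.exp_surjective (v i)
  obtain ⟨F, hF⟩ := ContinuousMap.exists_apply_eq_of_injective hx θ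
  exact ⟨Circle.exp.comp F, fun i => by simp [hF, hθ]⟩

theorem ContinuousMap.exists_circle_prod_eq {X ι κ : Type*} [TopologicalSpace X]
    [T1Space X] [NormalSpace X] [Finite ι] [Fintype κ] [Nonempty κ] {x : ι → X}
    (hx : Function.Injective x) (g : C(X, Circle)) (v : ι → κ → Circle)
    (hv : ∀ i, ∏ k, v i k = g (x i)) :
    ∃ f : κ → C(X, Circle), ∏ k, f k = g ∧ ∀ i k, f k (x i) = v i k := by
  classical
  choose μ hμ using fun k => ContinuousMap.exists_circle_apply_eq_of_injective hx (v · k)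
  obtain ⟨k₀⟩ := ‹Nonempty κ›
  refine ⟨Function.update μ k₀ (g * (∏ k ∈ univ.erase k₀, μ k)⁻¹), ?_, fun i k => ?_⟩
  · rw [prod_update_of_mem (mem_univ k₀), sdiff_singleton_eq_erase, inv_mul_cancel_right]
  · obtain rfl | hk := eq_or_ne k k₀
    · simp only [Function.update_self, ContinuousMap.mul_apply, ContinuousMap.inv_apply,
        ContinuousMap.prod_apply, hμ, ← hv i, ← mul_prod_erase univ (v i) (mem_univ k),
        mul_inv_cancel_right]
    · simp [Function.update_of_ne hk, hμ]

theorem Fin.prod_ite_mod_eq_zero {M : Type*} [CommMonoid M] {n d : ℕ} (hd : d ∣ n) (a : M) :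
    ∏ j : Fin n, (if (j : ℕ) % d = 0 then a else 1) = a ^ (n / d) := by
  rcases Nat.eq_zero_or_pos d with rfl | hd₀
  · obtain rfl := Nat.eq_zero_of_zero_dvd hd
    simp
  have hcount : #{j ∈ range n | j % d = 0} = n / d := by
    have := Nat.count_modEq_card n hd₀ 0
    rw [Nat.count_eq_card_filter_range, Nat.mod_eq_zero_of_dvd hd, Nat.zero_mod,
      if_neg (lt_irrefl _), add_zero] at this
    convert this using 4
    rw [Nat.ModEq, Nat.zero_mod]
  rw [Fin.prod_univ_eq_prod_range (fun j => if j % d = 0 then a else 1), prod_ite,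
    Finset.prod_const, prod_const_one, mul_one, hcount]

theorem isBlockDiagRep_diagonal_s14 {n d : ℕ} (D : Fin n → ℂ)
    (hD : ∀ p q : Fin n, (p : ℕ) % d = (q : ℕ) % d → D p = D q) :
    IsBlockDiagRep n d (diagonal D) := by
  refine ⟨fun p q hpq => diagonal_apply_ne _ (by rintro rfl; exact hpq rfl),
    fun p q p' q' hpq hpq' hp hq => ?_⟩
  have hiff : p = q ↔ p' = q' := by
    simp only [Fin.ext_iff, Nat.ext_div_mod_iff d (p : ℕ), Nat.ext_div_mod_iff d (p' : ℕ), hpq,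
      hpq', hp, hq]
  by_cases h : p = q
  · obtain rfl := h
    obtain rfl := hiff.1 rfl
    simpa using hD p p' hp
  · rw [diagonal_apply_ne _ h, diagonal_apply_ne _ (hiff.not.1 h)]

theorem diagonal_circle_mem_unitary {κ : Type*} [Fintype κ] [DecidableEq κ] (D : κ → Circle) :
    diagonal (fun k => (D k : ℂ)) ∈ unitary (Matrix κ κ ℂ) := by
  have hD : (fun k => star (D k : ℂ)) * (fun k => (D k : ℂ)) = 1 := by
    ext k; simp [Complex.conj_mul', Circle.norm_coe]
  rw [mem_unitaryGroup_iff', star_eq_conjTranspose, diagonal_conjTranspose,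
    diagonal_mul_diagonal, ← diagonal_one]
  exact congrArg diagonal hD

theorem stmt_14_general (n N : ℕ) (hn : 0 < n)
    (d : Fin N → ℕ) (hdvd : ∀ i, d i ∣ n)
    (x : Fin N → Circle) (hx : Function.Injective x)
    (g : C(Circle, ℂ)) (hg : ∀ z, ‖g z‖ = 1)
    (h : Fin N → ℂ) (hh : ∀ i, ‖h i‖ = 1)
    (hcompat : ∀ i, h i ^ (n / d i) = g (x i)) :
    ∃ u : C(Circle, Matrix (Fin n) (Fin n) ℂ),
      (∀ i, IsBlockDiagRep n (d i) (u (x i))) ∧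
      (∀ z, u z * star (u z) = 1 ∧ star (u z) * u z = 1) ∧
      (∀ z, (u z).det = g z) ∧
      (∀ i, ((u (x i)).submatrix
          (Fin.castLE (Nat.le_of_dvd hn (hdvd i)))
          (Fin.castLE (Nat.le_of_dvd hn (hdvd i)))).det = h i) := by
  have : Nonempty (Fin n) := ⟨⟨0, hn⟩⟩
  let g' : C(Circle, Circle) := ⟨fun z => ⟨g z, mem_sphere_zero_iff_norm.2 (hg z)⟩,
    g.continuous.subtype_mk _⟩
  let h' (i : Fin N) : Circle := ⟨h i, mem_sphere_zero_iff_norm.2 (hh i)⟩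
  let v (i : Fin N) (j : Fin n) : Circle := if (j : ℕ) % d i = 0 then h' i else 1
  have hv : ∀ i, ∏ j, v i j = g' (x i) := fun i => by
    rw [Fin.prod_ite_mod_eq_zero (hdvd i)]
    exact Circle.ext (hcompat i)
  obtain ⟨f, hfg, hfx⟩ := ContinuousMap.exists_circle_prod_eq hx g' v hv
  refine ⟨⟨fun z => diagonal fun j => (f j z : ℂ), by fun_prop⟩, fun i => ?_, fun z => ?_,
    fun z => ?_, fun i => ?_⟩
  · simp only [ContinuousMap.coe_mk, hfx]
    exact isBlockDiagRep_diagonal_s14 _ fun p q hpq => by simp only [v, hpq]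
  · exact ⟨Unitary.mul_star_self_of_mem (diagonal_circle_mem_unitary _),
      Unitary.star_mul_self_of_mem (diagonal_circle_mem_unitary _)⟩
  · simp only [ContinuousMap.coe_mk, det_diagonal]
    rw [← Circle.coe_prod, ← ContinuousMap.prod_apply, hfg]
    rfl
  · have hd : 0 < d i := Nat.pos_of_dvd_of_pos (hdvd i) hn
    simp only [ContinuousMap.coe_mk, submatrix_diagonal _ _ (Fin.castLE_injective _), det_diagonal,
      Function.comp_apply, hfx, v, Fin.val_castLE]
    rw [← Circle.coe_prod, Fin.prod_ite_mod_eq_zero dvd_rfl, Nat.div_self hd, pow_one]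

/-- given a continuous `g : 𝕋 → 𝕋` and `hᵢ ∈ 𝕋` with
`hᵢ^{n/dᵢ} = g(xᵢ)`, there is a unitary `u` in the building block
`A = {f ∈ C(𝕋, M_n) : f(xᵢ) ∈ M_{dᵢ}}` with `det(u(z)) = g(z)` for all `z`
and `det(Λᵢ(u)) = hᵢ` for all `i`. -/
theorem stmt_14 (n N : ℕ) (hn : 0 < n) (hN : 0 < N)
    (d : Fin N → ℕ) (hd : ∀ i, 0 < d i) (hdvd : ∀ i, d i ∣ n)
    (x : Fin N → Circle) (hx : Function.Injective x)
    (g : C(Circle, ℂ)) (hg : ∀ z, ‖g z‖ = 1)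
    (h : Fin N → ℂ) (hh : ∀ i, ‖h i‖ = 1)
    (hcompat : ∀ i, h i ^ (n / d i) = g (x i)) :
    ∃ u : C(Circle, Matrix (Fin n) (Fin n) ℂ),
      (∀ i, IsBlockDiagRep n (d i) (u (x i))) ∧
      (∀ z, u z * star (u z) = 1 ∧ star (u z) * u z = 1) ∧
      (∀ z, (u z).det = g z) ∧
      (∀ i, ((u (x i)).submatrix
          (Fin.castLE (Nat.le_of_dvd hn (hdvd i)))
          (Fin.castLE (Nat.le_of_dvd hn (hdvd i)))).det = h i) :=
  stmt_14_general n N hn d hdvd x hx g hg h hh hcompat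
end

section
/- Let N ≥ 2, n ≥ 1, d₁,…,d_N divisors of n, and let G be the abelian group with generators g₁,…,g_N and relations (n/d_i)g_i = (n/d_N)g_N for i = 1,…,N−1. Then for integers a₁,…,a_N one has a₁g₁ + ⋯ + a_N g_N = 0 in G if and only if there exist integers b₁,…,b_N with b₁ + ⋯ + b_N = 0 and a_i = b_i·(n/d_i) for each i. -/
/-- in the abelian group `G` presented by generators
`g₁, …, g_N` and relations `(n/dᵢ)gᵢ = (n/d_N)g_N` — realized as
`ℤ^N / R` with `R` the subgroup generated by the relation vectors —
one has `a₁g₁ + ⋯ + a_N g_N = 0` iff there are integers `bᵢ` with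
`∑ bᵢ = 0` and `aᵢ = bᵢ · (n/dᵢ)`. -/
theorem stmt_15 (N n : ℕ) (hN : 2 ≤ N) (hn : 0 < n)
    (d : Fin N → ℕ) (hd : ∀ i, 0 < d i) (hdvd : ∀ i, d i ∣ n)
    (a : Fin N → ℤ) :
    a ∈ AddSubgroup.closure
        {v : Fin N → ℤ | ∃ i : Fin N,
          v = ((n / d i : ℕ) : ℤ) • Pi.single i (1 : ℤ) -
              ((n / d ⟨N - 1, by omega⟩ : ℕ) : ℤ) •
                Pi.single (⟨N - 1, by omega⟩ : Fin N) (1 : ℤ)} ↔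
      ∃ b : Fin N → ℤ, (∑ i, b i) = 0 ∧ ∀ i, a i = b i * ((n / d i : ℕ) : ℤ) := by
  set L : Fin N := ⟨N - 1, by omega⟩ with hLdef
  set m : Fin N → ℤ := fun i => ((n / d i : ℕ) : ℤ) with hm
  constructor
  · intro h
    induction h using AddSubgroup.closure_induction with
    | mem v hv =>
      obtain ⟨i, rfl⟩ := hv
      refine ⟨Pi.single i 1 - Pi.single L 1, by simp, fun j => ?_⟩
      simp only [Pi.sub_apply, Pi.smul_apply, smul_eq_mul, sub_mul,
        Pi.single_apply]
      split_ifs <;> simp_all <;> ring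
    | zero => exact ⟨0, by simp⟩
    | add x y hx hy ihx ihy =>
      obtain ⟨b, hb, hab⟩ := ihx
      obtain ⟨c, hc, hac⟩ := ihy
      exact ⟨b + c, by simp [Finset.sum_add_distrib, hb, hc],
        fun i => by simp [hab i, hac i, add_mul]⟩
    | neg x hx ihx =>
      obtain ⟨b, hb, hab⟩ := ihx
      exact ⟨-b, by simp [hb], fun i => by simp [hab i]⟩
  · rintro ⟨b, hb, hab⟩
    have ha : a = ∑ i, b i • (m i • Pi.single i (1 : ℤ) - m L • Pi.single L (1 : ℤ)) := by
      funext j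
      simp only [Finset.sum_apply, Pi.smul_apply, Pi.sub_apply, smul_eq_mul,
        mul_sub, Pi.single_apply]
      rw [Finset.sum_sub_distrib]
      have h1 : ∑ i, b i * (m i * if j = i then (1:ℤ) else 0) = b j * m j := by
        rw [Finset.sum_eq_single j] <;> simp +contextual [eq_comm]
      have h2 : ∑ i, b i * (m L * if j = L then (1:ℤ) else 0)
          = (∑ i, b i) * (m L * if j = L then (1:ℤ) else 0) := by
        rw [Finset.sum_mul]
      rw [h1, h2, hb, hab j]
      ring
    rw [ha]
    refine AddSubgroup.sum_mem _ fun i _ => AddSubgroup.zsmul_mem _ ?_ _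
    exact AddSubgroup.subset_closure ⟨i, rfl⟩
end

section
/- Let N ≥ 2, n ≥ 1, and d₁,…,d_N be divisors of n, and let G be the abelian group presented by generators g₁,…,g_N and relations (n/d_i)g_i = (n/d_N)g_N for all i. Similarly let M ≥ 2, m ≥ 1, e₁,…,e_M divisors of m and H the analogously presented group with generators h₁,…,h_M. Then for any group homomorphism φ : H → G there exist uniquely determined integers φ_{ji} (j = 1,…,M, i = 1,…,N) with 0 ≤ φ_{ji} < n/d_i for i ≠ N, such that φ(h_j) = Σ_{i=1}^N φ_{ji} g_i for every j. Moreover these integers satisfy (m/e_j)φ_{ji} ≡ (m/e_M)φ_{Mi} (mod n/d_i) for all i, j, and (m/e_j)Σ_{i=1}^N φ_{ji} d_i = (m/e_M)Σ_{i=1}^N φ_{Mi} d_i for all j. -/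
/-- The subgroup of relations `(c i)·eᵢ = (c i₀)·e_{i₀}` in `ℤ^N`. -/
def relSubgroup (N : ℕ) (c : Fin N → ℕ) (i0 : Fin N) : AddSubgroup (Fin N → ℤ) :=
  AddSubgroup.closure
    {v | ∃ i : Fin N, v = ((c i : ℕ) : ℤ) • Pi.single i (1 : ℤ) -
        ((c i0 : ℕ) : ℤ) • Pi.single i0 (1 : ℤ)}

namespace Stmt16

lemma mem_rel {N : ℕ} (c : Fin N → ℕ) (i0 : Fin N) (t : Fin N → ℤ)
    (ht : ∑ i, t i = 0) : (fun k => t k * (c k : ℤ)) ∈ relSubgroup N c i0 := by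
  have key : (fun k => t k * (c k : ℤ)) =
      ∑ i : Fin N, t i • (((c i : ℕ) : ℤ) • Pi.single i (1:ℤ) -
        ((c i0 : ℕ) : ℤ) • Pi.single i0 (1:ℤ)) := by
    funext k
    simp only [Finset.sum_apply, Pi.smul_apply, Pi.sub_apply, Pi.single_apply,
      smul_eq_mul, mul_sub, mul_ite, mul_one, mul_zero]
    rw [Finset.sum_sub_distrib]
    rw [Finset.sum_ite_eq Finset.univ k (fun i => t i * (c i : ℤ))]
    simp only [Finset.mem_univ, if_true]
    rcases eq_or_ne k i0 with h | h
    · simp [h, ← Finset.sum_mul, ht]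
    · simp [h]
  rw [key]
  refine sum_mem fun i _ => AddSubgroup.zsmul_mem _ (AddSubgroup.subset_closure ?_) _
  exact ⟨i, rfl⟩

lemma rel_le {N n : ℕ} (c d : Fin N → ℕ) (i0 : Fin N) (hcd : ∀ i, c i * d i = n)
    (v : Fin N → ℤ) (hv : v ∈ relSubgroup N c i0) :
    (∀ i, ((c i : ℕ) : ℤ) ∣ v i) ∧ ∑ i, v i * (d i : ℤ) = 0 := by
  let S : AddSubgroup (Fin N → ℤ) :=
    { carrier := {v | (∀ i, ((c i : ℕ):ℤ) ∣ v i) ∧ ∑ i, v i * (d i : ℤ) = 0}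
      zero_mem' := by simp
      add_mem' := by
        rintro a b ⟨ha1, ha2⟩ ⟨hb1, hb2⟩
        exact ⟨fun i => dvd_add (ha1 i) (hb1 i), by
          simp only [Pi.add_apply, add_mul, Finset.sum_add_distrib, ha2, hb2, add_zero]⟩
      neg_mem' := by
        rintro a ⟨ha1, ha2⟩
        exact ⟨fun i => (dvd_neg).mpr (ha1 i), by
          simp only [Pi.neg_apply, neg_mul, Finset.sum_neg_distrib, ha2, neg_zero]⟩ }
  have hle : relSubgroup N c i0 ≤ S := by
    rw [relSubgroup, AddSubgroup.closure_le]
    rintro w ⟨i, rfl⟩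
    constructor
    · intro k
      simp only [Pi.sub_apply, Pi.smul_apply, Pi.single_apply, smul_eq_mul,
        mul_ite, mul_one, mul_zero]
      rcases eq_or_ne k i with h1 | h1 <;> rcases eq_or_ne k i0 with h2 | h2 <;>
        subst_vars <;> split_ifs <;> simp_all
    · simp only [Pi.sub_apply, Pi.smul_apply, Pi.single_apply, smul_eq_mul,
        mul_ite, mul_one, mul_zero, sub_mul, Finset.sum_sub_distrib, ite_mul, zero_mul]
      rw [Finset.sum_ite_eq' Finset.univ i, Finset.sum_ite_eq' Finset.univ i0]
      simp only [Finset.mem_univ, if_true]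
      rw [← Nat.cast_mul, ← Nat.cast_mul, hcd i, hcd i0, sub_self]
  exact hle hv




theorem main (N n M m : ℕ) (hn : 0 < n)
    (d : Fin N → ℕ) (hd : ∀ i, 0 < d i) (hdvd : ∀ i, d i ∣ n)
    (e : Fin M → ℕ) (i0 : Fin N) (jM : Fin M)
    (φ : ((Fin M → ℤ) ⧸ relSubgroup M (fun j => m / e j) jM) →+
         ((Fin N → ℤ) ⧸ relSubgroup N (fun i => n / d i) i0)) :
    (∃! F : Fin M → Fin N → ℤ,
      (∀ (j : Fin M) (i : Fin N), i ≠ i0 →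
        0 ≤ F j i ∧ F j i < ((n / d i : ℕ) : ℤ)) ∧
      (∀ j : Fin M,
        φ (QuotientAddGroup.mk (Pi.single j (1 : ℤ))) =
          ∑ i : Fin N, F j i • (QuotientAddGroup.mk (Pi.single i (1 : ℤ)) :
            (Fin N → ℤ) ⧸ relSubgroup N (fun i => n / d i) i0))) ∧
    (∀ F : Fin M → Fin N → ℤ,
      ((∀ (j : Fin M) (i : Fin N), i ≠ i0 →
          0 ≤ F j i ∧ F j i < ((n / d i : ℕ) : ℤ)) ∧
        (∀ j : Fin M,
          φ (QuotientAddGroup.mk (Pi.single j (1 : ℤ))) =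
            ∑ i : Fin N, F j i • (QuotientAddGroup.mk (Pi.single i (1 : ℤ)) :
              (Fin N → ℤ) ⧸ relSubgroup N (fun i => n / d i) i0))) →
      ((∀ (j : Fin M) (i : Fin N),
          ((n / d i : ℕ) : ℤ) ∣
            ((m / e j : ℕ) : ℤ) * F j i - ((m / e jM : ℕ) : ℤ) * F jM i) ∧
        (∀ j : Fin M,
          ((m / e j : ℕ) : ℤ) * ∑ i : Fin N, F j i * ((d i : ℕ) : ℤ) =
            ((m / e jM : ℕ) : ℤ) * ∑ i : Fin N, F jM i * ((d i : ℕ) : ℤ)))) := by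
  classical
  have hc : ∀ i, 0 < n / d i := fun i => Nat.div_pos (Nat.le_of_dvd hn (hdvd i)) (hd i)
  have hcd : ∀ i, (n / d i) * d i = n := fun i => Nat.div_mul_cancel (hdvd i)
  have hsum : ∀ w : Fin N → ℤ,
      (QuotientAddGroup.mk w : (Fin N → ℤ) ⧸ relSubgroup N (fun i => n / d i) i0) =
      ∑ i : Fin N, w i • (QuotientAddGroup.mk (Pi.single i (1:ℤ)) :
        (Fin N → ℤ) ⧸ relSubgroup N (fun i => n / d i) i0) := by
    intro w
    have hw : w = ∑ i : Fin N, w i • Pi.single i (1:ℤ) := by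
      funext k
      simp [Finset.sum_apply, Pi.single_apply, Finset.sum_ite_eq]
    calc (QuotientAddGroup.mk w : (Fin N → ℤ) ⧸ relSubgroup N (fun i => n / d i) i0)
        = QuotientAddGroup.mk' _ (∑ i : Fin N, w i • Pi.single i (1:ℤ)) := by rw [← hw]; rfl
      _ = ∑ i : Fin N, w i • (QuotientAddGroup.mk (Pi.single i (1:ℤ))) := by
          rw [map_sum]
          exact Finset.sum_congr rfl fun i _ => map_zsmul (QuotientAddGroup.mk' _) _ _
  set v : Fin M → Fin N → ℤ :=
    fun j => (φ (QuotientAddGroup.mk (Pi.single j (1:ℤ)))).out with hvdef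
  have hvmk : ∀ j, (QuotientAddGroup.mk (v j) :
      (Fin N → ℤ) ⧸ relSubgroup N (fun i => n / d i) i0)
      = φ (QuotientAddGroup.mk (Pi.single j (1:ℤ))) :=
    fun j => QuotientAddGroup.out_eq' _
  set t : Fin M → Fin N → ℤ := fun j i =>
    if i = i0 then -∑ i' ∈ Finset.univ.erase i0, v j i' / ((n / d i' : ℕ) : ℤ)
    else v j i / ((n / d i : ℕ) : ℤ) with htdef
  set F0 : Fin M → Fin N → ℤ := fun j i => v j i - t j i * ((n / d i : ℕ) : ℤ) with hF0def
  have hts : ∀ j, ∑ i, t j i = 0 := by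
    intro j
    rw [← Finset.add_sum_erase _ _ (Finset.mem_univ i0)]
    have h1 : ∑ i ∈ Finset.univ.erase i0, t j i
        = ∑ i ∈ Finset.univ.erase i0, v j i / ((n / d i : ℕ) : ℤ) :=
      Finset.sum_congr rfl fun i hi => by
        simp [htdef, Finset.ne_of_mem_erase hi]
    rw [h1]
    simp [htdef]
  have hFv : ∀ j, (QuotientAddGroup.mk (F0 j) :
      (Fin N → ℤ) ⧸ relSubgroup N (fun i => n / d i) i0) = QuotientAddGroup.mk (v j) := by
    intro j
    refine (QuotientAddGroup.eq).mpr ?_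
    have h1 : (-(F0 j) + v j) = fun k => t j k * ((n / d k : ℕ) : ℤ) := by
      funext k; simp [hF0def]
    rw [h1]
    exact Stmt16.mem_rel (fun i => n / d i) i0 (t j) (hts j)
  have hbound : ∀ (j : Fin M) (i : Fin N), i ≠ i0 →
      0 ≤ F0 j i ∧ F0 j i < ((n / d i : ℕ) : ℤ) := by
    intro j i hi
    have hF0i : F0 j i = v j i % ((n / d i : ℕ) : ℤ) := by
      simp only [hF0def, htdef, if_neg hi]
      rw [Int.emod_def]; ring
    have hcpos : (0:ℤ) < ((n / d i : ℕ) : ℤ) := by exact_mod_cast hc i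
    rw [hF0i]
    exact ⟨Int.emod_nonneg _ (ne_of_gt hcpos), Int.emod_lt_of_pos _ hcpos⟩
  have hform : ∀ j : Fin M,
      φ (QuotientAddGroup.mk (Pi.single j (1:ℤ))) =
        ∑ i : Fin N, F0 j i • (QuotientAddGroup.mk (Pi.single i (1:ℤ)) :
          (Fin N → ℤ) ⧸ relSubgroup N (fun i => n / d i) i0) := by
    intro j
    rw [← hvmk j, ← hFv j, hsum (F0 j)]
  have hkey : ∀ w w' : Fin N → ℤ,
      (QuotientAddGroup.mk w : (Fin N → ℤ) ⧸ relSubgroup N (fun i => n / d i) i0)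
        = QuotientAddGroup.mk w' →
      (∀ i, ((n / d i : ℕ) : ℤ) ∣ -(w i) + w' i) ∧
        ∑ i, (-(w i) + w' i) * ((d i : ℕ) : ℤ) = 0 := by
    intro w w' hww
    have hmem : -w + w' ∈ relSubgroup N (fun i => n / d i) i0 := (QuotientAddGroup.eq).mp hww
    have h2 := Stmt16.rel_le (fun i => n / d i) d i0 hcd _ hmem
    simpa using h2
  constructor
  · refine ⟨F0, ⟨hbound, hform⟩, ?_⟩
    rintro F' ⟨hb', hs'⟩
    funext j i
    have hmk : (QuotientAddGroup.mk (F' j) :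
        (Fin N → ℤ) ⧸ relSubgroup N (fun i => n / d i) i0) = QuotientAddGroup.mk (F0 j) := by
      rw [hsum (F' j), hsum (F0 j), ← hs' j, ← hform j]
    obtain ⟨hdiv, hsum0⟩ := hkey _ _ hmk
    have hcoord : ∀ k : Fin N, k ≠ i0 → F' j k = F0 j k := by
      intro k hk
      have h1 := hbound j k hk
      have h2 := hb' j k hk
      have h3 : -(F' j k) + F0 j k = 0 := by
        refine Int.eq_zero_of_abs_lt_dvd (hdiv k) ?_
        rw [abs_lt]
        constructor <;> [linarith [h1.1, h2.2]; linarith [h1.2, h2.1]]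
      linarith
    rcases eq_or_ne i i0 with hi | hi
    · subst hi
      rw [← Finset.add_sum_erase _ _ (Finset.mem_univ i)] at hsum0
      have hz : ∑ k ∈ Finset.univ.erase i, (-(F' j k) + F0 j k) * ((d k : ℕ) : ℤ) = 0 :=
        Finset.sum_eq_zero fun k hk => by
          rw [hcoord k (Finset.ne_of_mem_erase hk)]; ring
      rw [hz, add_zero] at hsum0
      have hdpos : (0:ℤ) < ((d i : ℕ) : ℤ) := by exact_mod_cast hd i
      rcases mul_eq_zero.mp hsum0 with h | h
      · linarith
      · exact absurd h (ne_of_gt hdpos)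
    · exact hcoord i hi
  · rintro F ⟨-, hs'⟩
    have hFj : ∀ j : Fin M, (QuotientAddGroup.mk (F j) :
        (Fin N → ℤ) ⧸ relSubgroup N (fun i => n / d i) i0)
        = φ (QuotientAddGroup.mk (Pi.single j (1:ℤ))) := by
      intro j; rw [hs' j, ← hsum]
    have hmain : ∀ j : Fin M,
        (QuotientAddGroup.mk (((m / e j : ℕ) : ℤ) • F j) :
          (Fin N → ℤ) ⧸ relSubgroup N (fun i => n / d i) i0)
        = QuotientAddGroup.mk (((m / e jM : ℕ) : ℤ) • F jM) := by
      intro j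
      have hHrel : (QuotientAddGroup.mk (((m / e j : ℕ) : ℤ) • Pi.single j (1:ℤ)) :
          (Fin M → ℤ) ⧸ relSubgroup M (fun j => m / e j) jM)
          = QuotientAddGroup.mk (((m / e jM : ℕ) : ℤ) • Pi.single jM (1:ℤ)) := by
        refine (QuotientAddGroup.eq).mpr ?_
        rw [neg_add_eq_sub, ← neg_sub]
        exact neg_mem (AddSubgroup.subset_closure ⟨j, rfl⟩)
      have h1 : ∀ (a : ℤ) (x : Fin M → ℤ),
          (QuotientAddGroup.mk (a • x) :
            (Fin M → ℤ) ⧸ relSubgroup M (fun j => m / e j) jM)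
          = a • QuotientAddGroup.mk x := fun a x => map_zsmul (QuotientAddGroup.mk' _) _ _
      have h2 : ∀ (a : ℤ) (x : Fin N → ℤ),
          (QuotientAddGroup.mk (a • x) :
            (Fin N → ℤ) ⧸ relSubgroup N (fun i => n / d i) i0)
          = a • QuotientAddGroup.mk x := fun a x => map_zsmul (QuotientAddGroup.mk' _) _ _
      have hphi := congrArg φ hHrel
      rw [h1, h1, map_zsmul, map_zsmul, ← hFj j, ← hFj jM, ← h2, ← h2] at hphi
      exact hphi
    constructor
    · intro j i
      obtain ⟨hdiv, -⟩ := hkey _ _ (hmain j)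
      have h := hdiv i
      simp only [Pi.smul_apply, smul_eq_mul] at h
      have heq : ((m / e j : ℕ) : ℤ) * F j i - ((m / e jM : ℕ) : ℤ) * F jM i
          = -(-(((m / e j : ℕ) : ℤ) * F j i) + ((m / e jM : ℕ) : ℤ) * F jM i) := by ring
      rw [heq]
      exact dvd_neg.mpr h
    · intro j
      obtain ⟨-, hsum0⟩ := hkey _ _ (hmain j)
      have e1 : ∑ i, (-(((((m / e j : ℕ) : ℤ)) • F j) i)
            + ((((m / e jM : ℕ) : ℤ)) • F jM) i) * ((d i : ℕ) : ℤ)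
          = ((m / e jM : ℕ) : ℤ) * ∑ i, F jM i * ((d i : ℕ) : ℤ)
            - ((m / e j : ℕ) : ℤ) * ∑ i, F j i * ((d i : ℕ) : ℤ) := by
        rw [Finset.mul_sum, Finset.mul_sum, ← Finset.sum_sub_distrib]
        refine Finset.sum_congr rfl fun i _ => ?_
        simp only [Pi.smul_apply, smul_eq_mul]
        ring
      rw [e1] at hsum0
      linarith

end Stmt16

/-- standard form of a homomorphism `φ : H → G` between the
presented groups `G = ⟨g₁,…,g_N | (n/dᵢ)gᵢ = (n/d_N)g_N⟩` and
`H = ⟨h₁,…,h_M | (m/eⱼ)hⱼ = (m/e_M)h_M⟩`: there is a unique integer matrix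
`F` with `0 ≤ F j i < n/dᵢ` for `i ≠ N` and `φ(hⱼ) = ∑ᵢ F j i · gᵢ`; moreover
any such matrix satisfies `(m/eⱼ)·F j i ≡ (m/e_M)·F M i (mod n/dᵢ)` and
`(m/eⱼ)·∑ᵢ F j i · dᵢ = (m/e_M)·∑ᵢ F M i · dᵢ`. -/
theorem stmt_16 (N n M m : ℕ) (hN : 2 ≤ N) (hM : 2 ≤ M) (hn : 0 < n) (hm : 0 < m)
    (d : Fin N → ℕ) (hd : ∀ i, 0 < d i) (hdvd : ∀ i, d i ∣ n)
    (e : Fin M → ℕ) (he : ∀ j, 0 < e j) (hedvd : ∀ j, e j ∣ m)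
    (φ : ((Fin M → ℤ) ⧸ relSubgroup M (fun j => m / e j) ⟨M - 1, by omega⟩) →+
         ((Fin N → ℤ) ⧸ relSubgroup N (fun i => n / d i) ⟨N - 1, by omega⟩)) :
    (∃! F : Fin M → Fin N → ℤ,
      (∀ (j : Fin M) (i : Fin N), i ≠ ⟨N - 1, by omega⟩ →
        0 ≤ F j i ∧ F j i < ((n / d i : ℕ) : ℤ)) ∧
      (∀ j : Fin M,
        φ (QuotientAddGroup.mk (Pi.single j (1 : ℤ))) =
          ∑ i : Fin N, F j i • (QuotientAddGroup.mk (Pi.single i (1 : ℤ)) :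
            (Fin N → ℤ) ⧸ relSubgroup N (fun i => n / d i) ⟨N - 1, by omega⟩))) ∧
    (∀ F : Fin M → Fin N → ℤ,
      ((∀ (j : Fin M) (i : Fin N), i ≠ ⟨N - 1, by omega⟩ →
          0 ≤ F j i ∧ F j i < ((n / d i : ℕ) : ℤ)) ∧
        (∀ j : Fin M,
          φ (QuotientAddGroup.mk (Pi.single j (1 : ℤ))) =
            ∑ i : Fin N, F j i • (QuotientAddGroup.mk (Pi.single i (1 : ℤ)) :
              (Fin N → ℤ) ⧸ relSubgroup N (fun i => n / d i) ⟨N - 1, by omega⟩))) →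
      ((∀ (j : Fin M) (i : Fin N),
          ((n / d i : ℕ) : ℤ) ∣
            ((m / e j : ℕ) : ℤ) * F j i -
              ((m / e (⟨M - 1, by omega⟩ : Fin M) : ℕ) : ℤ) * F ⟨M - 1, by omega⟩ i) ∧
        (∀ j : Fin M,
          ((m / e j : ℕ) : ℤ) * ∑ i : Fin N, F j i * ((d i : ℕ) : ℤ) =
            ((m / e (⟨M - 1, by omega⟩ : Fin M) : ℕ) : ℤ) *
              ∑ i : Fin N, F (⟨M - 1, by omega⟩ : Fin M) i * ((d i : ℕ) : ℤ)))) := by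
  exact Stmt16.main N n M m hn d hd hdvd e ⟨N - 1, by omega⟩ ⟨M - 1, by omega⟩ φ
end

section
/- Let X be a closed subset of the unit circle 𝕋 (with metric ρ(e^{2πis}, e^{2πit}) = min_{k∈ℤ}|s−t+k|), let G ⊆ X be a finite subset, and let δ > 0. Then there exist a closed subset R ⊆ X with finitely many connected components containing G, and a continuous surjection g : X → R such that g(z) = z for all z ∈ G and ρ(g(z), z) ≤ δ for all z ∈ X. -/
/-!
Unless `X` is the whole circle, cut the circle at a point outside `X`; this identifies `X` with a
set `Y ⊆ (a, a + 1)`, and `G` with a finite `Γ ⊆ Y`.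
Take a finite `ε`-dense set `T ⊇ Γ` and, for every pair `t ≤ t'` in `T` with `[t, t'] ⊄ Y`, a
cut point of `[t, t']` outside `Y`. Between two consecutive cuts `c < c'` no cut separates the
points of `T`, so they all lie in one interval `[u, v] ⊆ Y ∩ (c, c')`, and clamping `(c, c')`
onto `[u, v]` moves points by at most `ε` because `T` is `ε`-dense; a gap containing no point of
`T` is shorter than `ε` and is collapsed onto any one of its points of `Y`. Cuts are not in `Y`,
so the clamp is continuous on `Y`, and its image is a finite union of intervals.
-/

open Set

noncomputable section

namespace CircleRetraction

lemma finite_connectedComponents_of_eq_sUnion {α : Type*} [TopologicalSpace α] {R : Set α}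
    {𝒜 : Set (Set α)} (h𝒜 : 𝒜.Finite) (hpre : ∀ A ∈ 𝒜, IsPreconnected A) (hR : R = ⋃₀ 𝒜) :
    Finite (ConnectedComponents R) := by
  have hcover : ∀ x : R, ∃ A ∈ 𝒜, (x : α) ∈ A := fun x => mem_sUnion.1 (hR ▸ x.2)
  choose A hA𝒜 hxA using hcover
  have := h𝒜.to_subtype
  set rep := Function.surjInv (ConnectedComponents.surjective_coe (α := R))
  refine Finite.of_injective (fun K => (⟨A (rep K), hA𝒜 _⟩ : 𝒜)) fun K₁ K₂ hK => ?_
  have hsame : A (rep K₁) = A (rep K₂) := congrArg Subtype.val hK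
  have hpreR : IsPreconnected (((↑) : R → α) ⁻¹' A (rep K₁)) := by
    rw [← Topology.IsInducing.subtypeVal.isPreconnected_image, Subtype.image_preimage_coe,
      inter_eq_right.2 (hR ▸ subset_sUnion_of_mem (hA𝒜 _))]
    exact hpre _ (hA𝒜 _)
  rw [← Function.surjInv_eq ConnectedComponents.surjective_coe K₁,
    ← Function.surjInv_eq ConnectedComponents.surjective_coe K₂, ConnectedComponents.coe_eq_coe]
  exact connectedComponent_eq (hpreR.subset_connectedComponent (hxA _) (hsame ▸ hxA _))

lemma max_min_mem_Icc {u v : ℝ} (huv : u ≤ v) (x : ℝ) : max u (min v x) ∈ Icc u v :=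
  (projIcc u v huv x).2

lemma max_min_eq_self {u v x : ℝ} (hx : x ∈ Icc u v) : max u (min v x) = x := by
  rw [min_eq_right hx.2, max_eq_right hx.1]

lemma abs_sub_max_min_le {c c' u v x ε : ℝ} (huv : u ≤ v) (hx : x ∈ Ioo c c')
    (hu : u - c ≤ ε) (hv : c' - v ≤ ε) (hε : 0 ≤ ε) : |x - max u (min v x)| ≤ ε := by
  rcases le_total x u with hxu | hux
  · rw [min_eq_right (hxu.trans huv), max_eq_left hxu, abs_sub_comm, abs_of_nonneg (by linarith)]
    linarith [hx.1]
  rcases le_total x v with hxv | hvx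
  · rw [max_min_eq_self ⟨hux, hxv⟩, sub_self, abs_zero]
    exact hε
  · rw [min_eq_left hvx, max_eq_right huv, abs_of_nonneg (by linarith)]
    linarith [hx.2]

lemma exists_finite_dense_Icc (a b : ℝ) {ε : ℝ} (hε : 0 < ε) :
    ∃ T ⊆ Icc a b, T.Finite ∧ ∀ x, a ≤ x → x + ε < b → ∃ t ∈ T, x < t ∧ t < x + ε := by
  obtain ⟨T, hTab, hT, hcover⟩ := (isCompact_Icc (a := a) (b := b)).finite_cover_balls (half_pos hε)
  refine ⟨T, hTab, hT, fun x hax hxb => ?_⟩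
  have hmid : x + ε / 2 ∈ Icc a b := by constructor <;> linarith
  obtain ⟨t, ht, hxt⟩ := mem_iUnion₂.1 (hcover hmid)
  rw [Real.ball_eq_Ioo] at hxt
  exact ⟨t, ht, by linarith [hxt.2], by linarith [hxt.1]⟩

lemma exists_finite_cuts (Y : Set ℝ) {T : Set ℝ} {a b : ℝ} (hT : T.Finite) (hTab : T ⊆ Icc a b) :
    ∃ C ⊆ Icc a b \ Y, C.Finite ∧ ∀ t ∈ T, ∀ t' ∈ T, ¬ Icc t t' ⊆ Y → ∃ c ∈ C, c ∈ Icc t t' := by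
  have hpick : ∀ p : ℝ × ℝ, ¬ Icc p.1 p.2 ⊆ Y → ∃ c ∈ Icc p.1 p.2, c ∉ Y := fun _ => not_subset.1
  choose! w hwI hwY using hpick
  refine ⟨w '' {p ∈ T ×ˢ T | ¬ Icc p.1 p.2 ⊆ Y}, ?_, ((hT.prod hT).subset (sep_subset _ _)).image w,
    fun t ht t' ht' h => ⟨w (t, t'), mem_image_of_mem _ ⟨⟨ht, ht'⟩, h⟩, hwI (t, t') h⟩⟩
  rintro _ ⟨p, ⟨⟨h1, h2⟩, hp⟩, rfl⟩
  exact ⟨Icc_subset_Icc (hTab h1).1 (hTab h2).2 (hwI p hp), hwY p hp⟩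

def IsGap (C : Set ℝ) (c c' : ℝ) : Prop :=
  c ∈ C ∧ c' ∈ C ∧ ∀ b ∈ C, b ∉ Ioo c c'

lemma exists_isGap_mem {C : Set ℝ} {x : ℝ} (hC : C.Finite) (hxC : x ∉ C) (hl : ∃ c ∈ C, c < x)
    (hr : ∃ c ∈ C, x < c) : ∃ c c', IsGap C c c' ∧ x ∈ Ioo c c' := by
  obtain ⟨c, ⟨hcC, hcx⟩, hc⟩ := exists_max_image (C ∩ Iio x) id (hC.inter_of_left _) hl
  obtain ⟨c', ⟨hc'C, hxc'⟩, hc'⟩ := exists_min_image (C ∩ Ioi x) id (hC.inter_of_left _) hr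
  refine ⟨c, c', ⟨hcC, hc'C, fun b hbC hb => ?_⟩, hcx, hxc'⟩
  rcases lt_trichotomy b x with hbx | rfl | hxb
  · exact (hc b ⟨hbC, hbx⟩).not_gt hb.1
  · exact hxC hbC
  · exact (hc' b ⟨hbC, hxb⟩).not_gt hb.2

-- The ends of the gap of `C` around `x`; junk (`sSup ∅ = 0`) when `x` lies in no gap.
def gapLeft (C : Set ℝ) (x : ℝ) : ℝ := sSup (C ∩ Iio x)

def gapRight (C : Set ℝ) (x : ℝ) : ℝ := sInf (C ∩ Ioi x)

lemma IsGap.gapLeft_eq {C : Set ℝ} {c c' x : ℝ} (h : IsGap C c c') (hx : x ∈ Ioo c c') :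
    gapLeft C x = c := by
  refine IsGreatest.csSup_eq ⟨⟨h.1, hx.1⟩, fun b ⟨hbC, hbx⟩ => ?_⟩
  by_contra! hcb
  exact h.2.2 b hbC ⟨hcb, hbx.trans hx.2⟩

lemma IsGap.gapRight_eq {C : Set ℝ} {c c' x : ℝ} (h : IsGap C c c') (hx : x ∈ Ioo c c') :
    gapRight C x = c' := by
  refine IsLeast.csInf_eq ⟨⟨h.2.1, hx.2⟩, fun b ⟨hbC, hbx⟩ => ?_⟩
  by_contra! hbc
  exact h.2.2 b hbC ⟨hx.1.trans hbx, hbc⟩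

def gapClamp (C : Set ℝ) (u v : ℝ → ℝ → ℝ) (x : ℝ) : ℝ :=
  max (u (gapLeft C x) (gapRight C x)) (min (v (gapLeft C x) (gapRight C x)) x)

lemma IsGap.eqOn_gapClamp {C : Set ℝ} {c c' : ℝ} (h : IsGap C c c') (u v : ℝ → ℝ → ℝ) :
    EqOn (gapClamp C u v) (fun x => max (u c c') (min (v c c') x)) (Ioo c c') := fun x hx => by
  simp only [gapClamp, h.gapLeft_eq hx, h.gapRight_eq hx]

def ClampsGap (Y T : Set ℝ) (ε c c' u v : ℝ) : Prop :=
  u ≤ v ∧ Icc u v ⊆ Y ∩ Ioo c c' ∧ T ∩ Ioo c c' ⊆ Icc u v ∧ u - c ≤ ε ∧ c' - v ≤ ε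

lemma IsGap.exists_clampsGap {Y T C : Set ℝ} {a b ε c c' : ℝ} (h : IsGap C c c') (hT : T.Finite)
    (hdense : ∀ x, a ≤ x → x + ε < b → ∃ t ∈ T, x < t ∧ t < x + ε)
    (hcut : ∀ t ∈ T, ∀ t' ∈ T, ¬ Icc t t' ⊆ Y → ∃ e ∈ C, e ∈ Icc t t')
    (hac : a ≤ c) (hcb : c' ≤ b) (hY : (Y ∩ Ioo c c').Nonempty) :
    ∃ u v, ClampsGap Y T ε c c' u v := by
  have hdense' : ∀ x, c ≤ x → x + ε < c' → ∃ t ∈ T ∩ Ioo c c', x < t ∧ t < x + ε :=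
    fun x hcx hxc' =>
      let ⟨t, ht, hxt, htx⟩ := hdense x (hac.trans hcx) (hxc'.trans_le hcb)
      ⟨t, ⟨ht, hcx.trans_lt hxt, htx.trans hxc'⟩, hxt, htx⟩
  rcases (T ∩ Ioo c c').eq_empty_or_nonempty with hempty | hne
  · obtain ⟨y, hyY, hy⟩ := hY
    have hshort : c' - c ≤ ε := by
      by_contra! hlong
      obtain ⟨t, ht, -⟩ := hdense' c le_rfl (by linarith)
      exact hempty.subset ht
    refine ⟨y, y, le_rfl, by simpa using ⟨hyY, hy⟩, by simp [hempty], ?_, ?_⟩ <;>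
      linarith [hy.1, hy.2]
  · obtain ⟨u, hu, hu_min⟩ := exists_min_image _ id (hT.inter_of_left _) hne
    obtain ⟨v, hv, hv_max⟩ := exists_max_image _ id (hT.inter_of_left _) hne
    have huv : u ≤ v := hu_min v hv
    have hIcc : Icc u v ⊆ Ioo c c' := Icc_subset_Ioo hu.2.1 hv.2.2
    have hIccY : Icc u v ⊆ Y := by
      by_contra hnot
      obtain ⟨e, heC, he⟩ := hcut u hu.1 v hv.1 hnot
      exact h.2.2 e heC (hIcc he)
    refine ⟨u, v, huv, subset_inter hIccY hIcc, fun t ht => ⟨hu_min t ht, hv_max t ht⟩, ?_, ?_⟩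
    · by_contra! hfar
      obtain ⟨t, ht, -, htu⟩ := hdense' c le_rfl (by linarith [hv.2.2])
      exact (hu_min t ht).not_gt (show t < u by linarith)
    · by_contra! hfar
      obtain ⟨t, ht, hvt, -⟩ := hdense' v hv.2.1.le (by linarith)
      exact (hv_max t ht).not_gt hvt

lemma exists_gaps_clampsGap {Y : Set ℝ} {a b : ℝ} (hY : Y ⊆ Ioo a b) {Γ : Set ℝ}
    (hΓ : Γ.Finite) (hΓY : Γ ⊆ Y) {ε : ℝ} (hε : 0 < ε) :
    ∃ C : Set ℝ, C.Finite ∧ (∀ y ∈ Y, ∃ c c', IsGap C c c' ∧ y ∈ Ioo c c') ∧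
      ∀ c c', IsGap C c c' → (Y ∩ Ioo c c').Nonempty → ∃ u v, ClampsGap Y Γ ε c c' u v := by
  obtain ⟨T, hTab, hT, hdense⟩ := exists_finite_dense_Icc a b hε
  obtain ⟨C, hCab, hC, hcut⟩ := exists_finite_cuts Y (hT.union hΓ)
    (union_subset hTab (hΓY.trans (hY.trans Ioo_subset_Icc_self)))
  refine ⟨insert a (insert b C), (hC.insert b).insert a, fun y hy => ?_, fun c c' hg hne => ?_⟩
  · refine exists_isGap_mem ((hC.insert b).insert a) ?_ ⟨a, mem_insert _ _, (hY hy).1⟩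
      ⟨b, mem_insert_of_mem _ (mem_insert _ _), (hY hy).2⟩
    rintro (rfl | rfl | hyC)
    exacts [(hY hy).1.false, (hY hy).2.false, (hCab hyC).2 hy]
  obtain ⟨y, hy, hyc⟩ := hne
  have hab : a ≤ b := (hY hy).1.le.trans (hY hy).2.le
  have hCab' : insert a (insert b C) ⊆ Icc a b :=
    insert_subset ⟨le_rfl, hab⟩ (insert_subset ⟨hab, le_rfl⟩ (hCab.trans sdiff_subset))
  obtain ⟨u, v, huv, hsub, hT', hu, hv⟩ := hg.exists_clampsGap (hT.union hΓ)
    (fun x hax hxb => (hdense x hax hxb).imp fun t ht => ⟨Or.inl ht.1, ht.2⟩)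
    (fun t ht t' ht' hY' => (hcut t ht t' ht' hY').imp fun e he =>
      ⟨mem_insert_of_mem _ (mem_insert_of_mem _ he.1), he.2⟩)
    (hCab' hg.1).1 (hCab' hg.2.1).2 ⟨y, hy, hyc⟩
  exact ⟨u, v, huv, hsub, fun t ht => hT' ⟨Or.inr ht.1, ht.2⟩, hu, hv⟩

lemma image_gapClamp {Y T C : Set ℝ} {u v : ℝ → ℝ → ℝ} {ε : ℝ}
    (hgap : ∀ y ∈ Y, ∃ c c', IsGap C c c' ∧ y ∈ Ioo c c')
    (huv : ∀ c c', IsGap C c c' → (Y ∩ Ioo c c').Nonempty →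
      ClampsGap Y T ε c c' (u c c') (v c c')) :
    gapClamp C u v '' Y = ⋃₀ ((fun p : ℝ × ℝ => Icc (u p.1 p.2) (v p.1 p.2)) ''
      {p | IsGap C p.1 p.2 ∧ (Y ∩ Ioo p.1 p.2).Nonempty}) := by
  apply Subset.antisymm
  · rintro _ ⟨y, hy, rfl⟩
    obtain ⟨c, c', hg, hyc⟩ := hgap y hy
    have hne : (Y ∩ Ioo c c').Nonempty := ⟨y, hy, hyc⟩
    refine ⟨_, ⟨(c, c'), ⟨hg, hne⟩, rfl⟩, ?_⟩
    rw [hg.eqOn_gapClamp u v hyc]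
    exact max_min_mem_Icc (huv c c' hg hne).1 y
  · rintro x ⟨_, ⟨⟨c, c'⟩, ⟨hg, hne⟩, rfl⟩, hx⟩
    have hxY := (huv c c' hg hne).2.1 hx
    exact ⟨x, hxY.1, (hg.eqOn_gapClamp u v hxY.2).trans (max_min_eq_self hx)⟩

theorem exists_nearIdentity_of_subset_Ioo {Y : Set ℝ} {a b : ℝ} (hY : Y ⊆ Ioo a b) {Γ : Set ℝ}
    (hΓ : Γ.Finite) (hΓY : Γ ⊆ Y) {ε : ℝ} (hε : 0 < ε) :
    ∃ f : ℝ → ℝ, (∀ y ∈ Y, ContinuousAt f y) ∧ MapsTo f Y Y ∧ (∀ γ ∈ Γ, f γ = γ) ∧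
      (∀ y ∈ Y, |y - f y| ≤ ε) ∧
      ∃ 𝒜 : Set (Set ℝ), 𝒜.Finite ∧ (∀ A ∈ 𝒜, IsPreconnected A) ∧ f '' Y = ⋃₀ 𝒜 := by
  obtain ⟨C, hC, hgap, hclamp⟩ := exists_gaps_clampsGap hY hΓ hΓY hε
  choose! u v huv using hclamp
  refine ⟨gapClamp C u v, fun y hy => ?_, fun y hy => ?_, fun γ hγ => ?_, fun y hy => ?_,
    _, ((hC.prod hC).subset fun p hp => ⟨hp.1.1, hp.1.2.1⟩).image _,
    forall_mem_image.2 fun _ _ => isPreconnected_Icc, image_gapClamp hgap huv⟩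
  · obtain ⟨c, c', hg, hyc⟩ := hgap y hy
    exact (continuous_const.max (continuous_const.min continuous_id)).continuousAt.congr
      ((hg.eqOn_gapClamp u v).eventuallyEq_of_mem (isOpen_Ioo.mem_nhds hyc)).symm
  · obtain ⟨c, c', hg, hyc⟩ := hgap y hy
    obtain ⟨huv, hsub, -⟩ := huv c c' hg ⟨y, hy, hyc⟩
    rw [hg.eqOn_gapClamp u v hyc]
    exact (hsub (max_min_mem_Icc huv y)).1
  · obtain ⟨c, c', hg, hγc⟩ := hgap γ (hΓY hγ)
    obtain ⟨-, -, hΓc, -⟩ := huv c c' hg ⟨γ, hΓY hγ, hγc⟩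
    exact (hg.eqOn_gapClamp u v hγc).trans (max_min_eq_self (hΓc ⟨hγ, hγc⟩))
  · obtain ⟨c, c', hg, hyc⟩ := hgap y hy
    obtain ⟨huv, -, -, hu, hv⟩ := huv c c' hg ⟨y, hy, hyc⟩
    rw [hg.eqOn_gapClamp u v hyc]
    exact abs_sub_max_min_le huv hyc hu hv hε.le

def expCircle (t : ℝ) : Circle :=
  AddCircle.homeomorphCircle one_ne_zero (t : AddCircle (1 : ℝ))

def circleLift (a : ℝ) (z : Circle) : ℝ :=
  AddCircle.equivIco 1 a ((AddCircle.homeomorphCircle one_ne_zero).symm z)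

lemma coe_expCircle (t : ℝ) : (expCircle t : ℂ) = expc t := by
  rw [expCircle, AddCircle.homeomorphCircle_apply, AddCircle.toCircle_apply_mk, Circle.coe_exp,
    expc]
  push_cast
  ring_nf

lemma continuous_expCircle : Continuous expCircle :=
  (AddCircle.homeomorphCircle one_ne_zero).continuous.comp continuous_quotient_mk'

lemma expCircle_circleLift (a : ℝ) (z : Circle) : expCircle (circleLift a z) = z := by
  rw [expCircle, circleLift, AddCircle.coe_equivIco, Homeomorph.apply_symm_apply]

lemma circleLift_mem_Ioo {a : ℝ} {z : Circle} (hz : z ≠ expCircle a) :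
    circleLift a z ∈ Ioo a (a + 1) := by
  obtain ⟨h1, h2⟩ := (AddCircle.equivIco 1 a ((AddCircle.homeomorphCircle one_ne_zero).symm z)).2
  refine ⟨h1.lt_of_ne fun h => hz ?_, h2⟩
  rw [← expCircle_circleLift a z, circleLift, ← h]

lemma continuousAt_circleLift {a : ℝ} {z : Circle} (hz : z ≠ expCircle a) :
    ContinuousAt (circleLift a) z := by
  have hne : (AddCircle.homeomorphCircle one_ne_zero).symm z ≠ (a : AddCircle (1 : ℝ)) := by
    rintro h
    rw [expCircle, ← h, Homeomorph.apply_symm_apply] at hz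
    exact hz rfl
  exact continuous_subtype_val.continuousAt.comp (ContinuousAt.comp
    (AddCircle.continuousAt_equivIco 1 a hne)
    (AddCircle.homeomorphCircle one_ne_zero).symm.continuous.continuousAt)

def IsNearIdentity (X G : Set Circle) (δ : ℝ) (F : X → Circle) : Prop :=
  Continuous F ∧ range F ⊆ X ∧ (∀ z : X, (z : Circle) ∈ G → F z = z) ∧
    (∀ z : X, ∃ s t : ℝ, expCircle s = z ∧ expCircle t = F z ∧ |s - t| ≤ δ) ∧
    ∃ 𝒜 : Set (Set Circle), 𝒜.Finite ∧ (∀ A ∈ 𝒜, IsPreconnected A) ∧ range F = ⋃₀ 𝒜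

lemma exists_isNearIdentity {X G : Set Circle} {a : ℝ} (ha : expCircle a ∉ X) (hG : G.Finite)
    (hGX : G ⊆ X) {δ : ℝ} (hδ : 0 < δ) : ∃ F, IsNearIdentity X G δ F := by
  have hXa : ∀ z ∈ X, z ≠ expCircle a := fun z hz h => ha (h ▸ hz)
  obtain ⟨f, hfc, hfY, hfG, hfδ, 𝒜, h𝒜, hpre, hf𝒜⟩ := exists_nearIdentity_of_subset_Ioo
    (Y := circleLift a '' X) (b := a + 1)
    (by rintro _ ⟨z, hz, rfl⟩; exact circleLift_mem_Ioo (hXa z hz)) (hG.image _) (image_mono hGX) hδ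
  refine ⟨fun z => expCircle (f (circleLift a z)), ?_, ?_, fun z hz => ?_, fun z => ?_,
    image expCircle '' 𝒜, h𝒜.image _,
    forall_mem_image.2 fun A hA => (hpre A hA).image _ continuous_expCircle.continuousOn, ?_⟩
  · refine continuous_iff_continuousAt.2 fun z => ?_
    have hlift : ContinuousAt (fun z : X => circleLift a z) z :=
      (continuousAt_circleLift (hXa z z.2)).comp continuousAt_subtype_val
    exact continuous_expCircle.continuousAt.comp (x := z)
      (ContinuousAt.comp (x := z) (hfc _ (mem_image_of_mem _ z.2)) hlift)
  · rintro _ ⟨z, rfl⟩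
    obtain ⟨x, hx, hfx⟩ := hfY (mem_image_of_mem _ z.2)
    simp only [← hfx, expCircle_circleLift, hx]
  · simp only [hfG _ (mem_image_of_mem _ hz), expCircle_circleLift]
  · exact ⟨circleLift a z, f (circleLift a z), expCircle_circleLift a z, rfl,
      hfδ _ (mem_image_of_mem _ z.2)⟩
  · rw [← image_sUnion, ← hf𝒜]
    ext
    simp

end CircleRetraction

end

open CircleRetraction in
/-- for a closed `X ⊆ 𝕋`, a finite `G ⊆ X` and `δ > 0`, there is
a closed `R ⊆ X` with finitely many connected components containing `G`, and a
continuous surjection `g : X → R` fixing `G` pointwise and moving every point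
by at most `δ` in the arc-length metric (`ρ(g z, z) ≤ δ` being expressed by
real lifts `s, t` with `|s - t| ≤ δ`). -/
theorem stmt_17 (X : Set Circle) (hX : IsClosed X)
    (G : Set Circle) (hG : G.Finite) (hGX : G ⊆ X) (δ : ℝ) (hδ : 0 < δ) :
    ∃ R : Set Circle, R ⊆ X ∧ IsClosed R ∧ G ⊆ R ∧
      Finite (ConnectedComponents R) ∧
      ∃ g : X → R, Continuous g ∧ Function.Surjective g ∧
        (∀ z : X, (z : Circle) ∈ G → ((g z : Circle) : ℂ) = ((z : Circle) : ℂ)) ∧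
        (∀ z : X, ∃ s t : ℝ, ((z : Circle) : ℂ) = expc s ∧
          ((g z : Circle) : ℂ) = expc t ∧ |s - t| ≤ δ) := by
  obtain ⟨F, hF, hFX, hFG, hFδ, 𝒜, h𝒜, hpre, hF𝒜⟩ : ∃ F, IsNearIdentity X G δ F := by
    by_cases hXuniv : X = univ
    · subst hXuniv
      exact ⟨(↑), continuous_subtype_val, subset_univ _, fun _ _ => rfl,
        fun z => ⟨circleLift 0 z, circleLift 0 z, expCircle_circleLift 0 z,
          expCircle_circleLift 0 z, by simp [hδ.le]⟩,
        {univ}, finite_singleton _, by simpa using isPreconnected_univ, by simp⟩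
    obtain ⟨z₀, hz₀⟩ := (ne_univ_iff_exists_notMem X).1 hXuniv
    exact exists_isNearIdentity (a := circleLift 0 z₀) (by rwa [expCircle_circleLift]) hG hGX hδ
  have : CompactSpace X := isCompact_iff_compactSpace.1 hX.isCompact
  refine ⟨range F, hFX, (isCompact_range hF).isClosed, fun γ hγ => ⟨⟨γ, hGX hγ⟩, hFG _ hγ⟩,
    finite_connectedComponents_of_eq_sUnion h𝒜 hpre hF𝒜, rangeFactorization F,
    hF.rangeFactorization, rangeFactorization_surjective,
    fun z hz => congrArg Subtype.val (hFG z hz), fun z => ?_⟩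
  obtain ⟨s, t, hs, ht, hst⟩ := hFδ z
  exact ⟨s, t, by rw [← hs, coe_expCircle], by rw [← coe_expCircle, ht]; rfl, hst⟩
end
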